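/- arXiv:2407.09759 — 10 statements merged into one kernel-verified Lean document; each statement's English description precedes it below -/
import Mathlib

section
/- Let τ = 0 or τ = T and let φ : [0,T] → ℝ be continuous. Define D₁⁽ⁿ⁾ = Σ_{i=1}^n K_{b_n}(t_{i−1} − τ) · ∫_{t_{i−1}}^{t_i} φ(s) ds − ∫_0^T K_{b_n}(s − τ) φ(s) ds. Then there exist a constant C > 0 and N ∈ ℕ such that |D₁⁽ⁿ⁾| ≤ C · Δ_n/b_n for all n ≥ N; equivalently, limsup_{n→∞} (b_n/Δ_n)|D₁⁽ⁿ⁾| < ∞. -/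
open MeasureTheory Filter Topology Set

-- FTC on the interior interval
lemma ftcK (K K' : ℝ → ℝ) (A B : EReal) (L : NNReal)
    (hL : LipschitzOnWith L K {x : ℝ | A < (x : EReal) ∧ (x : EReal) < B})
    (E : Finset ℝ)
    (hE : ∀ x ∈ {x : ℝ | A < (x : EReal) ∧ (x : EReal) < B} \ (E : Set ℝ),
        HasDerivAt K (K' x) x)
    (hK'int : Integrable K')
    (u v : ℝ) (huv : u ≤ v) (hu : A < (u : EReal)) (hv : (v : EReal) < B) :
    ∫ x in u..v, K' x = K v - K u := by
  have hsub : Icc u v ⊆ {x : ℝ | A < (x : EReal) ∧ (x : EReal) < B} := by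
    intro x hx
    exact ⟨lt_of_lt_of_le hu (EReal.coe_le_coe_iff.2 hx.1),
      lt_of_le_of_lt (EReal.coe_le_coe_iff.2 hx.2) hv⟩
  refine MeasureTheory.integral_eq_of_hasDerivAt_off_countable_of_le K K' huv
    (E.finite_toSet.countable) ?_ ?_ hK'int.intervalIntegrable
  · exact hL.continuousOn.mono hsub
  · intro x hx
    exact hE x ⟨hsub ⟨hx.1.1.le, hx.1.2.le⟩, hx.2⟩

open Classical in
-- key oscillation bound
lemma keyK (K K' : ℝ → ℝ) (A B : EReal) (M : ℝ)
    (hM : ∀ x : ℝ, |K x| ≤ M)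
    (hsupp : ∀ x : ℝ, ((x : EReal) ≤ A ∨ B ≤ (x : EReal)) → K x = 0)
    (L : NNReal)
    (hL : LipschitzOnWith L K {x : ℝ | A < (x : EReal) ∧ (x : EReal) < B})
    (E : Finset ℝ)
    (hE : ∀ x ∈ {x : ℝ | A < (x : EReal) ∧ (x : EReal) < B} \ (E : Set ℝ),
        HasDerivAt K (K' x) x)
    (hK'int : Integrable K')
    (p q : ℝ) (hpq : p ≤ q) (u v : ℝ) (hu : u ∈ Icc p q) (hv : v ∈ Icc p q) :
    |K u - K v| ≤ (∫ x in p..q, |K' x|)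
      + (if (p : EReal) ≤ A ∧ A < (q : EReal) then 2*M else 0)
      + (if (p : EReal) < B ∧ B ≤ (q : EReal) then 2*M else 0) := by
  have hM0 : 0 ≤ M := (abs_nonneg _).trans (hM 0)
  have hint0 : 0 ≤ ∫ x in p..q, |K' x| :=
    intervalIntegral.integral_nonneg hpq (fun x _ => abs_nonneg _)
  have hif1 : 0 ≤ (if (p : EReal) ≤ A ∧ A < (q : EReal) then 2*M else 0) := by
    split <;> positivity
  have hif2 : 0 ≤ (if (p : EReal) < B ∧ B ≤ (q : EReal) then 2*M else 0) := by
    split <;> positivity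
  by_cases h1 : A < (p : EReal) ∧ (q : EReal) < B
  · -- FTC case
    have key : ∀ x y : ℝ, x ≤ y → x ∈ Icc p q → y ∈ Icc p q →
        |K x - K y| ≤ ∫ z in p..q, |K' z| := by
      intro x y hxy hx hy
      have hftc := ftcK K K' A B L hL E hE hK'int x y hxy
        (lt_of_lt_of_le h1.1 (EReal.coe_le_coe_iff.2 hx.1))
        (lt_of_le_of_lt (EReal.coe_le_coe_iff.2 hy.2) h1.2)
      have : |K x - K y| = |∫ z in x..y, K' z| := by
        rw [hftc, abs_sub_comm]
      rw [this]
      refine (intervalIntegral.abs_integral_le_integral_abs hxy).trans ?_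
      refine intervalIntegral.integral_mono_interval hx.1 hxy hy.2 ?_ ?_
      · exact Eventually.of_forall (fun x => abs_nonneg _)
      · exact hK'int.abs.intervalIntegrable
    have : |K u - K v| ≤ ∫ z in p..q, |K' z| := by
      rcases le_total u v with h | h
      · exact key u v h hu hv
      · rw [abs_sub_comm]; exact key v u h hv hu
    linarith
  · have h1' : (p : EReal) ≤ A ∨ B ≤ (q : EReal) := by
      rcases not_and_or.1 h1 with h | h
      · exact Or.inl (not_lt.1 h)
      · exact Or.inr (not_lt.1 h)
    by_cases h2 : (q : EReal) ≤ A ∨ B ≤ (p : EReal)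
    · -- both values zero
      have hz : ∀ x : ℝ, x ∈ Icc p q → K x = 0 := by
        intro x hx
        rcases h2 with h | h
        · exact hsupp x (Or.inl ((EReal.coe_le_coe_iff.2 hx.2).trans h))
        · exact hsupp x (Or.inr (h.trans (EReal.coe_le_coe_iff.2 hx.1)))
      rw [hz u hu, hz v hv, sub_zero, abs_zero]
      linarith
    · push_neg at h2
      have habs : |K u - K v| ≤ 2*M := by
        calc |K u - K v| ≤ |K u| + |K v| := abs_sub _ _
        _ ≤ M + M := add_le_add (hM u) (hM v)
        _ = 2*M := by ring
      rcases h1' with h | h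
      · have : (if (p : EReal) ≤ A ∧ A < (q : EReal) then 2*M else 0) = 2*M :=
          if_pos ⟨h, h2.1⟩
        rw [this]; linarith
      · have : (if (p : EReal) < B ∧ B ≤ (q : EReal) then 2*M else 0) = 2*M :=
          if_pos ⟨h2.2, h⟩
        rw [this]; linarith

noncomputable def kb (K : ℝ → ℝ) (b x : ℝ) : ℝ := K (x / b) / b

set_option maxHeartbeats 1000000 in
open Classical in
theorem stmt_1
    (T : ℝ) (hT : 0 < T)
    (K K' : ℝ → ℝ)
    (A B : EReal) (hA : A ≤ 0) (hB : 0 ≤ B)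
    (hKbdd : ∃ M : ℝ, ∀ x : ℝ, |K x| ≤ M)
    (hsupp : ∀ x : ℝ, ((x : EReal) ≤ A ∨ B ≤ (x : EReal)) → K x = 0)
    (hLip : ∃ C : NNReal,
      LipschitzOnWith C K {x : ℝ | A < (x : EReal) ∧ (x : EReal) < B})
    (hdiff : ∃ E : Finset ℝ,
      ∀ x ∈ {x : ℝ | A < (x : EReal) ∧ (x : EReal) < B} \ (E : Set ℝ),
        HasDerivAt K (K' x) x)
    (hKint : Integrable K)
    (hK'int : Integrable K')
    (hK'BV : BoundedVariationOn K' Set.univ)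
    (b : ℕ → ℝ) (hbpos : ∀ n, 0 < b n)
    (hb0 : Tendsto b atTop (𝓝 0))
    (hΔb : Tendsto (fun n : ℕ => (T / n) / b n) atTop (𝓝 0))
    (τ : ℝ) (hτ : τ = 0 ∨ τ = T)
    (φ : ℝ → ℝ) (hφ : ContinuousOn φ (Set.Icc 0 T)) :
    ∃ C > (0:ℝ), ∃ N : ℕ, ∀ n ≥ N,
      |(∑ i ∈ Finset.range n,
          kb K (b n) ((i : ℝ) * (T / n) - τ) *
            ∫ s in ((i : ℝ) * (T / n))..(((i : ℝ) + 1) * (T / n)), φ s) -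
        ∫ s in (0:ℝ)..T, kb K (b n) (s - τ) * φ s| ≤ C * (T / n) / b n := by
  obtain ⟨M, hM⟩ := hKbdd
  have hM0 : 0 ≤ M := (abs_nonneg _).trans (hM 0)
  obtain ⟨L, hL⟩ := hLip
  obtain ⟨E, hE⟩ := hdiff
  obtain ⟨Φ, hΦ⟩ := isCompact_Icc.exists_bound_of_continuousOn hφ
  have hΦ0 : 0 ≤ Φ := (norm_nonneg (φ 0)).trans (hΦ 0 ⟨le_rfl, hT.le⟩)
  set I' := ∫ z, |K' z| with hI'def
  have hI'0 : 0 ≤ I' := integral_nonneg fun z => abs_nonneg _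
  refine ⟨Φ * (I' + 4*M) + 1, by positivity, 1, fun n hn => ?_⟩
  have hn0 : 0 < (n : ℝ) := by exact_mod_cast Nat.lt_of_lt_of_le Nat.zero_lt_one hn
  set Δ := T / (n : ℝ) with hΔdef
  have hΔ : 0 < Δ := div_pos hT hn0
  set bn := b n with hbndef
  have hb : 0 < bn := hbpos n
  set t : ℕ → ℝ := fun i => (i : ℝ) * Δ with htdef
  set x : ℕ → ℝ := fun i => (t i - τ) / bn with hxdef
  have htmono : ∀ i j : ℕ, i ≤ j → t i ≤ t j := by
    intro i j hij
    simp only [htdef]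
    have : (i : ℝ) ≤ j := by exact_mod_cast hij
    nlinarith
  have hxmono : ∀ i j : ℕ, i ≤ j → x i ≤ x j := by
    intro i j hij
    simp only [hxdef]
    have := htmono i j hij
    gcongr
  have hTn : (n : ℝ) * Δ = T := by
    rw [hΔdef]; field_simp [hn0.ne']
  have ht0 : t 0 = 0 := by simp [htdef]
  have htn : t n = T := by simp [htdef, hTn]
  have hsub : ∀ i : ℕ, i < n → Icc (t i) (t (i+1)) ⊆ Icc 0 T := by
    intro i hi
    apply Icc_subset_Icc
    · simp only [htdef]; positivity
    · rw [← hTn]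
      simp only [htdef]
      have : ((i:ℝ) + 1) ≤ (n : ℝ) := by exact_mod_cast hi
      push_cast
      nlinarith
  have hstep : ∀ i : ℕ, t i ≤ t (i+1) := fun i => htmono i (i+1) (Nat.le_succ i)
  -- integrability of the kernel factor
  have hkbi : Integrable (fun s : ℝ => kb K bn (s - τ)) := by
    have h1 : Integrable (fun z : ℝ => K (z / bn)) := hKint.comp_div hb.ne'
    have h2 : Integrable (fun z : ℝ => K (z / bn) / bn) := h1.div_const bn
    exact h2.comp_sub_right τ
  set g : ℝ → ℝ := fun s => kb K bn (s - τ) * φ s with hgdef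
  have hgInt : ∀ i : ℕ, i < n → IntervalIntegrable g volume (t i) (t (i+1)) := by
    intro i hi
    rw [intervalIntegrable_iff_integrableOn_Icc_of_le (hstep i)]
    exact (hkbi.integrableOn).mul_continuousOn (hφ.mono (hsub i hi)) isCompact_Icc
  have hφInt : ∀ i : ℕ, i < n → IntervalIntegrable φ volume (t i) (t (i+1)) := by
    intro i hi
    apply ContinuousOn.intervalIntegrable
    rw [uIcc_of_le (hstep i)]
    exact hφ.mono (hsub i hi)
  have hsplit : ∫ s in (0:ℝ)..T, g s = ∑ i ∈ Finset.range n, ∫ s in t i..t (i+1), g s := by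
    rw [intervalIntegral.sum_integral_adjacent_intervals (fun i hi => hgInt i hi), ht0, htn]
  -- J bound
  set J : ℕ → ℝ := fun i => (∫ z in x i..x (i+1), |K' z|)
      + (if ((x i : ℝ) : EReal) ≤ A ∧ A < ((x (i+1) : ℝ) : EReal) then 2*M else 0)
      + (if ((x i : ℝ) : EReal) < B ∧ B ≤ ((x (i+1) : ℝ) : EReal) then 2*M else 0) with hJdef
  have hJnn : ∀ i : ℕ, 0 ≤ J i := by
    intro i
    simp only [hJdef]
    have h0 : 0 ≤ ∫ z in x i..x (i+1), |K' z| :=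
      intervalIntegral.integral_nonneg (hxmono i (i+1) (Nat.le_succ i))
        (fun z _ => abs_nonneg _)
    have i1 : 0 ≤ (if ((x i : ℝ) : EReal) ≤ A ∧ A < ((x (i+1) : ℝ) : EReal)
        then 2*M else 0) := by split <;> positivity
    have i2 : 0 ≤ (if ((x i : ℝ) : EReal) < B ∧ B ≤ ((x (i+1) : ℝ) : EReal)
        then 2*M else 0) := by split <;> positivity
    linarith
  have hterm : ∀ i ∈ Finset.range n,
      |∫ s in t i..t (i+1), (kb K bn (t i - τ) * φ s - g s)| ≤ J i / bn * Φ * Δ := by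
    intro i hi
    rw [Finset.mem_range] at hi
    have hbound : ∀ s ∈ Set.uIoc (t i) (t (i+1)),
        ‖kb K bn (t i - τ) * φ s - g s‖ ≤ J i / bn * Φ := by
      intro s hs
      rw [Set.uIoc_of_le (hstep i)] at hs
      have hsIcc : s ∈ Icc 0 T := (hsub i hi) ⟨hs.1.le, hs.2⟩
      have hfac : kb K bn (t i - τ) * φ s - g s
          = (K (x i) - K ((s - τ)/bn)) / bn * φ s := by
        simp only [hgdef, kb, hxdef]
        ring
      rw [hfac]
      have hvmem : (s - τ)/bn ∈ Icc (x i) (x (i+1)) := by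
        constructor
        · simp only [hxdef]; gcongr; exact hs.1.le
        · simp only [hxdef]; gcongr; exact hs.2
      have humem : x i ∈ Icc (x i) (x (i+1)) :=
        ⟨le_refl _, hxmono i (i+1) (Nat.le_succ i)⟩
      have hkey : |K (x i) - K ((s - τ)/bn)| ≤ J i := by
        simp only [hJdef]
        exact keyK K K' A B M hM hsupp L hL E hE hK'int (x i) (x (i+1))
          (hxmono i (i+1) (Nat.le_succ i)) (x i) ((s - τ)/bn) humem hvmem
      have hφs : |φ s| ≤ Φ := by
        have := hΦ s hsIcc
        rwa [Real.norm_eq_abs] at this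
      rw [Real.norm_eq_abs, abs_mul, abs_div, abs_of_pos hb]
      have hJi : 0 ≤ J i := hJnn i
      gcongr
    have hest := intervalIntegral.norm_integral_le_of_norm_le_const hbound
    have hlen : |t (i+1) - t i| = Δ := by
      have : t (i+1) - t i = Δ := by simp only [htdef]; push_cast; ring
      rw [this, abs_of_pos hΔ]
    rw [Real.norm_eq_abs] at hest
    calc |∫ s in t i..t (i+1), (kb K bn (t i - τ) * φ s - g s)|
        ≤ (J i / bn * Φ) * |t (i+1) - t i| := hest
      _ = J i / bn * Φ * Δ := by rw [hlen]
  -- sum of the indicator parts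
  have hcard : ∀ (P : ℕ → Prop) (_ : DecidablePred P),
      (∀ i ∈ Finset.range n, ∀ j ∈ Finset.range n, P i → P j → i = j) →
      (∑ i ∈ Finset.range n, if P i then 2*M else 0) ≤ 2*M := by
    intro P instP huniq
    rw [← Finset.sum_filter]
    have hc : ((Finset.range n).filter P).card ≤ 1 := by
      apply Finset.card_le_one.2
      intro a ha b hb
      rw [Finset.mem_filter] at ha hb
      exact huniq a ha.1 b hb.1 ha.2 hb.2
    rw [Finset.sum_const]
    calc (((Finset.range n).filter P).card : ℕ) • (2*M)
        = (((Finset.range n).filter P).card : ℝ) * (2*M) := nsmul_eq_mul _ _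
      _ ≤ 1 * (2*M) := by
          apply mul_le_mul_of_nonneg_right _ (by positivity)
          exact_mod_cast hc
      _ = 2*M := one_mul _
  have hsumJ : ∑ i ∈ Finset.range n, J i ≤ I' + 4*M := by
    have h1 : ∑ i ∈ Finset.range n, ∫ z in x i..x (i+1), |K' z| ≤ I' := by
      rw [intervalIntegral.sum_integral_adjacent_intervals
        (fun i _ => hK'int.abs.intervalIntegrable)]
      rw [intervalIntegral.integral_of_le (hxmono 0 n (Nat.zero_le n))]
      exact setIntegral_le_integral hK'int.abs
        (Eventually.of_forall fun z => abs_nonneg _)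
    have h2 : (∑ i ∈ Finset.range n,
        if ((x i : ℝ) : EReal) ≤ A ∧ A < ((x (i+1) : ℝ) : EReal) then 2*M else 0) ≤ 2*M := by
      apply hcard _ _
      intro i hi j hj hPi hPj
      by_contra hne
      rcases Nat.lt_or_ge i j with h | h
      · have hle : ((x (i+1) : ℝ) : EReal) ≤ ((x j : ℝ) : EReal) :=
          EReal.coe_le_coe_iff.2 (hxmono _ _ h)
        exact absurd ((hPi.2.trans_le hle).trans_le hPj.1) (lt_irrefl A)
      · have hji : j < i := lt_of_le_of_ne h (Ne.symm hne)
        have hle : ((x (j+1) : ℝ) : EReal) ≤ ((x i : ℝ) : EReal) :=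
          EReal.coe_le_coe_iff.2 (hxmono _ _ hji)
        exact absurd ((hPj.2.trans_le hle).trans_le hPi.1) (lt_irrefl A)
    have h3 : (∑ i ∈ Finset.range n,
        if ((x i : ℝ) : EReal) < B ∧ B ≤ ((x (i+1) : ℝ) : EReal) then 2*M else 0) ≤ 2*M := by
      apply hcard _ _
      intro i hi j hj hPi hPj
      by_contra hne
      rcases Nat.lt_or_ge i j with h | h
      · have hle : ((x (i+1) : ℝ) : EReal) ≤ ((x j : ℝ) : EReal) :=
          EReal.coe_le_coe_iff.2 (hxmono _ _ h)
        exact absurd ((hPi.2.trans hle).trans_lt hPj.1) (lt_irrefl B)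
      · have hji : j < i := lt_of_le_of_ne h (Ne.symm hne)
        have hle : ((x (j+1) : ℝ) : EReal) ≤ ((x i : ℝ) : EReal) :=
          EReal.coe_le_coe_iff.2 (hxmono _ _ hji)
        exact absurd ((hPj.2.trans hle).trans_lt hPi.1) (lt_irrefl B)
    simp only [hJdef]
    rw [Finset.sum_add_distrib, Finset.sum_add_distrib]
    linarith
  -- final assembly
  have hgoal : (∑ i ∈ Finset.range n,
          kb K bn ((i : ℝ) * Δ - τ) *
            ∫ s in ((i : ℝ) * Δ)..(((i : ℝ) + 1) * Δ), φ s) -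
        ∫ s in (0:ℝ)..T, g s
      = ∑ i ∈ Finset.range n, ∫ s in t i..t (i+1), (kb K bn (t i - τ) * φ s - g s) := by
    rw [hsplit, ← Finset.sum_sub_distrib]
    apply Finset.sum_congr rfl
    intro i hi
    rw [Finset.mem_range] at hi
    have h1 : ((i : ℝ) + 1) * Δ = t (i+1) := by
      simp only [htdef]; push_cast; ring
    have h2 : (i : ℝ) * Δ = t i := by simp only [htdef]
    rw [h1, h2, ← intervalIntegral.integral_const_mul,
      ← intervalIntegral.integral_sub ((hφInt i hi).const_mul _) (hgInt i hi)]
  rw [hgoal]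
  calc |∑ i ∈ Finset.range n, ∫ s in t i..t (i+1), (kb K bn (t i - τ) * φ s - g s)|
      ≤ ∑ i ∈ Finset.range n, |∫ s in t i..t (i+1), (kb K bn (t i - τ) * φ s - g s)| :=
        Finset.abs_sum_le_sum_abs _ _
    _ ≤ ∑ i ∈ Finset.range n, J i / bn * Φ * Δ := Finset.sum_le_sum hterm
    _ = (∑ i ∈ Finset.range n, J i) / bn * Φ * Δ := by
        rw [← Finset.sum_mul, ← Finset.sum_mul, ← Finset.sum_div]
    _ ≤ (Φ * (I' + 4*M) + 1) * Δ / bn := by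
        have hSnn : 0 ≤ ∑ i ∈ Finset.range n, J i :=
          Finset.sum_nonneg (fun i _ => hJnn i)
        have h1 : (∑ i ∈ Finset.range n, J i) / bn * Φ * Δ
            = ((∑ i ∈ Finset.range n, J i) * Φ) * (Δ / bn) := by ring
        have h2 : (Φ * (I' + 4*M) + 1) * Δ / bn = (Φ * (I' + 4*M) + 1) * (Δ / bn) := by ring
        rw [h1, h2]
        apply mul_le_mul_of_nonneg_right _ (by positivity)
        nlinarith [hsumJ, hΦ0, hSnn]
end

section
/- Assume additionally that ∫_ℝ K(x) dx = 1 and |x|^{2+ε} K(x) → 0 as |x| → ∞ for some ε > 1/2, and that the bandwidths are b_n = k_n Δ_n with k_n·√Δ_n → θ ∈ (0, ∞). Then for every compact interval [a, c] ⊂ (0, T) there exist C > 0 and N ∈ ℕ such that for all n ≥ N: sup_{τ ∈ [a,c]} |Δ_n · Σ_{i=1}^n K_{b_n}(t_{i−1} − τ) − 1| ≤ C · Δ_n/b_n. -/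
/-! With `Δ = T / n`, `b = k n * Δ` and `h = Δ / b`, the sum `Δ * ∑ i, K_b (t_i - τ)` is the left
Riemann sum of `K` with mesh `h` over `[-τ / b, (T - τ) / b]`. On a cell inside `(A, B)` the error
is at most `h` times the variation `∫ |K'|` of `K` over the cell; the at most two cells containing
`A` or `B`, where `K` may jump, contribute at most `2 M h` each; all other cells contribute nothing.
So the Riemann sum is within `h (∫ |K'| + 4 M)` of `∫ K` over `[-τ / b, (T - τ) / b]`. Since
`|K x| ≤ x⁻²` for large `|x|`, that integral is within `2 b / d` of `∫ K = 1`, where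
`d = min a (T - c)`; finally `b² = (k √Δ)² Δ = O(Δ)` makes `b / d = O(Δ / b)`. -/

open MeasureTheory Filter Topology

open Set

lemma exists_abs_le_rpow_neg_of_tendsto_cocompact {f : ℝ → ℝ} {s t : ℝ} (hts : t ≤ s)
    (hf : Tendsto (fun x => |x| ^ s * f x) (cocompact ℝ) (𝓝 0)) :
    ∃ R > 0, ∀ x, R ≤ |x| → |f x| ≤ |x| ^ (-t) := by
  rw [← Metric.cobounded_eq_cocompact, ← comap_norm_atTop] at hf
  obtain ⟨R, hR⟩ := eventually_atTop.1 <| eventually_comap.1 <|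
    hf.eventually (Metric.ball_mem_nhds 0 one_pos)
  refine ⟨max R 1, by positivity, fun x hx => ?_⟩
  have hx1 : 1 ≤ |x| := (le_max_right _ _).trans hx
  have hsmall : |x| ^ s * |f x| < 1 := by
    simpa [abs_mul, abs_of_nonneg (Real.rpow_nonneg (abs_nonneg x) s)] using
      hR _ ((le_max_left _ _).trans hx) x rfl
  have hts' : |x| ^ t ≤ |x| ^ s := Real.rpow_le_rpow_of_exponent_le hx1 hts
  rw [Real.rpow_neg (abs_nonneg x), ← one_div, le_div_iff₀ (by positivity)]
  nlinarith [abs_nonneg (f x)]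

lemma abs_setIntegral_Ioi_le_inv {f : ℝ → ℝ} {q : ℝ} (hq : 0 < q)
    (hf : ∀ y ∈ Ioi q, |f y| ≤ y ^ (-2 : ℝ)) : |∫ y in Ioi q, f y| ≤ q⁻¹ := by
  have hmajorant : ∫ y in Ioi q, y ^ (-2 : ℝ) = q⁻¹ := by
    rw [integral_Ioi_rpow_of_lt (by norm_num) hq]
    norm_num [Real.rpow_neg_one]
  rw [← hmajorant]
  exact norm_integral_le_of_norm_le (f := f)
    (integrableOn_Ioi_rpow_of_lt (a := -2) (by norm_num) hq)
    ((ae_restrict_iff' measurableSet_Ioi).2 (ae_of_all _ hf))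

lemma abs_intervalIntegral_sub_integral_le {f : ℝ → ℝ} {r p q : ℝ} (hf : Integrable f)
    (hr : 0 < r) (hdecay : ∀ x, r ≤ |x| → |f x| ≤ |x| ^ (-2 : ℝ)) (hp : p ≤ -r) (hq : r ≤ q) :
    |(∫ x in p..q, f x) - ∫ x, f x| ≤ 2 * r⁻¹ := by
  have htails :
      (∫ x, f x) - ∫ x in p..q, f x = (∫ x in Ioi (-p), f (-x)) + ∫ x in Ioi q, f x := by
    rw [integral_comp_neg_Ioi, neg_neg,
      ← intervalIntegral.integral_Iic_add_Ioi hf.integrableOn hf.integrableOn,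
      ← intervalIntegral.integral_Iic_sub_Iic hf.integrableOn hf.integrableOn]
    ring
  have hleft : |∫ x in Ioi (-p), f (-x)| ≤ r⁻¹ := by
    refine (abs_setIntegral_Ioi_le_inv (by linarith) fun y hy => ?_).trans
      (inv_anti₀ hr (by linarith))
    have hy : r ≤ y := by simp only [mem_Ioi] at hy; linarith
    simpa [abs_of_pos (hr.trans_le hy)] using
      hdecay (-y) (by simpa [abs_of_pos (hr.trans_le hy)])
  have hright : |∫ x in Ioi q, f x| ≤ r⁻¹ := by
    refine (abs_setIntegral_Ioi_le_inv (by linarith) fun y hy => ?_).trans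
      (inv_anti₀ hr hq)
    have hy : r ≤ y := hq.trans (le_of_lt hy)
    simpa [abs_of_pos (hr.trans_le hy)] using
      hdecay y (by simpa [abs_of_pos (hr.trans_le hy)])
  rw [abs_sub_comm, htails]
  linarith [abs_add_le (∫ x in Ioi (-p), f (-x)) (∫ x in Ioi q, f x)]

lemma abs_mul_sub_intervalIntegral_le {f : ℝ → ℝ} {p q β : ℝ} (hpq : p ≤ q)
    (hf : IntervalIntegrable f volume p q) (hβ : ∀ x ∈ Icc p q, |f p - f x| ≤ β) :
    |(q - p) * f p - ∫ x in p..q, f x| ≤ (q - p) * β := by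
  have hdiff : (q - p) * f p - ∫ x in p..q, f x = ∫ x in p..q, (f p - f x) := by
    rw [intervalIntegral.integral_sub intervalIntegrable_const hf,
      intervalIntegral.integral_const, smul_eq_mul]
  rw [hdiff, mul_comm, ← abs_of_nonneg (sub_nonneg.2 hpq)]
  refine intervalIntegral.norm_integral_le_of_norm_le_const (f := fun x => f p - f x)
    fun x hx => hβ x ?_
  rw [uIoc_of_le hpq] at hx
  exact Ioc_subset_Icc_self hx

lemma abs_sub_le_integral_abs_deriv {f f' : ℝ → ℝ} {p q x : ℝ} {s : Set ℝ} (hs : s.Countable)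
    (hc : ContinuousOn f (Icc p q)) (hd : ∀ y ∈ Ioo p q \ s, HasDerivAt f (f' y) y)
    (hi : IntervalIntegrable f' volume p q) (hx : x ∈ Icc p q) :
    |f p - f x| ≤ ∫ y in p..q, |f' y| := by
  have hsub : Icc p x ⊆ Icc p q := Icc_subset_Icc_right hx.2
  have hftc : ∫ y in p..x, f' y = f x - f p :=
    integral_eq_of_hasDerivAt_off_countable_of_le f f' hx.1 hs (hc.mono hsub)
      (fun y hy => hd y ⟨Ioo_subset_Ioo_right hx.2 hy.1, hy.2⟩)
      (hi.mono_set (by rwa [uIcc_of_le hx.1, uIcc_of_le (hx.1.trans hx.2)]))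
  rw [abs_sub_comm, ← hftc]
  calc |∫ y in p..x, f' y| ≤ ∫ y in p..x, |f' y| :=
        intervalIntegral.abs_integral_le_integral_abs hx.1
    _ ≤ ∫ y in p..q, |f' y| :=
        intervalIntegral.integral_mono_interval le_rfl hx.1 hx.2
          (ae_of_all _ fun _ => abs_nonneg _) hi.abs

open Finset Function in
lemma Finset.card_filter_mem_le_one {ι α : Type*} {I : ι → Set α}
    (hI : Pairwise (Disjoint on I)) (a : α) (s : Finset ι) [DecidablePred (a ∈ I ·)] :
    #{i ∈ s | a ∈ I i} ≤ 1 :=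
  Finset.card_le_one.2 fun _ hi _ hj => by_contra fun hij =>
    Set.disjoint_left.1 (hI hij) (Finset.mem_filter.1 hi).2 (Finset.mem_filter.1 hj).2

lemma abs_sub_le_integral_abs_deriv_add_ite {K K' : ℝ → ℝ} {A B : EReal} {M : ℝ} {s : Set ℝ}
    {p q x : ℝ} [Decidable (A ∈ Ico (p : EReal) q ∨ B ∈ Ioc (p : EReal) q)]
    (hM : ∀ x, |K x| ≤ M) (hsupp : ∀ x : ℝ, ((x : EReal) ≤ A ∨ B ≤ (x : EReal)) → K x = 0)
    (hcont : ContinuousOn K ((↑) ⁻¹' Ioo A B)) (hs : s.Countable)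
    (hderiv : ∀ x ∈ (↑) ⁻¹' Ioo A B \ s, HasDerivAt K (K' x) x)
    (hK' : IntervalIntegrable K' volume p q) (hx : x ∈ Icc p q) :
    |K p - K x| ≤
      (∫ y in p..q, |K' y|) +
        if A ∈ Ico (p : EReal) q ∨ B ∈ Ioc (p : EReal) q then 2 * M else 0 := by
  have hK'nonneg : 0 ≤ ∫ y in p..q, |K' y| :=
    intervalIntegral.integral_nonneg (hx.1.trans hx.2) fun _ _ => abs_nonneg _
  split_ifs with hcross
  · linarith [abs_sub (K p) (K x), hM p, hM x]
  simp only [mem_Ico, mem_Ioc, not_or, not_and, not_lt, not_le] at hcross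
  by_cases hin : A < p ∧ (q : EReal) < B
  · have hsub : Icc p q ⊆ (↑) ⁻¹' Ioo A B := fun y hy =>
      ⟨hin.1.trans_le (EReal.coe_le_coe_iff.2 hy.1),
        (EReal.coe_le_coe_iff.2 hy.2).trans_lt hin.2⟩
    rw [add_zero]
    exact abs_sub_le_integral_abs_deriv hs (hcont.mono hsub)
      (fun y hy => hderiv y ⟨hsub (Ioo_subset_Icc_self hy.1), hy.2⟩) hK' hx
  · have hvanish : ∀ y ∈ Icc p q, K y = 0 := fun y hy => by
      have hpy := EReal.coe_le_coe_iff.2 hy.1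
      have hyq := EReal.coe_le_coe_iff.2 hy.2
      refine hsupp y ?_
      by_cases hAp : A < p
      · have hBq : B ≤ q := not_lt.1 fun h => hin ⟨hAp, h⟩
        exact Or.inr ((not_lt.1 fun h => (hcross.2 h).not_ge hBq).trans hpy)
      · exact Or.inl (hyq.trans (hcross.1 (not_lt.1 hAp)))
    rw [hvanish p ⟨le_rfl, hx.1.trans hx.2⟩, hvanish x hx, sub_zero, abs_zero, add_zero]
    exact hK'nonneg

open Finset in
lemma abs_mul_sum_sub_intervalIntegral_le {K K' : ℝ → ℝ} {A B : EReal} {M : ℝ} {s : Set ℝ}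
    (hM : ∀ x, |K x| ≤ M) (hsupp : ∀ x : ℝ, ((x : EReal) ≤ A ∨ B ≤ (x : EReal)) → K x = 0)
    (hcont : ContinuousOn K ((↑) ⁻¹' Ioo A B)) (hs : s.Countable)
    (hderiv : ∀ x ∈ (↑) ⁻¹' Ioo A B \ s, HasDerivAt K (K' x) x)
    (hK : Integrable K) (hK' : Integrable K') (x₀ : ℝ) {h : ℝ} (hh : 0 ≤ h) (n : ℕ) :
    |h * ∑ i ∈ range n, K (x₀ + i * h) - ∫ x in x₀..x₀ + n * h, K x| ≤
      h * ((∫ x, |K' x|) + 4 * M) := by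
  classical
  set p : ℕ → ℝ := fun i => x₀ + i * h
  have hp : Monotone p := fun i j hij => by simp only [p]; gcongr
  have hpE : Monotone fun i => (p i : EReal) := fun i j hij => EReal.coe_le_coe_iff.2 (hp hij)
  set cross : ℕ → Prop :=
    fun i => A ∈ Ico (p i : EReal) (p (i + 1)) ∨ B ∈ Ioc (p i : EReal) (p (i + 1))
  have hcell : ∀ i, |h * K (p i) - ∫ x in p i..p (i + 1), K x| ≤
      h * ((∫ y in p i..p (i + 1), |K' y|) + if cross i then 2 * M else 0) := by
    intro i
    have hstep : p (i + 1) - p i = h := by simp only [p]; push_cast; ring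
    rw [← hstep]
    exact abs_mul_sub_intervalIntegral_le (hp i.le_succ) hK.intervalIntegrable fun x hx =>
      abs_sub_le_integral_abs_deriv_add_ite hM hsupp hcont hs hderiv hK'.intervalIntegrable hx
  have hcross : #{i ∈ range n | cross i} ≤ 2 := by
    have hIco := hpE.pairwise_disjoint_on_Ico_succ
    have hIoc := hpE.pairwise_disjoint_on_Ioc_succ
    simp only [Order.succ_eq_add_one] at hIco hIoc
    rw [filter_or]
    exact (Finset.card_union_le _ _).trans (add_le_add
      (card_filter_mem_le_one hIco A _) (card_filter_mem_le_one hIoc B _))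
  have hjumps : ∑ i ∈ range n, (if cross i then 2 * M else 0) ≤ 4 * M := by
    have hM0 : 0 ≤ M := (abs_nonneg _).trans (hM 0)
    rw [← sum_filter, sum_const, nsmul_eq_mul]
    have hcard : (#{i ∈ range n | cross i} : ℝ) ≤ 2 := by exact_mod_cast hcross
    nlinarith
  have hvariation : ∑ i ∈ range n, ∫ y in p i..p (i + 1), |K' y| ≤ ∫ x, |K' x| := by
    rw [intervalIntegral.sum_integral_adjacent_intervals fun _ _ => hK'.abs.intervalIntegrable,
      intervalIntegral.integral_of_le (hp (Nat.zero_le n))]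
    exact setIntegral_le_integral hK'.abs (ae_of_all _ fun _ => abs_nonneg _)
  have hsplit : ∫ x in x₀..x₀ + n * h, K x = ∑ i ∈ range n, ∫ x in p i..p (i + 1), K x := by
    rw [intervalIntegral.sum_integral_adjacent_intervals fun _ _ => hK.intervalIntegrable]
    simp [p]
  calc |h * ∑ i ∈ range n, K (x₀ + i * h) - ∫ x in x₀..x₀ + n * h, K x|
      = |∑ i ∈ range n, (h * K (p i) - ∫ x in p i..p (i + 1), K x)| := by
        rw [hsplit, mul_sum, sum_sub_distrib]
    _ ≤ ∑ i ∈ range n, |h * K (p i) - ∫ x in p i..p (i + 1), K x| := abs_sum_le_sum_abs _ _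
    _ ≤ ∑ i ∈ range n, h * ((∫ y in p i..p (i + 1), |K' y|) + if cross i then 2 * M else 0) :=
        sum_le_sum fun i _ => hcell i
    _ = h * ((∑ i ∈ range n, ∫ y in p i..p (i + 1), |K' y|) +
          ∑ i ∈ range n, if cross i then 2 * M else 0) := by
        rw [← mul_sum, sum_add_distrib]
    _ ≤ h * ((∫ x, |K' x|) + 4 * M) := by gcongr

lemma eventually_mul_le_and_sq_le_of_tendsto_mul_sqrt {x Δ : ℕ → ℝ} {θ δ : ℝ}
    (hΔ : Tendsto Δ atTop (𝓝 0)) (hΔ0 : ∀ n, 0 ≤ Δ n)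
    (hx : Tendsto (fun n => x n * √(Δ n)) atTop (𝓝 θ)) (hδ : 0 < δ) :
    ∀ᶠ n in atTop, x n * Δ n ≤ δ ∧ (x n * Δ n) ^ 2 ≤ (θ ^ 2 + 1) * Δ n := by
  have hfactor : ∀ n, x n * Δ n = x n * √(Δ n) * √(Δ n) := fun n => by
    rw [mul_assoc, Real.mul_self_sqrt (hΔ0 n)]
  have hsmall : Tendsto (fun n => x n * Δ n) atTop (𝓝 0) := by
    have hprod := hx.mul hΔ.sqrt
    rw [Real.sqrt_zero, mul_zero] at hprod
    simpa only [hfactor] using hprod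
  filter_upwards [hsmall.eventually (ge_mem_nhds hδ),
    (hx.pow 2).eventually (gt_mem_nhds (lt_add_one (θ ^ 2)))] with n hle hsq
  refine ⟨hle, ?_⟩
  rw [hfactor, mul_pow, Real.sq_sqrt (hΔ0 n)]
  exact mul_le_mul_of_nonneg_right hsq.le (hΔ0 n)

open Finset in
lemma abs_mul_sum_kb_sub_one_le {K K' : ℝ → ℝ} {A B : EReal} {M R : ℝ} {s : Set ℝ}
    (hM : ∀ x, |K x| ≤ M) (hsupp : ∀ x : ℝ, ((x : EReal) ≤ A ∨ B ≤ (x : EReal)) → K x = 0)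
    (hcont : ContinuousOn K ((↑) ⁻¹' Ioo A B)) (hs : s.Countable)
    (hderiv : ∀ x ∈ (↑) ⁻¹' Ioo A B \ s, HasDerivAt K (K' x) x)
    (hK : Integrable K) (hK' : Integrable K') (hKone : ∫ x, K x = 1)
    (hR : 0 < R) (hdecay : ∀ x, R ≤ |x| → |K x| ≤ |x| ^ (-2 : ℝ))
    {Δ b τ d Θ : ℝ} (n : ℕ) (hΔ : 0 ≤ Δ) (hb : 0 < b) (hbR : b ≤ d / R) (hbΔ : b ^ 2 ≤ Θ * Δ)
    (hτ : d ≤ τ) (hτn : d ≤ n * Δ - τ) :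
    |Δ * ∑ i ∈ range n, kb K b (i * Δ - τ) - 1| ≤
      ((∫ x, |K' x|) + 4 * M + 2 * Θ / d) * Δ / b := by
  have hRb : R ≤ d / b := (le_div_comm₀ hb hR).1 hbR
  have hd : 0 < d := (div_pos_iff_of_pos_right hb).1 (hR.trans_le hRb)
  have hrescale : Δ * ∑ i ∈ range n, kb K b (i * Δ - τ) =
      Δ / b * ∑ i ∈ range n, K (-τ / b + i * (Δ / b)) := by
    rw [mul_sum, mul_sum]
    refine sum_congr rfl fun i _ => ?_
    rw [kb, sub_div, neg_div, neg_add_eq_sub, mul_div_assoc]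
    ring
  have hend : -τ / b + n * (Δ / b) = (n * Δ - τ) / b := by ring
  have hriemann := abs_mul_sum_sub_intervalIntegral_le hM hsupp hcont hs hderiv hK hK' (-τ / b)
    (div_nonneg hΔ hb.le) n
  have htail := abs_intervalIntegral_sub_integral_le hK (hR.trans_le hRb)
    (fun x hx => hdecay x (hRb.trans hx)) (p := -τ / b) (q := -τ / b + n * (Δ / b))
    (by rw [neg_div]; gcongr) (by rw [hend]; gcongr)
  rw [hKone, inv_div] at htail
  have hbd : b / d ≤ Θ / d * (Δ / b) := by
    rw [div_mul_div_comm, div_le_div_iff₀ hd (mul_pos hd hb)]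
    nlinarith
  have hC : ((∫ x, |K' x|) + 4 * M + 2 * Θ / d) * Δ / b =
      Δ / b * ((∫ x, |K' x|) + 4 * M) + 2 * (Θ / d * (Δ / b)) := by ring
  rw [hrescale, hC]
  calc _ ≤ |Δ / b * ∑ i ∈ range n, K (-τ / b + i * (Δ / b)) -
          ∫ x in -τ / b..-τ / b + n * (Δ / b), K x| +
        |(∫ x in -τ / b..-τ / b + n * (Δ / b), K x) - 1| := abs_sub_le _ _ _
    _ ≤ _ := by linarith

theorem stmt_3_general
    (T : ℝ) (hT : 0 < T)
    (K K' : ℝ → ℝ)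
    (A B : EReal)
    (hKbdd : ∃ M : ℝ, ∀ x : ℝ, |K x| ≤ M)
    (hsupp : ∀ x : ℝ, ((x : EReal) ≤ A ∨ B ≤ (x : EReal)) → K x = 0)
    (hLip : ∃ C : NNReal,
      LipschitzOnWith C K {x : ℝ | A < (x : EReal) ∧ (x : EReal) < B})
    (hdiff : ∃ E : Finset ℝ,
      ∀ x ∈ {x : ℝ | A < (x : EReal) ∧ (x : EReal) < B} \ (E : Set ℝ),
        HasDerivAt K (K' x) x)
    (hKint : Integrable K)
    (hK'int : Integrable K')
    (hKone : ∫ x : ℝ, K x = 1)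
    (ε : ℝ) (hε : 1 / 2 < ε)
    (hdecay : Tendsto (fun x : ℝ => |x| ^ (2 + ε) * K x) (Filter.cocompact ℝ) (𝓝 0))
    (k : ℕ → ℕ) (hk : ∀ n, 0 < k n)
    (θ : ℝ)
    (hθ : Tendsto (fun n : ℕ => (k n : ℝ) * Real.sqrt (T / n)) atTop (𝓝 θ))
    (a c : ℝ) (ha : 0 < a) (hc : c < T) :
    ∃ C > (0:ℝ), ∃ N : ℕ, ∀ n ≥ N, ∀ τ ∈ Set.Icc a c,
      |(T / n) *
          (∑ i ∈ Finset.range n,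
            kb K ((k n : ℝ) * (T / n)) ((i : ℝ) * (T / n) - τ)) - 1| ≤
        C * (T / n) / ((k n : ℝ) * (T / n)) := by
  obtain ⟨M, hM⟩ := hKbdd
  obtain ⟨L, hL⟩ := hLip
  obtain ⟨E, hE⟩ := hdiff
  obtain ⟨R, hR, hKdecay⟩ :=
    exists_abs_le_rpow_neg_of_tendsto_cocompact (t := 2) (by linarith) hdecay
  set d := min a (T - c)
  have hd : 0 < d := lt_min ha (by linarith)
  have hM0 : 0 ≤ M := (abs_nonneg _).trans (hM 0)
  obtain ⟨N, hN⟩ := eventually_atTop.1 <|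
    (eventually_mul_le_and_sq_le_of_tendsto_mul_sqrt (tendsto_const_div_atTop_nhds_zero_nat T)
      (fun n => by positivity) hθ (div_pos hd hR)).and (eventually_ge_atTop 1)
  refine ⟨(∫ x, |K' x|) + 4 * M + 2 * (θ ^ 2 + 1) / d, by positivity, N, fun n hn τ hτ => ?_⟩
  obtain ⟨⟨hbR, hbΔ⟩, hn⟩ := hN n hn
  have hΔ : 0 < T / n := div_pos hT (by exact_mod_cast hn)
  have hnΔ : n * (T / n) = T := mul_div_cancel₀ T (by positivity)
  exact abs_mul_sum_kb_sub_one_le hM hsupp hL.continuousOn E.countable_toSet hE hKint hK'int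
    hKone hR hKdecay n hΔ.le (mul_pos (by exact_mod_cast hk n) hΔ) hbR hbΔ
    ((min_le_left _ _).trans hτ.1) (by linarith [min_le_right a (T - c), hτ.2])

theorem stmt_3
    (T : ℝ) (hT : 0 < T)
    (K K' : ℝ → ℝ)
    (A B : EReal) (hA : A ≤ 0) (hB : 0 ≤ B)
    (hKbdd : ∃ M : ℝ, ∀ x : ℝ, |K x| ≤ M)
    (hsupp : ∀ x : ℝ, ((x : EReal) ≤ A ∨ B ≤ (x : EReal)) → K x = 0)
    (hLip : ∃ C : NNReal,
      LipschitzOnWith C K {x : ℝ | A < (x : EReal) ∧ (x : EReal) < B})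
    (hdiff : ∃ E : Finset ℝ,
      ∀ x ∈ {x : ℝ | A < (x : EReal) ∧ (x : EReal) < B} \ (E : Set ℝ),
        HasDerivAt K (K' x) x)
    (hKint : Integrable K)
    (hK'int : Integrable K')
    (hK'BV : BoundedVariationOn K' Set.univ)
    (hKone : ∫ x : ℝ, K x = 1)
    (ε : ℝ) (hε : 1 / 2 < ε)
    (hdecay : Tendsto (fun x : ℝ => |x| ^ (2 + ε) * K x) (Filter.cocompact ℝ) (𝓝 0))
    (k : ℕ → ℕ) (hk : ∀ n, 0 < k n)
    (θ : ℝ) (hθpos : 0 < θ)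
    (hθ : Tendsto (fun n : ℕ => (k n : ℝ) * Real.sqrt (T / n)) atTop (𝓝 θ))
    (a c : ℝ) (ha : 0 < a) (hac : a ≤ c) (hc : c < T) :
    ∃ C > (0:ℝ), ∃ N : ℕ, ∀ n ≥ N, ∀ τ ∈ Set.Icc a c,
      |(T / n) *
          (∑ i ∈ Finset.range n,
            kb K ((k n : ℝ) * (T / n)) ((i : ℝ) * (T / n) - τ)) - 1| ≤
        C * (T / n) / ((k n : ℝ) * (T / n)) :=
  stmt_3_general T hT K K' A B hKbdd hsupp hLip hdiff hKint hK'int hKone ε hε hdecay k hk θ hθ a c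
    ha hc
end

section
/- Let h > 0, let g : [x₀, x₀ + h] → ℝ be differentiable with derivative g′, and let ω ≥ 0 satisfy |g′(u) − g′(v)| ≤ ω for all u, v ∈ [x₀, x₀ + h] with |u − v| ≤ h/2. Then |(g(x₀) + g(x₀ + h))/2 − (1/h) · ∫_{x₀}^{x₀+h} g(t) dt| ≤ (h/4) · ω. -/
open MeasureTheory Filter Topology

theorem stmt_5
    (x₀ h : ℝ) (hh : 0 < h)
    (g g' : ℝ → ℝ)
    (hg : ∀ x ∈ Set.Icc x₀ (x₀ + h), HasDerivWithinAt g (g' x) (Set.Icc x₀ (x₀ + h)) x)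
    (ω : ℝ) (hω : 0 ≤ ω)
    (hmod : ∀ u ∈ Set.Icc x₀ (x₀ + h), ∀ v ∈ Set.Icc x₀ (x₀ + h),
      |u - v| ≤ h / 2 → |g' u - g' v| ≤ ω) :
    |(g x₀ + g (x₀ + h)) / 2 - (1 / h) * ∫ t in x₀..(x₀ + h), g t| ≤ (h / 4) * ω := by
  set m := x₀ + h / 2 with hm
  have hx₀m : x₀ ≤ m := by simp only [hm]; linarith
  have hmb : m ≤ x₀ + h := by simp only [hm]; linarith
  have hab : x₀ ≤ x₀ + h := by linarith
  have hmmem : m ∈ Set.Icc x₀ (x₀ + h) := ⟨hx₀m, hmb⟩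
  have hgc : ContinuousOn g (Set.Icc x₀ (x₀ + h)) := fun x hx => (hg x hx).continuousWithinAt
  -- clamp function
  set c : ℝ → ℝ := fun t => max x₀ (min t (x₀ + h)) with hc
  have hcc : Continuous c := continuous_const.max (continuous_id.min continuous_const)
  have hcr : ∀ t, c t ∈ Set.Icc x₀ (x₀ + h) :=
    fun t => ⟨le_max_left _ _, max_le hab (min_le_right _ _)⟩
  have hceq : ∀ t ∈ Set.Icc x₀ (x₀ + h), c t = t := by
    intro t ht
    simp only [hc]
    rw [min_eq_left ht.2, max_eq_right ht.1]
  -- extended function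
  set G : ℝ → ℝ := fun t => g (c t) with hG
  have hGcont : Continuous G := hgc.comp_continuous hcc hcr
  have hGeq : ∀ t ∈ Set.Icc x₀ (x₀ + h), G t = g t := by
    intro t ht; simp only [hG]; rw [hceq t ht]
  -- primitive of G
  set P : ℝ → ℝ := fun t => ∫ s in x₀..t, G s with hP
  have hPderiv : ∀ t, HasDerivAt P (G t) t := fun t =>
    (hGcont.integral_hasStrictDerivAt x₀ t).hasDerivAt
  -- the error function
  set f : ℝ → ℝ := fun t => (t - m) * G t - P t + ((h / 2) * g x₀ + g' m * (h ^ 2 / 8))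
      - g' m * ((t - m) ^ 2 / 2) with hf
  set f' : ℝ → ℝ := fun x => (x - m) * (g' x - g' m) with hf'
  have hfcont : Continuous f := by
    have hPc : Continuous P := continuous_iff_continuousAt.2 fun t => (hPderiv t).continuousAt
    exact ((((continuous_id.sub continuous_const).mul hGcont).sub hPc).add
      continuous_const).sub (continuous_const.mul
      (((continuous_id.sub continuous_const).pow 2).div_const 2))
  -- derivative of f within Ici x for x in the interval (minus right endpoint)
  have hfd : ∀ x ∈ Set.Ico x₀ (x₀ + h),
      HasDerivWithinAt f (f' x) (Set.Ici x) x := by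
    intro x hx
    have hxIcc : x ∈ Set.Icc x₀ (x₀ + h) := ⟨hx.1, le_of_lt hx.2⟩
    have hmem : Set.Icc x₀ (x₀ + h) ∈ 𝓝[Set.Ici x] x :=
      mem_nhdsWithin.2 ⟨Set.Iio (x₀ + h), isOpen_Iio, hx.2,
        fun y hy => ⟨le_trans hx.1 hy.2, le_of_lt hy.1⟩⟩
    have hgx : HasDerivWithinAt g (g' x) (Set.Ici x) x := (hg x hxIcc).mono_of_mem_nhdsWithin hmem
    have hGx : HasDerivWithinAt G (g' x) (Set.Ici x) x := by
      refine hgx.congr_of_eventuallyEq ?_ (hGeq x hxIcc)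
      filter_upwards [hmem] with y hy using hGeq y hy
    have h1 : HasDerivWithinAt (fun t => (t - m) * G t)
        (1 * G x + (x - m) * g' x) (Set.Ici x) x :=
      (((hasDerivWithinAt_id x (Set.Ici x)).sub_const m)).mul hGx
    have h2 : HasDerivWithinAt (fun t => g' m * ((t - m) ^ 2 / 2)) (g' m * (x - m)) (Set.Ici x) x := by
      have h3 : HasDerivAt (fun t : ℝ => g' m * ((t - m) ^ 2 / 2)) (g' m * (x - m)) x := by
        have h4 := ((((hasDerivAt_id x).sub_const m).pow 2).div_const 2).const_mul (g' m)
        refine h4.congr_deriv ?_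
        simp only [id_eq]
        ring
      exact h3.hasDerivWithinAt
    have h5 := ((h1.sub (hPderiv x).hasDerivWithinAt).add_const
        ((h / 2) * g x₀ + g' m * (h ^ 2 / 8))).sub h2
    refine h5.congr_deriv ?_
    rw [hGeq x hxIcc, hf']
    ring
  -- value at the left endpoint
  have hfa : f x₀ = 0 := by
    simp only [hf, hP, intervalIntegral.integral_same, hGeq x₀ ⟨le_refl _, hab⟩]
    have hx0m : x₀ - m = -(h / 2) := by simp only [hm]; ring
    rw [hx0m]
    ring
  -- bound on [x₀, m]
  have hB1 : ∀ x, HasDerivAt (fun t => ω * ((h / 2) ^ 2 - (t - m) ^ 2) / 2) (ω * (m - x)) x := by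
    intro x
    have h4 := (((hasDerivAt_const x ((h/2)^2)).sub (((hasDerivAt_id x).sub_const m).pow 2)).const_mul ω).div_const 2
    refine h4.congr_deriv ?_
    simp only [id_eq]
    ring
  have hstep1 : ‖f m‖ ≤ ω * ((h / 2) ^ 2 - (m - m) ^ 2) / 2 := by
    refine image_norm_le_of_norm_deriv_right_le_deriv_boundary
      (hfcont.continuousOn) (fun x hx => hfd x ⟨hx.1, lt_of_lt_of_le hx.2 hmb⟩)
      ?_ hB1 ?_ ⟨hx₀m, le_refl m⟩
    · rw [hfa]
      simp only [norm_zero]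
      have : x₀ - m = -(h / 2) := by simp only [hm]; ring
      rw [this]
      simp
    · intro x hx
      have hxIcc : x ∈ Set.Icc x₀ (x₀ + h) := ⟨hx.1, le_trans (le_of_lt hx.2) hmb⟩
      have hd : |x - m| ≤ h / 2 := by
        rw [abs_le]; constructor <;> [skip; skip] <;>
          simp only [hm] at hx ⊢ <;> [linarith [hx.1]; linarith [hx.2.le]]
      have hmod1 := hmod x hxIcc m hmmem hd
      rw [hf', Real.norm_eq_abs, abs_mul]
      have hxm : |x - m| = m - x := by rw [abs_sub_comm, abs_of_nonneg]; linarith [hx.2.le]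
      rw [hxm]
      have : m - x ≥ 0 := by linarith [hx.2.le]
      calc (m - x) * |g' x - g' m| ≤ (m - x) * ω := by
            exact mul_le_mul_of_nonneg_left hmod1 this
        _ = ω * (m - x) := by ring
  -- bound on [m, x₀ + h]
  have hB2 : ∀ x, HasDerivAt (fun t => ω * ((h / 2) ^ 2 - (m - m) ^ 2) / 2 + ω * (t - m) ^ 2 / 2)
      (ω * (x - m)) x := by
    intro x
    have h4 := (hasDerivAt_const x (ω * ((h / 2) ^ 2 - (m - m) ^ 2) / 2)).add
      (((((hasDerivAt_id x).sub_const m).pow 2).const_mul ω).div_const 2)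
    refine h4.congr_deriv ?_
    simp only [id_eq]
    ring
  have hstep2 : ‖f (x₀ + h)‖ ≤ ω * ((h / 2) ^ 2 - (m - m) ^ 2) / 2 + ω * ((x₀ + h) - m) ^ 2 / 2 := by
    refine image_norm_le_of_norm_deriv_right_le_deriv_boundary
      (hfcont.continuousOn) (fun x hx => hfd x ⟨le_trans hx₀m hx.1, hx.2⟩)
      ?_ hB2 ?_ ⟨hmb, le_refl _⟩
    · simpa using hstep1
    · intro x hx
      have hxIcc : x ∈ Set.Icc x₀ (x₀ + h) := ⟨le_trans hx₀m hx.1, le_of_lt hx.2⟩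
      have hd : |x - m| ≤ h / 2 := by
        rw [abs_le]; constructor <;>
          simp only [hm] at hx ⊢ <;> [linarith [hx.1]; linarith [hx.2.le]]
      have hmod1 := hmod x hxIcc m hmmem hd
      rw [hf', Real.norm_eq_abs, abs_mul]
      have hxm : |x - m| = x - m := abs_of_nonneg (by linarith [hx.1])
      rw [hxm]
      have hnn : x - m ≥ 0 := by linarith [hx.1]
      calc (x - m) * |g' x - g' m| ≤ (x - m) * ω := mul_le_mul_of_nonneg_left hmod1 hnn
        _ = ω * (x - m) := by ring
  -- compute f at the right endpoint
  have hint : (∫ s in x₀..(x₀ + h), G s) = ∫ t in x₀..(x₀ + h), g t := by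
    apply intervalIntegral.integral_congr
    rw [Set.uIcc_of_le hab]
    exact hGeq
  have hfb : f (x₀ + h) = (g x₀ + g (x₀ + h)) / 2 * h - ∫ t in x₀..(x₀ + h), g t := by
    simp only [hf, hP]
    rw [hGeq (x₀ + h) ⟨hab, le_refl _⟩, hint]
    have hbm : x₀ + h - m = h / 2 := by simp only [hm]; ring
    rw [hbm]
    ring
  -- conclude
  have hkey : ‖f (x₀ + h)‖ ≤ ω * h ^ 2 / 4 := by
    refine hstep2.trans ?_
    have hbm : x₀ + h - m = h / 2 := by simp only [hm]; ring
    rw [hbm]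
    nlinarith
  have heq : (g x₀ + g (x₀ + h)) / 2 - (1 / h) * ∫ t in x₀..(x₀ + h), g t
      = f (x₀ + h) / h := by
    rw [hfb]
    field_simp
  rw [heq, abs_div, abs_of_pos hh]
  rw [div_le_iff₀ hh]
  rw [Real.norm_eq_abs] at hkey
  nlinarith
end

section
/- Let τ ∈ (0, T) and δ > 0 be fixed. Then Σ_{i : |t_i − τ| ≥ δ} (Δ_n/b_n) · |K′((t_{i−1} − τ)/b_n)| converges to 0 as n → ∞. -/
open MeasureTheory Filter Topology


lemma riemann_tail_bound (f : ℝ → ℝ) (hf : Integrable f)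
    (hBV : BoundedVariationOn f Set.univ)
    (c h r : ℝ) (hh : 0 < h) (n : ℕ) (S : Finset ℕ) (hS : S ⊆ Finset.range n)
    (hsub : ∀ i ∈ S, Set.Ico (c + i*h) (c + (i+1)*h) ⊆ {y : ℝ | r ≤ |y|}) :
    ∑ i ∈ S, h * |f (c + i*h)| ≤
      (∫ y in {y : ℝ | r ≤ |y|}, |f y|) + h * (eVariationOn f Set.univ).toReal := by
  set x : ℕ → ℝ := fun i => c + i*h with hx
  have hxmono : StrictMono x := by
    intro i j hij
    simp only [hx]
    have : (i:ℝ) < j := by exact_mod_cast hij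
    nlinarith
  have hxstep : ∀ i : ℕ, x (i+1) - x i = h := by
    intro i; simp only [hx]; push_cast; ring
  set e : ℕ → ENNReal := fun i => eVariationOn f (Set.Icc (x i) (x (i+1))) with he
  have hefin : ∀ i, e i ≠ ⊤ := by
    intro i
    exact ne_top_of_le_ne_top hBV (eVariationOn.mono f (Set.subset_univ _))
  have hmeasT : MeasurableSet {y : ℝ | r ≤ |y|} :=
    (isClosed_le continuous_const continuous_abs).measurableSet
  -- pointwise bound
  have step1 : ∀ i ∈ S, h * |f (x i)| ≤
      (∫ y in Set.Ico (x i) (x (i+1)), |f y|) + h * (e i).toReal := by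
    intro i _
    have hle : x i ≤ x (i+1) := (hxmono (Nat.lt_succ_self i)).le
    have hvol : volume (Set.Ico (x i) (x (i+1))) = ENNReal.ofReal h := by
      rw [Real.volume_Ico, hxstep]
    have hptwise : ∀ y ∈ Set.Ico (x i) (x (i+1)), |f (x i)| ≤ |f y| + (e i).toReal := by
      intro y hy
      have h1 : edist (f (x i)) (f y) ≤ e i :=
        eVariationOn.edist_le f (Set.mem_Icc.2 ⟨le_rfl, hle⟩)
          (Set.mem_Icc.2 ⟨hy.1, hy.2.le⟩)
      rw [edist_dist, Real.dist_eq] at h1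
      have h2 : |f (x i) - f y| ≤ (e i).toReal :=
        (ENNReal.ofReal_le_iff_le_toReal (hefin i)).1 h1
      calc |f (x i)| ≤ |f y| + |f (x i) - f y| := by
            have := abs_sub_abs_le_abs_sub (f (x i)) (f y); linarith [abs_nonneg (f (x i) - f y)]
        _ ≤ |f y| + (e i).toReal := by linarith
    have hconst : h * |f (x i)| = ∫ y in Set.Ico (x i) (x (i+1)), |f (x i)| := by
      rw [setIntegral_const, measureReal_def, hvol, ENNReal.toReal_ofReal hh.le, smul_eq_mul]
    rw [hconst]
    have hint1 : IntegrableOn (fun y => |f y| + (e i).toReal)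
        (Set.Ico (x i) (x (i+1))) volume := by
      exact (hf.abs.integrableOn).add (integrableOn_const (by rw [hvol]; exact ENNReal.ofReal_ne_top))
    calc (∫ y in Set.Ico (x i) (x (i+1)), |f (x i)|)
        ≤ ∫ y in Set.Ico (x i) (x (i+1)), (|f y| + (e i).toReal) := by
          apply setIntegral_mono_on _ hint1 measurableSet_Ico hptwise
          exact integrableOn_const (by rw [hvol]; exact ENNReal.ofReal_ne_top)
      _ = (∫ y in Set.Ico (x i) (x (i+1)), |f y|) + h * (e i).toReal := by
          rw [integral_add (hf.abs.integrableOn)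
            (integrableOn_const (by rw [hvol]; exact ENNReal.ofReal_ne_top))]
          rw [setIntegral_const, measureReal_def, hvol, ENNReal.toReal_ofReal hh.le, smul_eq_mul, mul_comm]
  -- sum of integrals
  have step2 : ∑ i ∈ S, (∫ y in Set.Ico (x i) (x (i+1)), |f y|) ≤
      ∫ y in {y : ℝ | r ≤ |y|}, |f y| := by
    rw [← integral_biUnion_finset S (fun i _ => measurableSet_Ico)
      (by
        intro i hi j hj hij
        simp only [Function.onFun]
        rw [Set.Ico_disjoint_Ico]
        rcases lt_or_gt_of_ne hij with hlt | hlt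
        · exact le_trans (min_le_left _ _)
            (le_trans (hxmono.monotone (Nat.succ_le_of_lt hlt)) (le_max_right _ _))
        · exact le_trans (min_le_right _ _)
            (le_trans (hxmono.monotone (Nat.succ_le_of_lt hlt)) (le_max_left _ _)))
      (fun i _ => hf.abs.integrableOn)]
    apply setIntegral_mono_set (hf.abs.integrableOn)
      (Filter.Eventually.of_forall fun y => abs_nonneg _)
    refine HasSubset.Subset.eventuallyLE (Set.iUnion₂_subset fun i hi => ?_)
    have := hsub i hi
    simp only [hx]
    convert this using 2
    · rfl
    push_cast; ring
  -- sum of variations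
  have key : ∀ m : ℕ, ∑ i ∈ Finset.range m, e i = eVariationOn f (Set.Icc (x 0) (x m)) := by
    intro m
    induction m with
    | zero =>
      rw [Finset.sum_range_zero, Set.Icc_self]
      exact (eVariationOn.subsingleton f Set.subsingleton_singleton).symm
    | succ m ih =>
      rw [Finset.sum_range_succ, ih]
      have h1 : x 0 ≤ x m := hxmono.monotone (Nat.zero_le m)
      have h2 : x m ≤ x (m+1) := (hxmono (Nat.lt_succ_self m)).le
      have := eVariationOn.Icc_add_Icc f (s := Set.univ) h1 h2 (Set.mem_univ (x m))
      simpa [Set.univ_inter] using this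
  have step3 : ∑ i ∈ S, (e i).toReal ≤ (eVariationOn f Set.univ).toReal := by
    rw [← ENNReal.toReal_sum (fun i _ => hefin i)]
    apply ENNReal.toReal_mono hBV
    calc ∑ i ∈ S, e i ≤ ∑ i ∈ Finset.range n, e i :=
          Finset.sum_le_sum_of_subset hS
      _ = eVariationOn f (Set.Icc (x 0) (x n)) := key n
      _ ≤ eVariationOn f Set.univ := eVariationOn.mono f (Set.subset_univ _)
  calc ∑ i ∈ S, h * |f (x i)|
      ≤ ∑ i ∈ S, ((∫ y in Set.Ico (x i) (x (i+1)), |f y|) + h * (e i).toReal) :=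
        Finset.sum_le_sum step1
    _ = (∑ i ∈ S, ∫ y in Set.Ico (x i) (x (i+1)), |f y|) + h * ∑ i ∈ S, (e i).toReal := by
        rw [Finset.sum_add_distrib, Finset.mul_sum]
    _ ≤ (∫ y in {y : ℝ | r ≤ |y|}, |f y|) + h * (eVariationOn f Set.univ).toReal := by
        gcongr

lemma tail_integral_tendsto (f : ℝ → ℝ) (hf : MeasureTheory.Integrable f) :
    Filter.Tendsto (fun R : ℝ => ∫ y in {y : ℝ | R ≤ |y|}, |f y|) Filter.atTop (nhds 0) := by
  have h := MeasureTheory.tendsto_setIntegral_of_antitone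
    (μ := MeasureTheory.volume) (f := fun y => |f y|)
    (s := fun R : ℝ => {y : ℝ | R ≤ |y|})
    (fun R => (isClosed_le continuous_const continuous_abs).measurableSet)
    (fun R R' hRR' y hy => le_trans hRR' hy)
    ⟨0, hf.abs.integrableOn⟩
  have hempty : ⋂ R : ℝ, {y : ℝ | R ≤ |y|} = ∅ := by
    ext y
    simp only [Set.mem_iInter, Set.mem_setOf_eq, Set.mem_empty_iff_false, iff_false, not_forall,
      not_le]
    exact ⟨|y| + 1, by linarith⟩
  rw [hempty] at h
  simpa using h


theorem stmt_7
    (T : ℝ) (hT : 0 < T)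
    (K K' : ℝ → ℝ)
    (A B : EReal) (hA : A ≤ 0) (hB : 0 ≤ B)
    (hKbdd : ∃ M : ℝ, ∀ x : ℝ, |K x| ≤ M)
    (hsupp : ∀ x : ℝ, ((x : EReal) ≤ A ∨ B ≤ (x : EReal)) → K x = 0)
    (hLip : ∃ C : NNReal,
      LipschitzOnWith C K {x : ℝ | A < (x : EReal) ∧ (x : EReal) < B})
    (hdiff : ∃ E : Finset ℝ,
      ∀ x ∈ {x : ℝ | A < (x : EReal) ∧ (x : EReal) < B} \ (E : Set ℝ),
        HasDerivAt K (K' x) x)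
    (hKint : Integrable K)
    (hK'int : Integrable K')
    (hK'BV : BoundedVariationOn K' Set.univ)
    (b : ℕ → ℝ) (hbpos : ∀ n, 0 < b n)
    (hb0 : Tendsto b atTop (𝓝 0))
    (hΔb : Tendsto (fun n : ℕ => (T / n) / b n) atTop (𝓝 0))
    (τ : ℝ) (hτ : τ ∈ Set.Ioo 0 T)
    (δ : ℝ) (hδpos : 0 < δ) :
    Tendsto (fun n : ℕ =>
        ∑ i ∈ (Finset.range n).filter
            (fun i : ℕ => δ ≤ |((i : ℝ) + 1) * (T / n) - τ|),
          ((T / n) / b n) * |K' (((i : ℝ) * (T / n) - τ) / b n)|)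
      atTop (𝓝 0) := by
  set V := (eVariationOn K' Set.univ).toReal with hV
  have hblim : Tendsto (fun n => δ / (2 * b n)) atTop atTop := by
    have h1 : Tendsto b atTop (𝓝[>] 0) :=
      tendsto_nhdsWithin_iff.2 ⟨hb0, Filter.Eventually.of_forall fun n => hbpos n⟩
    have h2 : Tendsto (fun n => (b n)⁻¹) atTop atTop := h1.inv_tendsto_nhdsGT_zero
    have h3 := h2.const_mul_atTop (by positivity : (0:ℝ) < δ/2)
    refine h3.congr fun n => ?_
    rw [← div_eq_mul_inv, div_div]
  have hg1 : Tendsto (fun n : ℕ => ∫ y in {y : ℝ | δ/(2*b n) ≤ |y|}, |K' y|) atTop (𝓝 0) :=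
    (tail_integral_tendsto K' hK'int).comp hblim
  have hg2 : Tendsto (fun n : ℕ => ((T/n)/b n) * V) atTop (𝓝 0) := by
    simpa using hΔb.mul_const V
  have hg : Tendsto (fun n : ℕ =>
      (∫ y in {y : ℝ | δ/(2*b n) ≤ |y|}, |K' y|) + ((T/n)/b n)*V) atTop (𝓝 0) := by
    simpa using hg1.add hg2
  apply tendsto_of_tendsto_of_tendsto_of_le_of_le' tendsto_const_nhds hg
  · filter_upwards with n
    apply Finset.sum_nonneg
    intro i _
    exact mul_nonneg (div_nonneg (div_nonneg hT.le (Nat.cast_nonneg n)) (hbpos n).le)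
      (abs_nonneg _)
  · have hev1 : ∀ᶠ n : ℕ in atTop, (1:ℕ) ≤ n := eventually_ge_atTop 1
    have hΔ0 : Tendsto (fun n : ℕ => T/(n:ℝ)) atTop (𝓝 0) :=
      tendsto_const_div_atTop_nhds_zero_nat T
    have hev2 : ∀ᶠ n : ℕ in atTop, T/(n:ℝ) ≤ δ/2 :=
      hΔ0.eventually_le_const (by positivity)
    filter_upwards [hev1, hev2] with n hn1 hn2
    have hnpos : (0:ℝ) < n := by exact_mod_cast hn1
    have hΔpos : 0 < T/(n:ℝ) := div_pos hT hnpos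
    have hbn := hbpos n
    have hhpos : 0 < (T/(n:ℝ)) / b n := div_pos hΔpos hbn
    have hsub : ∀ i ∈ (Finset.range n).filter
        (fun i : ℕ => δ ≤ |((i : ℝ) + 1) * (T / n) - τ|),
        Set.Ico (-τ/b n + (i:ℝ)*((T/(n:ℝ))/b n)) (-τ/b n + ((i:ℝ)+1)*((T/(n:ℝ))/b n)) ⊆
          {y : ℝ | δ/(2*b n) ≤ |y|} := by
      intro i hi y hy
      have hδi : δ ≤ |((i : ℝ) + 1) * (T / n) - τ| := (Finset.mem_filter.1 hi).2
      set z := ((i : ℝ) + 1) * (T / n) - τ with hz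
      have e1 : -τ/b n + (i:ℝ)*((T/(n:ℝ))/b n) = (z - T/(n:ℝ))/b n := by
        rw [hz]
        field_simp
        ring
      have e2 : -τ/b n + ((i:ℝ)+1)*((T/(n:ℝ))/b n) = z/b n := by
        rw [hz]
        field_simp
        ring
      rw [e1, e2] at hy
      have hy1 : z - T/(n:ℝ) ≤ y * b n := (div_le_iff₀ hbn).1 hy.1
      have hy2 : y * b n < z := (lt_div_iff₀ hbn).1 hy.2
      clear_value z
      show δ/(2*b n) ≤ |y|
      rw [div_le_iff₀ (by positivity : (0:ℝ) < 2 * b n)]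
      rcases le_abs.1 hδi with hc | hc
      · nlinarith [mul_nonneg (sub_nonneg.2 (le_abs_self y)) hbn.le]
      · nlinarith [mul_nonneg (sub_nonneg.2 (neg_le_abs y)) hbn.le]
    have key := riemann_tail_bound K' hK'int hK'BV (-τ/b n) ((T/(n:ℝ))/b n) (δ/(2*b n))
      hhpos n _ (Finset.filter_subset _ _) hsub
    refine le_trans (le_of_eq ?_) key
    apply Finset.sum_congr rfl
    intro i _
    have harg : ((i : ℝ) * (T / n) - τ) / b n = -τ/b n + (i:ℝ)*((T/(n:ℝ))/b n) := by
      field_simp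
      ring
    rw [harg]
end

section
/- Let φ : [0,T] → ℝ be continuous, let t ∈ (0, T), and let τ_n ∈ (0, T) be a sequence with τ_n → t. Then (1/b_n) · ∫_{τ_n}^T ∫_0^{τ_n} K_{b_n}(s − ϖ) · φ(ϖ) dϖ ds converges, as n → ∞, to φ(t) · ∫_0^∞ L(v) dv. -/
open MeasureTheory Filter Topology

noncomputable def Lfun (K : ℝ → ℝ) (t : ℝ) : ℝ :=
  if 0 < t then ∫ u in Set.Ioi t, K u else -∫ u in Set.Iic t, K u

noncomputable def Mabs (K : ℝ → ℝ) (v : ℝ) : ℝ := ∫ u in Set.Ioi v, |K u|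

lemma Mabs_nonneg (K : ℝ → ℝ) (v : ℝ) : 0 ≤ Mabs K v :=
  setIntegral_nonneg measurableSet_Ioi fun _ _ => abs_nonneg _

lemma Mabs_anti {K : ℝ → ℝ} (hKint : Integrable K) : Antitone (Mabs K) := by
  intro v w hvw
  exact setIntegral_mono_set hKint.abs.integrableOn
    (Filter.Eventually.of_forall fun x => abs_nonneg _)
    (HasSubset.Subset.eventuallyLE (Set.Ioi_subset_Ioi hvw))

lemma Mabs_le (K : ℝ → ℝ) (hKint : Integrable K) (v : ℝ) : Mabs K v ≤ ∫ u, |K u| :=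
  setIntegral_le_integral hKint.abs (Filter.Eventually.of_forall fun x => abs_nonneg _)

lemma abs_Lfun_le {K : ℝ → ℝ} {v : ℝ} (hv : 0 < v) : |Lfun K v| ≤ Mabs K v := by
  rw [Lfun, if_pos hv]
  simpa [Real.norm_eq_abs, Mabs] using
    norm_integral_le_integral_norm (μ := volume.restrict (Set.Ioi v)) K

lemma Lfun_sub {K : ℝ → ℝ} (hKint : Integrable K) {p q : ℝ} (hp : 0 < p) (hpq : p ≤ q) :
    Lfun K p - Lfun K q = ∫ u in p..q, K u := by
  have hq : 0 < q := hp.trans_le hpq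
  rw [Lfun, Lfun, if_pos hp, if_pos hq, intervalIntegral.integral_of_le hpq,
    ← Set.Ioc_union_Ioi_eq_Ioi hpq,
    setIntegral_union (Set.Ioc_disjoint_Ioi le_rfl) measurableSet_Ioi
      hKint.integrableOn hKint.integrableOn]
  ring

lemma tail_bound (K : ℝ → ℝ) (ε : ℝ)
    (hdecay : Tendsto (fun x : ℝ => |x| ^ (2 + ε) * K x) (Filter.cocompact ℝ) (𝓝 0)) :
    ∃ R : ℝ, 1 ≤ R ∧ ∀ x : ℝ, R ≤ x → |K x| ≤ x ^ (-(2 + ε)) := by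
  have hat : Tendsto (fun x : ℝ => |x| ^ (2 + ε) * K x) atTop (𝓝 0) :=
    hdecay.mono_left (by rw [cocompact_eq_atBot_atTop]; exact le_sup_right)
  have h1 : ∀ᶠ x : ℝ in atTop, abs (|x| ^ (2 + ε) * K x) < 1 := by
    have := hat.eventually (Metric.ball_mem_nhds (0:ℝ) one_pos)
    simpa only [Real.dist_eq, sub_zero] using this
  rw [eventually_atTop] at h1
  obtain ⟨R₀, hR₀⟩ := h1
  refine ⟨max R₀ 1, le_max_right _ _, fun x hx => ?_⟩
  have hx1 : (1:ℝ) ≤ x := le_trans (le_max_right _ _) hx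
  have hx0 : 0 < x := lt_of_lt_of_le one_pos hx1
  have h2 := hR₀ x (le_trans (le_max_left _ _) hx)
  have habs : |x| = x := abs_of_pos hx0
  rw [habs, abs_mul, abs_of_pos (Real.rpow_pos_of_pos hx0 _)] at h2
  have hpow : 0 < x ^ (2 + ε) := Real.rpow_pos_of_pos hx0 _
  rw [Real.rpow_neg hx0.le]
  rw [inv_eq_one_div, le_div_iff₀ hpow, mul_comm]
  exact h2.le

lemma Mabs_tail {K : ℝ → ℝ} (hKint : Integrable K) {ε R : ℝ} (hε : 0 < ε) (hR : 1 ≤ R)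
    (hbd : ∀ x : ℝ, R ≤ x → |K x| ≤ x ^ (-(2 + ε))) {v : ℝ} (hv : R ≤ v) :
    Mabs K v ≤ v ^ (-(1 + ε)) / (1 + ε) := by
  have hv0 : 0 < v := lt_of_lt_of_le one_pos (hR.trans hv)
  have ha : -(2 + ε) < -1 := by linarith
  have h1 : Mabs K v ≤ ∫ u in Set.Ioi v, u ^ (-(2 + ε)) := by
    apply setIntegral_mono_on hKint.abs.integrableOn
      (integrableOn_Ioi_rpow_of_lt ha hv0) measurableSet_Ioi
    intro x hx
    exact hbd x (hv.trans (le_of_lt hx))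
  rw [integral_Ioi_rpow_of_lt ha hv0] at h1
  have he : -v ^ (-(2 + ε) + 1) / (-(2 + ε) + 1) = v ^ (-(1 + ε)) / (1 + ε) := by
    rw [show (-(2 + ε) + 1) = -(1 + ε) by ring, neg_div_neg_eq]
  rwa [he] at h1

lemma Mabs_integrableOn {K : ℝ → ℝ} (hKint : Integrable K) {ε R : ℝ} (hε : 0 < ε) (hR : 1 ≤ R)
    (hbd : ∀ x : ℝ, R ≤ x → |K x| ≤ x ^ (-(2 + ε))) :
    IntegrableOn (Mabs K) (Set.Ioi 0) := by
  have hR0 : (0:ℝ) < R := lt_of_lt_of_le one_pos hR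
  have hmeas : Measurable (Mabs K) := (Mabs_anti hKint).measurable
  have h1 : IntegrableOn (Mabs K) (Set.Ioc 0 R) := by
    apply Integrable.mono' (integrable_const (∫ u, |K u|)) hmeas.aestronglyMeasurable.restrict
    refine Filter.Eventually.of_forall fun v => ?_
    rw [Real.norm_eq_abs, abs_of_nonneg (Mabs_nonneg K v)]
    exact Mabs_le K hKint v
  have h2 : IntegrableOn (Mabs K) (Set.Ioi R) := by
    apply Integrable.mono'
      ((integrableOn_Ioi_rpow_of_lt (by linarith : -(1+ε) < -1) hR0).div_const (1 + ε))
      hmeas.aestronglyMeasurable.restrict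
    rw [ae_restrict_iff' measurableSet_Ioi]
    refine Filter.Eventually.of_forall fun v hv => ?_
    rw [Real.norm_eq_abs, abs_of_nonneg (Mabs_nonneg K v)]
    exact Mabs_tail hKint hε hR hbd (le_of_lt hv)
  have : Set.Ioi (0:ℝ) = Set.Ioc 0 R ∪ Set.Ioi R := (Set.Ioc_union_Ioi_eq_Ioi hR0.le).symm
  rw [this]
  exact h1.union h2

lemma Mabs_tendsto {K : ℝ → ℝ} (hKint : Integrable K) {ε R : ℝ} (hε : 0 < ε) (hR : 1 ≤ R)
    (hbd : ∀ x : ℝ, R ≤ x → |K x| ≤ x ^ (-(2 + ε))) :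
    Tendsto (Mabs K) atTop (𝓝 0) := by
  apply squeeze_zero' (Filter.Eventually.of_forall (Mabs_nonneg K))
    (Filter.eventually_atTop.2 ⟨R, fun v hv => Mabs_tail hKint hε hR hbd hv⟩)
  have h := (tendsto_rpow_neg_atTop (by linarith : (0:ℝ) < 1 + ε)).div_const (1 + ε)
  simpa using h

lemma Lfun_tendsto {K : ℝ → ℝ} (hKint : Integrable K) {ε R : ℝ} (hε : 0 < ε) (hR : 1 ≤ R)
    (hbd : ∀ x : ℝ, R ≤ x → |K x| ≤ x ^ (-(2 + ε))) :
    Tendsto (Lfun K) atTop (𝓝 0) := by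
  apply squeeze_zero_norm' _ (Mabs_tendsto hKint hε hR hbd)
  refine Filter.eventually_atTop.2 ⟨1, fun v hv => ?_⟩
  rw [Real.norm_eq_abs]
  exact abs_Lfun_le (lt_of_lt_of_le one_pos hv)

lemma Lfun_continuousOn {K : ℝ → ℝ} (hKint : Integrable K) :
    ContinuousOn (Lfun K) (Set.Ioi 0) := by
  have hprim : Continuous (fun v => ∫ u in (1:ℝ)..v, K u) :=
    intervalIntegral.continuous_primitive (fun a b => hKint.intervalIntegrable) 1
  apply ContinuousOn.congr ((continuous_const.sub hprim).continuousOn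
    (s := Set.Ioi 0) (f := fun v => Lfun K 1 - ∫ u in (1:ℝ)..v, K u))
  intro v hv
  rcases le_total 1 v with h | h
  · have := Lfun_sub hKint one_pos h
    simp only []; linarith [this]
  · have := Lfun_sub hKint (Set.mem_Ioi.mp hv) h
    rw [intervalIntegral.integral_symm] at this
    simp only []; linarith [this]

lemma key_eq (K : ℝ → ℝ) (hK : Measurable K) (hKint : Integrable K)
    (ψ : ℝ → ℝ) (hψ : Continuous ψ) (C : ℝ) (hψC : ∀ x, |ψ x| ≤ C)
    {T β σ : ℝ} (hβ : 0 < β) (hσ : 0 < σ) (hσT : σ < T) :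
    (1 / β) * ∫ s in σ..T, ∫ ϖ in (0:ℝ)..σ, kb K β (s - ϖ) * ψ ϖ
      = ∫ v in Set.Ioi (0:ℝ), Set.indicator (Set.Ioc 0 (σ / β))
          (fun v => ψ (σ - β * v) * (Lfun K v - Lfun K ((T - σ) / β + v))) v := by
  have hβ' : β ≠ 0 := hβ.ne'
  have hKb : Integrable (fun x : ℝ => K (x / β)) := hKint.comp_div hβ'
  have hKbm : Measurable (fun x : ℝ => K (x / β)) := hK.comp (measurable_id.div_const β)
  -- integrability on the product
  have hgm : Measurable (fun p : ℝ × ℝ => K ((p.1 - p.2) / β)) :=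
    hK.comp ((measurable_fst.sub measurable_snd).div_const β)
  have hsec : ∀ s : ℝ, Integrable (fun ϖ : ℝ => K ((s - ϖ) / β)) := by
    intro s
    have := ((Measure.measurePreserving_sub_left volume s).integrable_comp
      hKb.aestronglyMeasurable).2 hKb
    exact this
  have hg : Integrable (fun p : ℝ × ℝ => K ((p.1 - p.2) / β))
      ((volume.restrict (Set.Ioc σ T)).prod (volume.restrict (Set.Ioc 0 σ))) := by
    rw [integrable_prod_iff hgm.aestronglyMeasurable]
    constructor
    · exact Filter.Eventually.of_forall fun s => (hsec s).integrableOn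
    · apply Integrable.mono' (integrable_const (|β| * ∫ u, |K u|))
      · exact AEStronglyMeasurable.integral_prod_right'
          (f := fun p : ℝ × ℝ => ‖K ((p.1 - p.2) / β)‖) hgm.norm.aestronglyMeasurable
      · refine Filter.Eventually.of_forall fun s => ?_
        have hnn : 0 ≤ ∫ ϖ in Set.Ioc 0 σ, ‖K ((s - ϖ) / β)‖ :=
          integral_nonneg fun _ => norm_nonneg _
        rw [Real.norm_eq_abs, abs_of_nonneg hnn]
        have h1 : ∫ ϖ in Set.Ioc 0 σ, ‖K ((s - ϖ) / β)‖ ≤ ∫ ϖ, ‖K ((s - ϖ) / β)‖ :=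
          setIntegral_le_integral (hsec s).norm
            (Filter.Eventually.of_forall fun _ => norm_nonneg _)
        have h2 : ∫ ϖ, ‖K ((s - ϖ) / β)‖ = |β| * ∫ u, |K u| := by
          have e1 : ∫ ϖ, ‖K ((s - ϖ) / β)‖ = ∫ x, ‖K (x / β)‖ :=
            integral_sub_left_eq_self (fun x => ‖K (x / β)‖) volume s
          rw [e1]
          have e2 := MeasureTheory.Measure.integral_comp_div (fun x => ‖K x‖) β
          simpa [Real.norm_eq_abs, smul_eq_mul] using e2
        linarith
  have hint : Integrable (Function.uncurry fun s ϖ => kb K β (s - ϖ) * ψ ϖ)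
      ((volume.restrict (Set.Ioc σ T)).prod (volume.restrict (Set.Ioc 0 σ))) := by
    have hb : Integrable (fun p : ℝ × ℝ => ψ p.2 * (K ((p.1 - p.2) / β) / β))
        ((volume.restrict (Set.Ioc σ T)).prod (volume.restrict (Set.Ioc 0 σ))) := by
      apply Integrable.bdd_mul (c := C) (hg.div_const β)
        ((hψ.comp continuous_snd).aestronglyMeasurable)
      exact Filter.Eventually.of_forall fun p => by simpa [Real.norm_eq_abs] using hψC p.2
    apply hb.congr
    refine Filter.Eventually.of_forall fun p => ?_
    simp only [Function.uncurry, kb]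
    ring
  -- inner integral computation
  have e3 : ∀ ϖ : ℝ, (∫ s in σ..T, kb K β (s - ϖ) * ψ ϖ)
      = ψ ϖ * ∫ u in (σ - ϖ)/β..(T - ϖ)/β, K u := by
    intro ϖ
    have h0 : (fun s => kb K β (s - ϖ) * ψ ϖ)
        = fun s => ψ ϖ * ((fun x => K (x / β)) (s - ϖ) / β) := by
      funext s; simp only [kb]; ring
    rw [h0, intervalIntegral.integral_const_mul]
    congr 1
    rw [intervalIntegral.integral_div,
      intervalIntegral.integral_comp_sub_right (fun x => K (x / β)) ϖ,
      intervalIntegral.integral_comp_div (f := K) hβ', smul_eq_mul,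
      mul_div_cancel_left₀ _ hβ']
  have hσβ : 0 ≤ σ / β := div_nonneg hσ.le hβ.le
  have hTσβ : 0 ≤ (T - σ) / β := div_nonneg (by linarith) hβ.le
  calc (1 / β) * ∫ s in σ..T, ∫ ϖ in (0:ℝ)..σ, kb K β (s - ϖ) * ψ ϖ
      = (1 / β) * ∫ ϖ in (0:ℝ)..σ, ∫ s in σ..T, kb K β (s - ϖ) * ψ ϖ := by
        rw [intervalIntegral.integral_of_le hσT.le, intervalIntegral.integral_of_le hσ.le]
        simp_rw [intervalIntegral.integral_of_le hσ.le,
          intervalIntegral.integral_of_le hσT.le]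
        rw [MeasureTheory.integral_integral_swap hint]
    _ = (1 / β) * ∫ ϖ in (0:ℝ)..σ, ψ ϖ * ∫ u in (σ - ϖ)/β..(T - ϖ)/β, K u := by
        rw [intervalIntegral.integral_congr (fun ϖ _ => e3 ϖ)]
    _ = ∫ v in (0:ℝ)..(σ/β), ψ (σ - β * v) *
          ∫ u in (σ - (σ - β * v))/β..(T - (σ - β * v))/β, K u := by
        have h1 := intervalIntegral.integral_comp_mul_left
          (f := fun x => ψ (σ - x) * ∫ u in (σ - (σ - x))/β..(T - (σ - x))/β, K u)
          (a := (0:ℝ)) (b := σ/β) hβ'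
        have h2 := intervalIntegral.integral_comp_sub_left
          (f := fun y => ψ y * ∫ u in (σ - y)/β..(T - y)/β, K u)
          (a := (0:ℝ)) (b := σ) σ
        simp only [mul_zero, mul_div_cancel₀ _ hβ', sub_self, sub_zero, smul_eq_mul] at h1 h2
        rw [h1, h2, one_div]
    _ = ∫ v in (0:ℝ)..(σ/β), ψ (σ - β * v) * ∫ u in v..((T - σ)/β + v), K u := by
        apply intervalIntegral.integral_congr
        intro v _
        simp only []
        rw [show (σ - (σ - β * v))/β = v from by field_simp; ring,
          show (T - (σ - β * v))/β = (T - σ)/β + v from by field_simp; ring]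
    _ = ∫ v in Set.Ioc 0 (σ/β), ψ (σ - β * v) * ∫ u in v..((T - σ)/β + v), K u :=
        intervalIntegral.integral_of_le hσβ
    _ = ∫ v in Set.Ioc 0 (σ/β), ψ (σ - β * v) * (Lfun K v - Lfun K ((T - σ)/β + v)) := by
        apply setIntegral_congr_fun measurableSet_Ioc
        intro v hv
        simp only []
        rw [← Lfun_sub hKint hv.1 (le_add_of_nonneg_left hTσβ)]
    _ = ∫ v in Set.Ioi (0:ℝ), Set.indicator (Set.Ioc 0 (σ / β))
          (fun v => ψ (σ - β * v) * (Lfun K v - Lfun K ((T - σ) / β + v))) v := by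
        rw [setIntegral_indicator measurableSet_Ioc,
          Set.inter_eq_self_of_subset_right Set.Ioc_subset_Ioi_self]


theorem stmt_9
    (T : ℝ) (hT : 0 < T)
    (K : ℝ → ℝ) (hK : Measurable K) (hKint : Integrable K)
    (ε : ℝ) (hε : 1 / 2 < ε)
    (hdecay : Tendsto (fun x : ℝ => |x| ^ (2 + ε) * K x) (Filter.cocompact ℝ) (𝓝 0))
    (b : ℕ → ℝ) (hbpos : ∀ n, 0 < b n) (hb0 : Tendsto b atTop (𝓝 0))
    (φ : ℝ → ℝ) (hφ : ContinuousOn φ (Set.Icc 0 T))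
    (t : ℝ) (ht : t ∈ Set.Ioo 0 T)
    (τ : ℕ → ℝ) (hτmem : ∀ n, τ n ∈ Set.Ioo 0 T) (hτ : Tendsto τ atTop (𝓝 t)) :
    Tendsto (fun n : ℕ =>
        (1 / b n) *
          ∫ s in (τ n)..T, ∫ ϖ in (0:ℝ)..(τ n), kb K (b n) (s - ϖ) * φ ϖ)
      atTop (𝓝 (φ t * ∫ v in Set.Ioi (0:ℝ), Lfun K v)) := by
  obtain ⟨ht0, htT⟩ := ht
  have hε0 : (0:ℝ) < ε := by linarith
  -- continuous bounded extension of φ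
  set ψ : ℝ → ℝ := Set.IccExtend hT.le ((Set.Icc (0:ℝ) T).restrict φ) with hψdef
  have hψcont : Continuous ψ :=
    Continuous.Icc_extend' (continuousOn_iff_continuous_restrict.mp hφ)
  have hψeq : ∀ x ∈ Set.Icc 0 T, ψ x = φ x := fun x hx => by
    rw [hψdef, Set.IccExtend_of_mem hT.le _ hx]; rfl
  obtain ⟨C₀, hC₀⟩ := (isCompact_Icc (a := (0:ℝ)) (b := T)).exists_bound_of_continuousOn hφ
  have hψC : ∀ x, |ψ x| ≤ C₀ := by
    intro x
    rw [hψdef]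
    rw [Set.IccExtend_apply]
    exact hC₀ _ (Set.projIcc 0 T hT.le x).2
  have hC₀0 : 0 ≤ C₀ := le_trans (abs_nonneg _) (hψC 0)
  -- tail bound for K
  obtain ⟨R, hR1, hbd⟩ := tail_bound K ε hdecay
  -- the indicator functions
  set F : ℕ → ℝ → ℝ := fun n => Set.indicator (Set.Ioc 0 (τ n / b n))
    (fun v => ψ (τ n - b n * v) * (Lfun K v - Lfun K ((T - τ n) / b n + v))) with hFdef
  -- the key identity
  have key : ∀ n, (1 / b n) *
      (∫ s in (τ n)..T, ∫ ϖ in (0:ℝ)..(τ n), kb K (b n) (s - ϖ) * φ ϖ)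
      = ∫ v in Set.Ioi (0:ℝ), F n v := by
    intro n
    have h1 : (∫ s in (τ n)..T, ∫ ϖ in (0:ℝ)..(τ n), kb K (b n) (s - ϖ) * φ ϖ)
        = ∫ s in (τ n)..T, ∫ ϖ in (0:ℝ)..(τ n), kb K (b n) (s - ϖ) * ψ ϖ := by
      apply intervalIntegral.integral_congr
      intro s _
      apply intervalIntegral.integral_congr
      intro ϖ hϖ
      rw [Set.uIcc_of_le (hτmem n).1.le] at hϖ
      simp only []
      rw [hψeq ϖ ⟨hϖ.1, hϖ.2.trans (hτmem n).2.le⟩]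
    rw [h1]
    exact key_eq K hK hKint ψ hψcont C₀ hψC (hbpos n) (hτmem n).1 (hτmem n).2
  -- limits of auxiliary sequences
  have hbinv : Tendsto (fun n => (b n)⁻¹) atTop atTop := by
    apply tendsto_inv_nhdsGT_zero.comp
    exact tendsto_nhdsWithin_iff.mpr ⟨hb0, Filter.Eventually.of_forall fun n => hbpos n⟩
  have hτb_top : Tendsto (fun n => τ n / b n) atTop atTop := by
    apply tendsto_atTop_mono' atTop (f₁ := fun n => (t/2) * (b n)⁻¹)
    · filter_upwards [hτ.eventually (eventually_ge_nhds (by linarith : t/2 < t))] with n hn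
      rw [div_eq_mul_inv]
      exact mul_le_mul_of_nonneg_right hn (inv_nonneg.mpr (hbpos n).le)
    · exact Tendsto.const_mul_atTop (by linarith) hbinv
  have hcb_top : Tendsto (fun n => (T - τ n) / b n) atTop atTop := by
    apply tendsto_atTop_mono' atTop (f₁ := fun n => ((T - t)/2) * (b n)⁻¹)
    · have : Tendsto (fun n => T - τ n) atTop (𝓝 (T - t)) := tendsto_const_nhds.sub hτ
      filter_upwards [this.eventually (eventually_ge_nhds (by linarith : (T - t)/2 < T - t))]
        with n hn
      rw [div_eq_mul_inv]
      exact mul_le_mul_of_nonneg_right hn (inv_nonneg.mpr (hbpos n).le)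
    · exact Tendsto.const_mul_atTop (by linarith) hbinv
  -- dominated convergence
  have hdct : Tendsto (fun n => ∫ v in Set.Ioi (0:ℝ), F n v) atTop
      (𝓝 (∫ v in Set.Ioi (0:ℝ), ψ t * Lfun K v)) := by
    apply MeasureTheory.tendsto_integral_of_dominated_convergence
      (bound := fun v => C₀ * (2 * Mabs K v))
    · -- measurability
      intro n
      simp only [hFdef]
      apply (aestronglyMeasurable_indicator_iff measurableSet_Ioc).mpr
      rw [Measure.restrict_restrict measurableSet_Ioc,
        Set.inter_eq_self_of_subset_left Set.Ioc_subset_Ioi_self]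
      apply ContinuousOn.aestronglyMeasurable _ measurableSet_Ioc
      apply ContinuousOn.mul
      · exact (hψcont.comp (continuous_const.sub (continuous_const.mul continuous_id))).continuousOn
      · apply ContinuousOn.sub
        · exact (Lfun_continuousOn hKint).mono Set.Ioc_subset_Ioi_self
        · apply (Lfun_continuousOn hKint).comp
            ((continuous_const.add continuous_id).continuousOn)
          intro v hv
          have : 0 ≤ (T - τ n) / b n := div_nonneg (by linarith [(hτmem n).2]) (hbpos n).le
          exact Set.mem_Ioi.mpr (by have := hv.1; dsimp; linarith)
    · -- integrability of the bound
      exact ((Mabs_integrableOn hKint hε0 hR1 hbd).const_mul 2).const_mul C₀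
    · -- norm bound
      intro n
      rw [ae_restrict_iff' measurableSet_Ioi]
      refine Filter.Eventually.of_forall fun v hv => ?_
      simp only [hFdef]
      by_cases hmem : v ∈ Set.Ioc 0 (τ n / b n)
      · rw [Set.indicator_of_mem hmem]
        have hv0 : 0 < v := hmem.1
        have hc0 : 0 ≤ (T - τ n) / b n := div_nonneg (by linarith [(hτmem n).2]) (hbpos n).le
        have hcv : 0 < (T - τ n) / b n + v := by linarith
        have h1 : |Lfun K v - Lfun K ((T - τ n) / b n + v)| ≤ Mabs K v + Mabs K ((T - τ n) / b n + v) := by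
          calc |Lfun K v - Lfun K ((T - τ n) / b n + v)|
              ≤ |Lfun K v| + |Lfun K ((T - τ n) / b n + v)| := abs_sub _ _
            _ ≤ Mabs K v + Mabs K ((T - τ n) / b n + v) :=
                add_le_add (abs_Lfun_le hv0) (abs_Lfun_le hcv)
        have h2 : Mabs K ((T - τ n) / b n + v) ≤ Mabs K v :=
          Mabs_anti hKint (by linarith)
        rw [Real.norm_eq_abs, abs_mul]
        calc |ψ (τ n - b n * v)| * |Lfun K v - Lfun K ((T - τ n) / b n + v)|
            ≤ C₀ * (Mabs K v + Mabs K ((T - τ n) / b n + v)) :=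
              mul_le_mul (hψC _) h1 (abs_nonneg _) hC₀0
          _ ≤ C₀ * (2 * Mabs K v) := by
              have := Mabs_nonneg K v
              nlinarith
      · rw [Set.indicator_of_notMem hmem]
        simp only [norm_zero]
        have := Mabs_nonneg K v
        positivity
    · -- pointwise convergence
      rw [ae_restrict_iff' measurableSet_Ioi]
      refine Filter.Eventually.of_forall fun v hv => ?_
      have hv0 : 0 < v := hv
      have hev : ∀ᶠ n in atTop, F n v
          = ψ (τ n - b n * v) * (Lfun K v - Lfun K ((T - τ n) / b n + v)) := by
        filter_upwards [hτb_top.eventually_ge_atTop v] with n hn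
        simp only [hFdef]
        exact Set.indicator_of_mem (Set.mem_Ioc.mpr ⟨hv0, hn⟩) _
      have h1 : Tendsto (fun n => ψ (τ n - b n * v)) atTop (𝓝 (ψ t)) := by
        have harg : Tendsto (fun n => τ n - b n * v) atTop (𝓝 t) := by
          have := hτ.sub (hb0.mul_const v)
          simpa using this
        exact (hψcont.tendsto t).comp harg
      have h2 : Tendsto (fun n => Lfun K ((T - τ n) / b n + v)) atTop (𝓝 0) := by
        apply (Lfun_tendsto hKint hε0 hR1 hbd).comp
        exact tendsto_atTop_add_const_right atTop v hcb_top
      have h3 : Tendsto (fun n => ψ (τ n - b n * v) * (Lfun K v - Lfun K ((T - τ n) / b n + v)))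
          atTop (𝓝 (ψ t * (Lfun K v - 0))) := h1.mul (tendsto_const_nhds.sub h2)
      rw [sub_zero] at h3
      exact h3.congr' (hev.mono fun n hn => hn.symm)
  -- conclusion
  have hfinal : (∫ v in Set.Ioi (0:ℝ), ψ t * Lfun K v) = φ t * ∫ v in Set.Ioi (0:ℝ), Lfun K v := by
    rw [integral_const_mul, hψeq t ⟨ht0.le, htT.le⟩]
  rw [hfinal] at hdct
  exact hdct.congr fun n => (key n).symm
end

section
/- Suppose K : ℝ → ℝ is measurable with ∫_ℝ |K(x)| dx < ∞ and |x|^{2+ε} K(x) → 0 as |x| → ∞ for some ε > 1/2. Then ∫_ℝ L(u)² · |u| du < ∞ and ∫_ℝ |L(u)| · |u|^{1/2} du < ∞. -/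
open MeasureTheory Filter Topology

theorem stmt_12
    (K : ℝ → ℝ) (hK : Measurable K) (hKint : Integrable K)
    (ε : ℝ) (hε : 1 / 2 < ε)
    (hdecay : Tendsto (fun x : ℝ => |x| ^ (2 + ε) * K x) (Filter.cocompact ℝ) (𝓝 0)) :
    Integrable (fun u : ℝ => (Lfun K u) ^ 2 * |u|) ∧
      Integrable (fun u : ℝ => |Lfun K u| * Real.sqrt |u|) := by
  have hε0 : (0:ℝ) < ε := by linarith
  -- measurability of Lfun K
  have hF : Continuous fun t => ∫ u in Set.Iic t, K u := by
    have h1 : Continuous fun t => ∫ u in (0:ℝ)..t, K u := hKint.continuous_primitive 0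
    have h2 : ∀ t : ℝ, (∫ u in Set.Iic t, K u)
        = (∫ u in Set.Iic (0:ℝ), K u) + ∫ u in (0:ℝ)..t, K u := by
      intro t
      rw [← intervalIntegral.integral_Iic_sub_Iic hKint.integrableOn hKint.integrableOn]
      ring
    rw [show (fun t : ℝ => ∫ u in Set.Iic t, K u)
        = fun t => (∫ u in Set.Iic (0:ℝ), K u) + ∫ u in (0:ℝ)..t, K u from funext h2]
    exact continuous_const.add h1
  have hGF : ∀ t : ℝ, (∫ u in Set.Ioi t, K u) = (∫ u, K u) - ∫ u in Set.Iic t, K u := by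
    intro t
    rw [← intervalIntegral.integral_Iic_add_Ioi (b := t) hKint.integrableOn hKint.integrableOn]
    ring
  have hLmeas : Measurable (Lfun K) := by
    have hG : Measurable fun t => ∫ u in Set.Ioi t, K u := by
      simp only [hGF]
      exact (continuous_const.sub hF).measurable
    exact Measurable.ite measurableSet_Ioi hG hF.measurable.neg
  -- boundedness of Lfun K
  set M : ℝ := ∫ u, |K u| with hMdef
  have hKabs : Integrable fun u : ℝ => |K u| := hKint.abs
  have hM : ∀ t : ℝ, |Lfun K t| ≤ M := by
    intro t
    unfold Lfun
    split
    · refine (norm_integral_le_integral_norm K).trans ?_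
      simp only [Real.norm_eq_abs]
      exact setIntegral_le_integral hKabs (Filter.Eventually.of_forall fun u => abs_nonneg _)
    · rw [abs_neg]
      refine (norm_integral_le_integral_norm K).trans ?_
      simp only [Real.norm_eq_abs]
      exact setIntegral_le_integral hKabs (Filter.Eventually.of_forall fun u => abs_nonneg _)
  have hM0 : 0 ≤ M := integral_nonneg fun u => abs_nonneg _
  -- extract decay radius
  have hev : ∀ᶠ x : ℝ in Filter.cocompact ℝ, ‖|x| ^ (2 + ε) * K x‖ < 1 :=
    NormedAddCommGroup.tendsto_nhds_zero.mp hdecay 1 one_pos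
  rw [cocompact_eq_atBot_atTop, Filter.eventually_sup] at hev
  obtain ⟨hbot, htop⟩ := hev
  obtain ⟨R2, hR2⟩ := Filter.eventually_atBot.mp hbot
  obtain ⟨R1, hR1⟩ := Filter.eventually_atTop.mp htop
  set R : ℝ := max 1 (max R1 (-R2)) with hRdef
  have hR1le : (1:ℝ) ≤ R := le_max_left _ _
  have hR0 : (0:ℝ) < R := lt_of_lt_of_le one_pos hR1le
  -- pointwise decay bound on K
  have hKbound : ∀ x : ℝ, R ≤ |x| → |K x| ≤ |x| ^ (-(2 + ε)) := by
    intro x hx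
    have hx1 : (1:ℝ) ≤ |x| := hR1le.trans hx
    have hx0 : (0:ℝ) < |x| := lt_of_lt_of_le one_pos hx1
    have hlt : ‖|x| ^ (2 + ε) * K x‖ < 1 := by
      rcases le_or_gt 0 x with hxs | hxs
      · refine hR1 x ?_
        refine le_trans ?_ ((abs_of_nonneg hxs) ▸ hx)
        exact (le_max_left R1 (-R2)).trans (le_max_right _ _)
      · refine hR2 x ?_
        have : -R2 ≤ -x := le_trans ((le_max_right R1 (-R2)).trans (le_max_right _ _))
          ((abs_of_neg hxs) ▸ hx)
        linarith
    have hpow : (0:ℝ) < |x| ^ (2 + ε) := Real.rpow_pos_of_pos hx0 _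
    rw [Real.norm_eq_abs, abs_mul, abs_of_nonneg (Real.rpow_nonneg (abs_nonneg x) _)] at hlt
    rw [Real.rpow_neg (abs_nonneg x), ← one_div, le_div_iff₀ hpow]
    linarith [mul_comm (|x| ^ (2 + ε)) (|K x|)]
  -- tail bound, positive side
  have tail_pos : ∀ t : ℝ, R ≤ t → |∫ u in Set.Ioi t, K u| ≤ t ^ (-(1 + ε)) := by
    intro t ht
    have ht0 : (0:ℝ) < t := lt_of_lt_of_le hR0 ht
    have h1 : |∫ u in Set.Ioi t, K u| ≤ ∫ u in Set.Ioi t, |K u| := by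
      simpa [Real.norm_eq_abs] using norm_integral_le_integral_norm (μ := volume.restrict (Set.Ioi t)) K
    have hint2 : IntegrableOn (fun u : ℝ => u ^ (-(2 + ε))) (Set.Ioi t) :=
      integrableOn_Ioi_rpow_of_lt (by linarith) ht0
    have h2 : (∫ u in Set.Ioi t, |K u|) ≤ ∫ u in Set.Ioi t, u ^ (-(2 + ε)) := by
      refine setIntegral_mono_on hKabs.integrableOn hint2 measurableSet_Ioi ?_
      intro u hu
      have hu0 : t < u := hu
      have habs : |u| = u := abs_of_pos (lt_trans ht0 hu0)
      have := hKbound u (by rw [habs]; exact le_of_lt (lt_of_le_of_lt ht hu0))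
      rwa [habs] at this
    have h3 : (∫ u in Set.Ioi t, u ^ (-(2 + ε))) = t ^ (-(1 + ε)) / (1 + ε) := by
      rw [integral_Ioi_rpow_of_lt (by linarith) ht0]
      rw [show -(2 + ε) + 1 = -(1 + ε) by ring]
      rw [neg_div, div_neg, neg_neg]
    refine (h1.trans (h2.trans_eq h3)).trans ?_
    exact div_le_self (Real.rpow_nonneg ht0.le _) (by linarith)
  -- tail bound, negative side
  have tail_neg : ∀ t : ℝ, t ≤ -R → |∫ u in Set.Iic t, K u| ≤ (-t) ^ (-(1 + ε)) := by
    intro t ht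
    have ht0 : (0:ℝ) < -t := by linarith
    have h1 : |∫ u in Set.Iic t, K u| ≤ ∫ u in Set.Iic t, |K u| := by
      simpa [Real.norm_eq_abs] using norm_integral_le_integral_norm (μ := volume.restrict (Set.Iic t)) K
    have hflip : (∫ u in Set.Iic t, |K u|) = ∫ u in Set.Ioi (-t), |K (-u)| := by
      rw [integral_comp_neg_Ioi (-t) fun u => |K u|, neg_neg]
    have hint2 : IntegrableOn (fun u : ℝ => u ^ (-(2 + ε))) (Set.Ioi (-t)) :=
      integrableOn_Ioi_rpow_of_lt (by linarith) ht0
    have h2 : (∫ u in Set.Ioi (-t), |K (-u)|) ≤ ∫ u in Set.Ioi (-t), u ^ (-(2 + ε)) := by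
      refine setIntegral_mono_on (hKint.comp_neg.abs.integrableOn) hint2 measurableSet_Ioi ?_
      intro u hu
      have hu0 : -t < u := hu
      have hupos : 0 < u := lt_trans ht0 hu0
      have habs : |(-u)| = u := by rw [abs_neg, abs_of_pos hupos]
      have hRu : R ≤ |(-u)| := by
        rw [habs]; exact le_of_lt (lt_of_le_of_lt (by linarith) hu0)
      have := hKbound (-u) hRu
      rwa [habs] at this
    have h3 : (∫ u in Set.Ioi (-t), u ^ (-(2 + ε))) = (-t) ^ (-(1 + ε)) / (1 + ε) := by
      rw [integral_Ioi_rpow_of_lt (by linarith) ht0]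
      rw [show -(2 + ε) + 1 = -(1 + ε) by ring]
      rw [neg_div, div_neg, neg_neg]
    refine (h1.trans ((hflip.le.trans h2).trans_eq h3)).trans ?_
    exact div_le_self (Real.rpow_nonneg ht0.le _) (by linarith)
  -- master pointwise bound
  set C : ℝ := (max M 1) * (1 + R) ^ (1 + ε) with hCdef
  have hC0 : 0 < C := by
    apply mul_pos (lt_of_lt_of_le one_pos (le_max_right _ _))
    exact Real.rpow_pos_of_pos (by linarith) _
  have hmaster : ∀ u : ℝ, |Lfun K u| ≤ C * (1 + |u|) ^ (-(1 + ε)) := by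
    intro u
    have h1u : (0:ℝ) < 1 + |u| := by positivity
    have hpow : (0:ℝ) < (1 + |u|) ^ (1 + ε) := Real.rpow_pos_of_pos h1u _
    rw [Real.rpow_neg h1u.le, ← div_eq_mul_inv, le_div_iff₀ hpow]
    rcases le_or_gt |u| R with hu | hu
    · calc |Lfun K u| * (1 + |u|) ^ (1 + ε)
          ≤ (max M 1) * (1 + R) ^ (1 + ε) := by
            apply mul_le_mul ((hM u).trans (le_max_left _ _))
              (Real.rpow_le_rpow h1u.le (by linarith) (by linarith))
              hpow.le (le_trans hM0 (le_max_left _ _))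
        _ = C := rfl
    · have hu1 : (1:ℝ) ≤ |u| := hR1le.trans hu.le
      have hu0 : (0:ℝ) < |u| := lt_of_lt_of_le one_pos hu1
      have hLu : |Lfun K u| ≤ |u| ^ (-(1 + ε)) := by
        rcases lt_trichotomy u 0 with hus | hus | hus
        · have : Lfun K u = -∫ v in Set.Iic u, K v := by
            unfold Lfun; rw [if_neg (by linarith)]
          rw [this, abs_neg]
          have habs : |u| = -u := abs_of_neg hus
          rw [habs]
          exact tail_neg u (by rw [habs] at hu; linarith)
        · simp [hus] at hu0
        · have : Lfun K u = ∫ v in Set.Ioi u, K v := by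
            unfold Lfun; rw [if_pos hus]
          rw [this]
          have habs : |u| = u := abs_of_pos hus
          rw [habs]
          exact tail_pos u (by rw [habs] at hu; linarith)
      calc |Lfun K u| * (1 + |u|) ^ (1 + ε)
          ≤ |u| ^ (-(1 + ε)) * ((1 + R) * |u|) ^ (1 + ε) := by
            apply mul_le_mul hLu (Real.rpow_le_rpow h1u.le (by nlinarith) (by linarith))
              hpow.le (Real.rpow_nonneg hu0.le _)
        _ = (1 + R) ^ (1 + ε) * (|u| ^ (-(1 + ε)) * |u| ^ (1 + ε)) := by
            rw [Real.mul_rpow (by linarith) hu0.le]; ring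
        _ = (1 + R) ^ (1 + ε) := by
            rw [← Real.rpow_add hu0, neg_add_cancel, Real.rpow_zero, mul_one]
        _ ≤ C := by
            rw [hCdef]
            exact le_mul_of_one_le_left (Real.rpow_nonneg (by linarith) _) (le_max_right _ _)
  -- final integrability via japanese bracket
  have hrank : (Module.finrank ℝ ℝ : ℝ) = 1 := by simp
  constructor
  · have hg : Integrable fun u : ℝ => C ^ 2 * (1 + ‖u‖) ^ (-(1 + 2 * ε)) :=
      (integrable_one_add_norm (by rw [hrank]; linarith)).const_mul _
    refine hg.mono' ?_ ?_
    · exact ((hLmeas.pow_const 2).mul measurable_id.abs).aestronglyMeasurable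
    · filter_upwards with u
      have h1u : (0:ℝ) < 1 + |u| := by positivity
      rw [Real.norm_eq_abs, Real.norm_eq_abs]
      rw [abs_of_nonneg (mul_nonneg (sq_nonneg _) (abs_nonneg u))]
      calc (Lfun K u) ^ 2 * |u|
          ≤ (C * (1 + |u|) ^ (-(1 + ε))) ^ 2 * (1 + |u|) := by
            apply mul_le_mul ?_ (by linarith [abs_nonneg u]) (abs_nonneg u) (sq_nonneg _)
            rw [← sq_abs (Lfun K u)]
            exact pow_le_pow_left₀ (abs_nonneg _) (hmaster u) 2
        _ = C ^ 2 * (1 + |u|) ^ (-(1 + 2 * ε)) := by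
            rw [mul_pow, ← Real.rpow_natCast ((1 + |u|) ^ (-(1 + ε))) 2,
              ← Real.rpow_mul h1u.le, mul_assoc]
            congr 1
            rw [show ((1:ℝ) + |u|) ^ (-(1 + ε) * (2:ℕ)) * (1 + |u|)
                = (1 + |u|) ^ (-(1 + ε) * (2:ℕ)) * (1 + |u|) ^ (1:ℝ) by rw [Real.rpow_one],
              ← Real.rpow_add h1u]
            congr 1
            push_cast
            ring
  · have hg : Integrable fun u : ℝ => C * (1 + ‖u‖) ^ (-(1 / 2 + ε)) :=
      (integrable_one_add_norm (by rw [hrank]; linarith)).const_mul _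
    refine hg.mono' ?_ ?_
    · exact (hLmeas.abs.mul (measurable_id.abs.sqrt)).aestronglyMeasurable
    · filter_upwards with u
      have h1u : (0:ℝ) < 1 + |u| := by positivity
      rw [Real.norm_eq_abs, Real.norm_eq_abs]
      rw [abs_of_nonneg (mul_nonneg (abs_nonneg _) (Real.sqrt_nonneg _))]
      have hsqrt : Real.sqrt |u| ≤ (1 + |u|) ^ ((1:ℝ)/2) := by
        rw [← Real.sqrt_eq_rpow]
        exact Real.sqrt_le_sqrt (by linarith)
      calc |Lfun K u| * Real.sqrt |u|
          ≤ (C * (1 + |u|) ^ (-(1 + ε))) * (1 + |u|) ^ ((1:ℝ)/2) := by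
            apply mul_le_mul (hmaster u) hsqrt (Real.sqrt_nonneg _)
              (mul_nonneg hC0.le (Real.rpow_nonneg h1u.le _))
        _ = C * (1 + |u|) ^ (-(1 / 2 + ε)) := by
            rw [mul_assoc, ← Real.rpow_add h1u]
            congr 1
            ring
end

section
/- Let φ : [0,T] → ℝ be continuous and let s ∈ (0, T). Let (j_n) be a sequence with j_n ∈ {1, …, n} and |s − t_{j_n − 1}| ≤ Δ_n for every n. Then Δ_n · Σ_{i=1}^{j_n − 1} K_{b_n}(t_{j_n−1} − t_i)·φ(t_i) + φ(t_{j_n−1}) · Δ_n · Σ_{i=j_n}^n K_{b_n}(t_{j_n−1} − t_i) converges, as n → ∞, to φ(s). -/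
open MeasureTheory Filter Topology
open Set

lemma cell_est (f : ℝ → ℝ) (hf : Integrable f) {h : ℝ} (hh : 0 < h) (x : ℝ)
    (hfin : eVariationOn f (Set.Icc (x - h) x) ≠ ⊤) :
    |h * f x - ∫ t in (x - h)..x, f t| ≤ h * (eVariationOn f (Set.Icc (x - h) x)).toReal := by
  have hle : x - h ≤ x := by linarith
  have hconst : (∫ _ in (x - h)..x, f x) = h * f x := by
    rw [intervalIntegral.integral_const]
    simp [smul_eq_mul]
  have hint : IntervalIntegrable f volume (x - h) x := hf.intervalIntegrable
  have hint2 : IntervalIntegrable (fun t => f x - f t) volume (x - h) x :=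
    (intervalIntegrable_const).sub hint
  rw [← hconst, ← intervalIntegral.integral_sub intervalIntegrable_const hint]
  calc |∫ t in (x - h)..x, (f x - f t)| ≤ ∫ t in (x - h)..x, |f x - f t| := by
        simpa [Real.norm_eq_abs] using
          intervalIntegral.norm_integral_le_integral_norm (f := fun t => f x - f t)
            (μ := volume) hle
    _ ≤ ∫ _ in (x - h)..x, (eVariationOn f (Set.Icc (x - h) x)).toReal := by
        apply intervalIntegral.integral_mono_on hle hint2.abs intervalIntegrable_const
        intro t ht
        have h1 : edist (f x) (f t) ≤ eVariationOn f (Set.Icc (x - h) x) :=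
          eVariationOn.edist_le f (by simp [hle]) ht
        have := ENNReal.toReal_mono hfin h1
        rwa [edist_dist, ENNReal.toReal_ofReal dist_nonneg, Real.dist_eq] at this
    _ = h * (eVariationOn f (Set.Icc (x - h) x)).toReal := by
        rw [intervalIntegral.integral_const]; simp [smul_eq_mul]

lemma rs2 (f : ℝ → ℝ) (hf : Integrable f) (hBV : eVariationOn f Set.univ ≠ ⊤)
    {h : ℝ} (hh : 0 < h) (c : ℝ) (m m' : ℕ) (hmm : m ≤ m') :
    |(∑ i ∈ Finset.Ico m m', h * f (c - i * h)) - ∫ t in (c - m' * h)..(c - m * h), f t|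
      ≤ h * (eVariationOn f (Set.Icc (c - m' * h) (c - m * h))).toReal := by
  have hfin : ∀ s : Set ℝ, eVariationOn f s ≠ ⊤ :=
    fun s => ne_top_of_le_ne_top hBV (eVariationOn.mono f (subset_univ s))
  induction m' , hmm using Nat.le_induction with
  | base =>
      simp only [Finset.Ico_self, Finset.sum_empty, intervalIntegral.integral_same, sub_zero,
        abs_zero]
      positivity
  | succ m' hmm ih =>
      have hstep : c - (↑(m' + 1) : ℝ) * h = (c - m' * h) - h := by push_cast; ring
      have hord : c - (↑(m' + 1) : ℝ) * h ≤ c - m' * h := by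
        push_cast; nlinarith
      have hord2 : c - (m' : ℝ) * h ≤ c - m * h := by
        have : (m : ℝ) ≤ m' := by exact_mod_cast hmm
        nlinarith
      have hsplit : (∫ t in (c - (↑(m' + 1) : ℝ) * h)..(c - m * h), f t)
          = (∫ t in (c - (↑(m' + 1) : ℝ) * h)..(c - (m' : ℝ) * h), f t)
            + ∫ t in (c - (m' : ℝ) * h)..(c - m * h), f t :=
        (intervalIntegral.integral_add_adjacent_intervals hf.intervalIntegrable
          hf.intervalIntegrable).symm
      rw [Finset.sum_Ico_succ_top hmm, hsplit]
      have hcell := cell_est f hf hh (c - (m' : ℝ) * h) (hfin _)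
      rw [← hstep] at hcell
      have htri : |(∑ i ∈ Finset.Ico m m', h * f (c - i * h)) + h * f (c - (m' : ℝ) * h)
            - ((∫ t in (c - (↑(m' + 1) : ℝ) * h)..(c - (m' : ℝ) * h), f t)
              + ∫ t in (c - (m' : ℝ) * h)..(c - m * h), f t)|
          ≤ |(∑ i ∈ Finset.Ico m m', h * f (c - i * h))
              - ∫ t in (c - (m' : ℝ) * h)..(c - m * h), f t|
            + |h * f (c - (m' : ℝ) * h)
              - ∫ t in (c - (↑(m' + 1) : ℝ) * h)..(c - (m' : ℝ) * h), f t| := by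
        rw [show (∑ i ∈ Finset.Ico m m', h * f (c - i * h)) + h * f (c - (m' : ℝ) * h)
            - ((∫ t in (c - (↑(m' + 1) : ℝ) * h)..(c - (m' : ℝ) * h), f t)
              + ∫ t in (c - (m' : ℝ) * h)..(c - m * h), f t)
          = ((∑ i ∈ Finset.Ico m m', h * f (c - i * h))
              - ∫ t in (c - (m' : ℝ) * h)..(c - m * h), f t)
            + (h * f (c - (m' : ℝ) * h)
              - ∫ t in (c - (↑(m' + 1) : ℝ) * h)..(c - (m' : ℝ) * h), f t) from by ring]
        exact abs_add_le _ _
      refine htri.trans ?_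
      have hvar : (eVariationOn f (Set.Icc (c - (m' : ℝ) * h) (c - m * h))).toReal
            + (eVariationOn f (Set.Icc (c - (↑(m' + 1) : ℝ) * h) (c - (m' : ℝ) * h))).toReal
          = (eVariationOn f (Set.Icc (c - (↑(m' + 1) : ℝ) * h) (c - m * h))).toReal := by
        rw [← ENNReal.toReal_add (hfin _) (hfin _)]
        congr 1
        rw [add_comm]
        have := eVariationOn.Icc_add_Icc f (s := Set.univ) hord hord2 (mem_univ _)
        simpa using this
      calc _ ≤ h * (eVariationOn f (Set.Icc (c - (m' : ℝ) * h) (c - m * h))).toReal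
            + h * (eVariationOn f (Set.Icc (c - (↑(m' + 1) : ℝ) * h) (c - (m' : ℝ) * h))).toReal :=
              add_le_add ih hcell
        _ = _ := by rw [← hvar]; ring

lemma evar_abs_le (f : ℝ → ℝ) (s : Set ℝ) :
    eVariationOn (fun x => |f x|) s ≤ eVariationOn f s := by
  have h1 : LipschitzWith 1 (fun y : ℝ => ‖y‖) := lipschitzWith_one_norm
  have := h1.lipschitzOnWith.comp_eVariationOn_le (g := f) (s := s) (mapsTo_univ _ _)
  simpa [Function.comp_def, Real.norm_eq_abs] using this

lemma rs2_univ (f : ℝ → ℝ) (hf : Integrable f) (hBV : eVariationOn f Set.univ ≠ ⊤)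
    {h : ℝ} (hh : 0 < h) (c : ℝ) (m m' : ℕ) (hmm : m ≤ m') :
    |(∑ i ∈ Finset.Ico m m', h * f (c - i * h)) - ∫ t in (c - m' * h)..(c - m * h), f t|
      ≤ h * (eVariationOn f Set.univ).toReal := by
  refine (rs2 f hf hBV hh c m m' hmm).trans ?_
  exact mul_le_mul_of_nonneg_left
    (ENNReal.toReal_mono hBV (eVariationOn.mono f (subset_univ _))) hh.le

lemma block_abs (f : ℝ → ℝ) (hf : Integrable f) (hBV : eVariationOn f Set.univ ≠ ⊤)
    {h : ℝ} (hh : 0 < h) (c : ℝ) (m m' : ℕ) (hmm : m ≤ m') :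
    ∑ i ∈ Finset.Ico m m', h * |f (c - i * h)|
      ≤ (∫ t in Set.Ioc (c - m' * h) (c - m * h), |f t|)
        + h * (eVariationOn f Set.univ).toReal := by
  have hgBV : eVariationOn (fun x => |f x|) Set.univ ≠ ⊤ :=
    ne_top_of_le_ne_top hBV (evar_abs_le f _)
  have h2 := rs2_univ (fun x => |f x|) hf.abs hgBV hh c m m' hmm
  have h3 : h * (eVariationOn (fun x => |f x|) Set.univ).toReal
      ≤ h * (eVariationOn f Set.univ).toReal := by
    exact mul_le_mul_of_nonneg_left (ENNReal.toReal_mono hBV (evar_abs_le f _)) hh.le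
  have hord : c - m' * h ≤ c - m * h := by
    have : (m : ℝ) ≤ m' := by exact_mod_cast hmm
    nlinarith
  have hivl : (∫ t in (c - m' * h)..(c - m * h), |f t|)
      = ∫ t in Set.Ioc (c - m' * h) (c - m * h), |f t| :=
    intervalIntegral.integral_of_le hord
  have := abs_sub_abs_le_abs_sub (∑ i ∈ Finset.Ico m m', h * |f (c - i * h)|)
      (∫ t in (c - m' * h)..(c - m * h), |f t|)
  nlinarith [abs_nonneg (∑ i ∈ Finset.Ico m m', h * |f (c - i * h)|),
    le_abs_self ((∑ i ∈ Finset.Ico m m', h * |f (c - i * h)|)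
      - ∫ t in (c - m' * h)..(c - m * h), |f t|)]

lemma tail_small (f : ℝ → ℝ) (hf : Integrable f) {η : ℝ} (hη : 0 < η) :
    ∃ R : ℝ, 0 < R ∧ (∫ t in Set.Ioi R, |f t|) < η ∧ (∫ t in Set.Iic (-R), |f t|) < η := by
  have habs : Integrable (fun t => |f t|) := hf.abs
  have hneg : Tendsto (fun n : ℕ => -(n : ℝ)) atTop atBot :=
    tendsto_neg_atBot_iff.mpr tendsto_natCast_atTop_atTop
  have h1 : Tendsto (fun n : ℕ => ∫ t in (-(n : ℝ))..(n : ℝ), |f t|) atTop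
      (𝓝 (∫ t, |f t|)) :=
    intervalIntegral_tendsto_integral habs hneg tendsto_natCast_atTop_atTop
  have h2 : ∀ᶠ n : ℕ in atTop, (∫ t, |f t|) - η < ∫ t in (-(n : ℝ))..(n : ℝ), |f t| :=
    h1.eventually (eventually_gt_nhds (by linarith))
  obtain ⟨n, hn1, hn2⟩ := ((h2.and (eventually_ge_atTop 1))).exists
  refine ⟨n, by exact_mod_cast hn2, ?_, ?_⟩
  · have hadd : (∫ t in Set.Iic (n : ℝ), |f t|) + ∫ t in Set.Ioi (n : ℝ), |f t| = ∫ t, |f t| :=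
      intervalIntegral.integral_Iic_add_Ioi habs.integrableOn habs.integrableOn
    have hmono : (∫ t in Set.Ioc (-(n : ℝ)) (n : ℝ), |f t|) ≤ ∫ t in Set.Iic (n : ℝ), |f t| :=
      setIntegral_mono_set habs.integrableOn
        (Filter.Eventually.of_forall fun t => abs_nonneg _)
        (HasSubset.Subset.eventuallyLE Set.Ioc_subset_Iic_self)
    rw [intervalIntegral.integral_of_le (by
      have hc : (1:ℝ) ≤ (n:ℝ) := by exact_mod_cast hn2
      linarith : -(n : ℝ) ≤ (n : ℝ))] at hn1
    linarith
  · have hadd : (∫ t in Set.Iic (-(n : ℝ)), |f t|) + ∫ t in Set.Ioi (-(n : ℝ)), |f t|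
        = ∫ t, |f t| := intervalIntegral.integral_Iic_add_Ioi habs.integrableOn habs.integrableOn
    have hmono : (∫ t in Set.Ioc (-(n : ℝ)) (n : ℝ), |f t|) ≤ ∫ t in Set.Ioi (-(n : ℝ)), |f t| :=
      setIntegral_mono_set habs.integrableOn
        (Filter.Eventually.of_forall fun t => abs_nonneg _)
        (HasSubset.Subset.eventuallyLE Set.Ioc_subset_Ioi_self)
    rw [intervalIntegral.integral_of_le (by
      have hc : (1:ℝ) ≤ (n:ℝ) := by exact_mod_cast hn2
      linarith : -(n : ℝ) ≤ (n : ℝ))] at hn1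
    linarith

set_option maxHeartbeats 1000000 in
theorem stmt_15
    (T : ℝ) (hT : 0 < T)
    (K : ℝ → ℝ)
    (hKbdd : ∃ M : ℝ, ∀ x : ℝ, |K x| ≤ M)
    (hKone : ∫ x : ℝ, K x = 1)
    (hKint : Integrable K)
    (hKBV : BoundedVariationOn K Set.univ)
    (b : ℕ → ℝ) (hbpos : ∀ n, 0 < b n)
    (hb0 : Tendsto b atTop (𝓝 0))
    (hΔb : Tendsto (fun n : ℕ => (T / n) / b n) atTop (𝓝 0))
    (φ : ℝ → ℝ) (hφ : ContinuousOn φ (Set.Icc 0 T))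
    (s : ℝ) (hs : s ∈ Set.Ioo 0 T)
    (j : ℕ → ℕ)
    (hj : ∀ n ≥ 1, 1 ≤ j n ∧ j n ≤ n ∧
      |s - ((j n : ℝ) - 1) * (T / n)| ≤ T / n) :
    Tendsto (fun n : ℕ =>
        (T / n) *
            (∑ i ∈ Finset.Icc 1 (j n - 1),
              kb K (b n) (((j n : ℝ) - 1) * (T / n) - (i : ℝ) * (T / n)) *
                φ ((i : ℝ) * (T / n))) +
          φ (((j n : ℝ) - 1) * (T / n)) *
            ((T / n) *
              ∑ i ∈ Finset.Icc (j n) n,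
                kb K (b n) (((j n : ℝ) - 1) * (T / n) - (i : ℝ) * (T / n))))
      atTop (𝓝 (φ s)) := by
  -- notation
  set Δ : ℕ → ℝ := fun n => T / n with hΔdef
  set a : ℕ → ℝ := fun n => ((j n : ℝ) - 1) * Δ n with hadef
  set c : ℕ → ℝ := fun n => a n / b n with hcdef
  set h : ℕ → ℝ := fun n => Δ n / b n with hhdef
  set V : ℝ := (eVariationOn K Set.univ).toReal with hVdef
  have hV0 : 0 ≤ V := ENNReal.toReal_nonneg
  set ψ : ℕ → ℕ → ℝ := fun n i => φ ((min i (j n - 1) : ℕ) * Δ n) with hψdef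
  set A : ℕ → ℝ := fun n => ∑ i ∈ Finset.Ico 1 (n + 1), Δ n * kb K (b n) (a n - i * Δ n)
    with hAdef
  set D : ℕ → ℝ := fun n =>
    ∑ i ∈ Finset.Ico 1 (n + 1), Δ n * kb K (b n) (a n - i * Δ n) * (ψ n i - φ s) with hDdef
  have hΔpos : ∀ n : ℕ, 1 ≤ n → 0 < Δ n := by
    intro n hn
    exact div_pos hT (by exact_mod_cast hn)
  have hhpos : ∀ n : ℕ, 1 ≤ n → 0 < h n := fun n hn => div_pos (hΔpos n hn) (hbpos n)
  -- grid identity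
  have hgrid : ∀ n : ℕ, 1 ≤ n → ∀ i : ℕ,
      Δ n * kb K (b n) (a n - i * Δ n) = h n * K (c n - i * h n) := by
    intro n hn i
    have hb' := (hbpos n).ne'
    have harg : (a n - i * Δ n) / b n = c n - i * h n := by
      simp only [hcdef, hhdef]
      field_simp
    rw [kb, harg]
    ring
  have hgridabs : ∀ n : ℕ, 1 ≤ n → ∀ i : ℕ,
      Δ n * |kb K (b n) (a n - i * Δ n)| = h n * |K (c n - i * h n)| := by
    intro n hn i
    have h1 := hgrid n hn i
    have h2 : |Δ n * kb K (b n) (a n - i * Δ n)| = |h n * K (c n - i * h n)| := by rw [h1]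
    rw [abs_mul, abs_mul, abs_of_pos (hΔpos n hn), abs_of_pos (hhpos n hn)] at h2
    exact h2
  -- step 0 : decompose
  have hstep0 : ∀ᶠ n : ℕ in atTop,
      (Δ n *
            (∑ i ∈ Finset.Icc 1 (j n - 1),
              kb K (b n) (a n - (i : ℝ) * Δ n) * φ ((i : ℝ) * Δ n)) +
          φ (a n) *
            (Δ n *
              ∑ i ∈ Finset.Icc (j n) n, kb K (b n) (a n - (i : ℝ) * Δ n)))
        = D n + φ s * A n := by
    filter_upwards [eventually_ge_atTop 1] with n hn
    obtain ⟨hj1, hj2, hj3⟩ := hj n hn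
    have e1 : Finset.Icc 1 (j n - 1) = Finset.Ico 1 (j n) := by
      rw [← Finset.Ico_add_one_right_eq_Icc]
      congr 1
      omega
    have e2 : Finset.Icc (j n) n = Finset.Ico (j n) (n + 1) := by
      rw [← Finset.Ico_add_one_right_eq_Icc]
    have hsum : ∀ f : ℕ → ℝ,
        ∑ i ∈ Finset.Ico 1 (j n), f i + ∑ i ∈ Finset.Ico (j n) (n + 1), f i
          = ∑ i ∈ Finset.Ico 1 (n + 1), f i :=
      fun f => Finset.sum_Ico_consecutive f hj1 (by omega)
    have hRHS : D n + φ s * A n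
        = ∑ i ∈ Finset.Ico 1 (n + 1), Δ n * kb K (b n) (a n - i * Δ n) * ψ n i := by
      simp only [hDdef, hAdef]
      rw [Finset.mul_sum, ← Finset.sum_add_distrib]
      exact Finset.sum_congr rfl fun i _ => by ring
    have hpart1 : Δ n * (∑ i ∈ Finset.Icc 1 (j n - 1),
          kb K (b n) (a n - (i : ℝ) * Δ n) * φ ((i : ℝ) * Δ n))
        = ∑ i ∈ Finset.Ico 1 (j n), Δ n * kb K (b n) (a n - i * Δ n) * ψ n i := by
      rw [e1, Finset.mul_sum]
      refine Finset.sum_congr rfl fun i hi => ?_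
      have hi' : i ≤ j n - 1 := by
        have := (Finset.mem_Ico.mp hi).2
        omega
      have : ψ n i = φ ((i : ℝ) * Δ n) := by
        simp only [hψdef, min_eq_left hi']
      rw [this]
      ring
    have hpart2 : φ (a n) * (Δ n *
          ∑ i ∈ Finset.Icc (j n) n, kb K (b n) (a n - (i : ℝ) * Δ n))
        = ∑ i ∈ Finset.Ico (j n) (n + 1), Δ n * kb K (b n) (a n - i * Δ n) * ψ n i := by
      rw [e2, Finset.mul_sum, Finset.mul_sum]
      refine Finset.sum_congr rfl fun i hi => ?_
      have hi' : j n - 1 ≤ i := by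
        have := (Finset.mem_Ico.mp hi).1
        omega
      have hcast : ((j n - 1 : ℕ) : ℝ) = (j n : ℝ) - 1 := by
        have := Nat.cast_sub hj1 (R := ℝ)
        simpa using this
      have : ψ n i = φ (a n) := by
        simp only [hψdef, min_eq_right hi', hcast, hadef]
      rw [this]
      ring
    rw [hRHS, ← hsum, hpart1, hpart2]
  -- step 1 : A → 1
  -- basic limits
  have hbinv : Tendsto (fun n => (b n)⁻¹) atTop atTop := by
    have hb0' : Tendsto b atTop (𝓝[>] 0) :=
      tendsto_nhdsWithin_iff.mpr ⟨hb0, Eventually.of_forall fun n => hbpos n⟩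
    exact tendsto_inv_nhdsGT_zero.comp hb0'
  have hΔ0 : Tendsto Δ atTop (𝓝 0) := tendsto_const_div_atTop_nhds_zero_nat T
  have hhV0 : Tendsto (fun n => h n * V) atTop (𝓝 0) := by
    simpa using hΔb.mul_const V
  have hUtop : Tendsto (fun n => c n - h n) atTop atTop := by
    refine tendsto_atTop_mono' atTop ?_ (hbinv.const_mul_atTop (show (0:ℝ) < s / 2 by
      have := hs.1
      linarith))
    filter_upwards [eventually_ge_atTop 1, hΔ0.eventually (eventually_le_nhds
      (show (0:ℝ) < s / 4 by have := hs.1; linarith))] with n hn hΔs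
    obtain ⟨hj1, hj2, hj3⟩ := hj n hn
    have habs := abs_le.mp hj3
    have ha1 : s - Δ n ≤ a n := by
      simp only [hadef]
      linarith [habs.2]
    have hstep : s / 2 ≤ a n - Δ n := by linarith
    have : s / 2 * (b n)⁻¹ ≤ (a n - Δ n) / b n := by
      rw [div_eq_mul_inv]
      exact mul_le_mul_of_nonneg_right hstep (inv_nonneg.mpr (hbpos n).le)
    calc s / 2 * (b n)⁻¹ ≤ (a n - Δ n) / b n := this
      _ = c n - h n := by
          simp only [hcdef, hhdef]
          rw [sub_div]
  have hLbot : Tendsto (fun n => c n - (n + 1 : ℝ) * h n) atTop atBot := by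
    have hpos : Tendsto (fun n => (T - s) * (b n)⁻¹) atTop atTop :=
      hbinv.const_mul_atTop (show (0:ℝ) < T - s by have := hs.2; linarith)
    have hneg : Tendsto (fun n => -((T - s) * (b n)⁻¹)) atTop atBot :=
      tendsto_neg_atBot_iff.mpr hpos
    refine tendsto_atBot_mono' atTop ?_ hneg
    filter_upwards [eventually_ge_atTop 1] with n hn
    obtain ⟨hj1, hj2, hj3⟩ := hj n hn
    have habs := abs_le.mp hj3
    have hnn : (n:ℝ) ≠ 0 := by
      have : (1:ℝ) ≤ (n:ℝ) := by exact_mod_cast hn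
      linarith
    have hnΔ : (n : ℝ) * Δ n = T := by
      simp only [hΔdef]
      field_simp
    have ha2 : a n ≤ s + Δ n := by
      simp only [hadef]
      linarith [habs.1]
    have hstep : a n - (n + 1 : ℝ) * Δ n ≤ -(T - s) := by nlinarith
    have : (a n - (n + 1 : ℝ) * Δ n) / b n ≤ -(T - s) * (b n)⁻¹ := by
      rw [div_eq_mul_inv]
      exact mul_le_mul_of_nonneg_right hstep (inv_nonneg.mpr (hbpos n).le)
    calc c n - (n + 1 : ℝ) * h n = (a n - (n + 1 : ℝ) * Δ n) / b n := by
          simp only [hcdef, hhdef]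
          ring
      _ ≤ -(T - s) * (b n)⁻¹ := this
      _ = -((T - s) * (b n)⁻¹) := by ring
  have hA1 : Tendsto A atTop (𝓝 1) := by
    have hI : Tendsto (fun n => ∫ t in (c n - (n + 1 : ℝ) * h n)..(c n - h n), K t)
        atTop (𝓝 1) := by
      have := intervalIntegral_tendsto_integral hKint hLbot hUtop
      rwa [hKone] at this
    have hAI : ∀ᶠ n : ℕ in atTop,
        ‖A n - ∫ t in (c n - (n + 1 : ℝ) * h n)..(c n - h n), K t‖ ≤ h n * V := by
      filter_upwards [eventually_ge_atTop 1] with n hn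
      have hAg : A n = ∑ i ∈ Finset.Ico 1 (n + 1), h n * K (c n - i * h n) := by
        simp only [hAdef]
        exact Finset.sum_congr rfl fun i _ => hgrid n hn i
      have := rs2_univ K hKint hKBV (hhpos n hn) (c n) 1 (n + 1) (by omega)
      rw [Real.norm_eq_abs, hAg]
      have hc1 : ((1:ℕ):ℝ) * h n = h n := by norm_num
      have hc2 : (((n + 1 : ℕ)):ℝ) = (n + 1 : ℝ) := by push_cast; ring
      rw [← hc2, ← show c n - ((1:ℕ):ℝ) * h n = c n - h n by rw [hc1]]
      exact this
    have hAmI : Tendsto (fun n =>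
        A n - ∫ t in (c n - (n + 1 : ℝ) * h n)..(c n - h n), K t) atTop (𝓝 0) :=
      squeeze_zero_norm' hAI hhV0
    have := hAmI.add hI
    simpa using this
  -- step 2 : D → 0
  have hD0 : Tendsto D atTop (𝓝 0) := by
    rw [NormedAddCommGroup.tendsto_nhds_zero]
    intro ε hε
    obtain ⟨Mφ, hMφ⟩ := isCompact_Icc.exists_bound_of_continuousOn hφ
    have hsIcc : s ∈ Set.Icc 0 T := ⟨hs.1.le, hs.2.le⟩
    have hMφ0 : 0 ≤ Mφ := (norm_nonneg _).trans (hMφ s hsIcc)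
    set B : ℝ := 2 * Mφ + 1 with hBdef
    have hB0 : 0 < B := by linarith
    set CK : ℝ := (∫ t, |K t|) + 1 with hCKdef
    have hCK1 : (1:ℝ) ≤ CK := by
      have : 0 ≤ ∫ t, |K t| := integral_nonneg fun t => abs_nonneg _
      simp only [hCKdef]
      linarith
    have hCK0 : 0 < CK := by linarith
    set ε' : ℝ := ε / (2 * CK) with hε'def
    have hε'0 : 0 < ε' := by positivity
    have hUC := isCompact_Icc.uniformContinuousOn_of_continuous hφ
    rw [Metric.uniformContinuousOn_iff] at hUC
    obtain ⟨δ, hδ0, hδ⟩ := hUC ε' hε'0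
    obtain ⟨R, hR0, hRp, hRm⟩ := tail_small K hKint (show 0 < ε / (8 * B) by positivity)
    have hQtop : Tendsto (fun n => δ / 2 * (b n)⁻¹) atTop atTop :=
      hbinv.const_mul_atTop (by positivity)
    have evQ : ∀ᶠ n : ℕ in atTop,
        R + h n ≤ δ / 2 * (b n)⁻¹ ∧ R ≤ δ / 2 * (b n)⁻¹ := by
      filter_upwards [hQtop.eventually_ge_atTop (R + 1),
        hΔb.eventually (eventually_le_nhds one_pos), eventually_ge_atTop 1] with n e1 e2 e3
      have hh1 : h n ≤ 1 := e2
      have hh0 : 0 < h n := hhpos n e3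
      constructor <;> linarith
    filter_upwards [eventually_ge_atTop 1,
      hΔ0.eventually (eventually_le_nhds (show (0:ℝ) < δ / 4 by positivity)),
      hhV0.eventually (eventually_le_nhds (show (0:ℝ) < ε / (8 * B) by positivity)),
      hhV0.eventually (eventually_le_nhds one_pos), evQ] with n hn1 hn2 hn3 hn4 hn5
    obtain ⟨hj1, hj2, hj3⟩ := hj n hn1
    have hΔp := hΔpos n hn1
    have hhp := hhpos n hn1
    have hbp := hbpos n
    have ha0 : 0 ≤ a n := by
      have : (1:ℝ) ≤ (j n : ℝ) := by exact_mod_cast hj1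
      have := hΔp
      simp only [hadef]
      nlinarith
    have hasn : |a n - s| ≤ Δ n := by
      rw [abs_sub_comm]
      exact hj3
    have hnΔ : (n : ℝ) * Δ n = T := by
      have hnn : (n:ℝ) ≠ 0 := by
        have : (1:ℝ) ≤ (n:ℝ) := by exact_mod_cast hn1
        linarith
      simp only [hΔdef]
      field_simp
    -- pointwise bound on ψ - φ s
    set g : ℕ → ℝ := fun i => Δ n * |kb K (b n) (a n - i * Δ n)| with hgdef
    have hg0 : ∀ i, 0 ≤ g i := fun i => mul_nonneg hΔp.le (abs_nonneg _)
    set P : ℕ → Prop := fun i => δ / 2 < |a n - i * Δ n| with hPdef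
    have hPdec : DecidablePred P := fun i => Real.decidableLT _ _
    have hpsi : ∀ i ∈ Finset.Ico 1 (n + 1),
        |ψ n i - φ s| ≤ ε' + B * (if P i then 1 else 0) := by
      intro i hi
      obtain ⟨hi1, hi2⟩ := Finset.mem_Ico.mp hi
      have hik : min i (j n - 1) ≤ n := le_trans (min_le_left _ _) (by omega)
      have hle' : ((min i (j n - 1) : ℕ) : ℝ) ≤ (n : ℝ) := by exact_mod_cast hik
      have hucc : ((min i (j n - 1) : ℕ) : ℝ) * Δ n ∈ Set.Icc 0 T := by
        constructor
        · exact mul_nonneg (Nat.cast_nonneg _) hΔp.le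
        · calc ((min i (j n - 1) : ℕ) : ℝ) * Δ n ≤ (n : ℝ) * Δ n :=
              mul_le_mul_of_nonneg_right hle' hΔp.le
            _ = T := hnΔ
      have hψb : |ψ n i| ≤ Mφ := by
        have := hMφ _ hucc
        simpa [hψdef, Real.norm_eq_abs] using this
      have hφsb : |φ s| ≤ Mφ := by
        have := hMφ s hsIcc
        simpa [Real.norm_eq_abs] using this
      by_cases hfar : P i
      · rw [if_pos hfar]
        have : |ψ n i - φ s| ≤ |ψ n i| + |φ s| := by
          rw [sub_eq_add_neg]
          exact (abs_add_le _ _).trans (by rw [abs_neg])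
        simp only [hBdef]
        linarith
      · rw [if_neg hfar]
        simp only [hPdef, not_lt] at hfar
        have hnear : |((min i (j n - 1) : ℕ) : ℝ) * Δ n - s| < δ := by
          by_cases hile : i ≤ j n - 1
          · rw [min_eq_left hile]
            have h1 : |(i : ℝ) * Δ n - a n| ≤ δ / 2 := by
              rw [abs_sub_comm]
              exact hfar
            calc |(i : ℝ) * Δ n - s| ≤ |(i : ℝ) * Δ n - a n| + |a n - s| := abs_sub_le _ _ _
              _ ≤ δ / 2 + Δ n := add_le_add h1 hasn
              _ < δ := by linarith
          · push_neg at hile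
            rw [min_eq_right (by omega)]
            have hcast : ((j n - 1 : ℕ) : ℝ) = (j n : ℝ) - 1 := by
              have := Nat.cast_sub hj1 (R := ℝ)
              simpa using this
            rw [hcast]
            have : ((j n : ℝ) - 1) * Δ n = a n := rfl
            rw [this]
            calc |a n - s| ≤ Δ n := hasn
              _ < δ := by linarith
        have := hδ _ hucc s hsIcc (by rwa [Real.dist_eq])
        rw [Real.dist_eq] at this
        have heq : ψ n i = φ (((min i (j n - 1) : ℕ) : ℝ) * Δ n) := rfl
        rw [heq]
        linarith
    -- |D n| ≤ ε' * S + B * Sfar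
    have hDabs : |D n| ≤ ∑ i ∈ Finset.Ico 1 (n + 1), g i * |ψ n i - φ s| := by
      simp only [hDdef]
      refine (Finset.abs_sum_le_sum_abs _ _).trans (le_of_eq ?_)
      refine Finset.sum_congr rfl fun i _ => ?_
      rw [abs_mul, abs_mul, abs_of_pos hΔp, hgdef]
    have hsum2 : ∑ i ∈ Finset.Ico 1 (n + 1), g i * |ψ n i - φ s|
        ≤ ε' * (∑ i ∈ Finset.Ico 1 (n + 1), g i)
          + B * ∑ i ∈ (Finset.Ico 1 (n + 1)).filter P, g i := by
      calc ∑ i ∈ Finset.Ico 1 (n + 1), g i * |ψ n i - φ s|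
          ≤ ∑ i ∈ Finset.Ico 1 (n + 1), g i * (ε' + B * (if P i then 1 else 0)) :=
            Finset.sum_le_sum fun i hi =>
              mul_le_mul_of_nonneg_left (hpsi i hi) (hg0 i)
        _ = ∑ i ∈ Finset.Ico 1 (n + 1),
              (ε' * g i + B * (if P i then g i else 0)) := by
            refine Finset.sum_congr rfl fun i _ => ?_
            by_cases hP : P i <;> simp [hP] <;> ring
        _ = ε' * (∑ i ∈ Finset.Ico 1 (n + 1), g i)
              + B * ∑ i ∈ Finset.Ico 1 (n + 1), (if P i then g i else 0) := by
            rw [Finset.sum_add_distrib, Finset.mul_sum, Finset.mul_sum]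
        _ = ε' * (∑ i ∈ Finset.Ico 1 (n + 1), g i)
              + B * ∑ i ∈ (Finset.Ico 1 (n + 1)).filter P, g i := by
            rw [Finset.sum_filter]
    -- S ≤ CK
    have hggrid : ∀ i : ℕ, g i = h n * |K (c n - i * h n)| := fun i => hgridabs n hn1 i
    have hS : ∑ i ∈ Finset.Ico 1 (n + 1), g i ≤ CK := by
      have hb := block_abs K hKint hKBV hhp (c n) 1 (n + 1) (by omega)
      have hle : (∫ t in Set.Ioc (c n - ((n+1:ℕ):ℝ) * h n) (c n - ((1:ℕ):ℝ) * h n), |K t|)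
          ≤ ∫ t, |K t| :=
        setIntegral_le_integral hKint.abs (Eventually.of_forall fun t => abs_nonneg _)
      calc ∑ i ∈ Finset.Ico 1 (n + 1), g i
          = ∑ i ∈ Finset.Ico 1 (n + 1), h n * |K (c n - i * h n)| :=
            Finset.sum_congr rfl fun i _ => hggrid i
        _ ≤ (∫ t in Set.Ioc (c n - ((n+1:ℕ):ℝ) * h n) (c n - ((1:ℕ):ℝ) * h n), |K t|)
              + h n * V := hb
        _ ≤ (∫ t, |K t|) + 1 := add_le_add hle hn4
        _ = CK := rfl
    -- far sum
    set m1 : ℕ := max 1 (min (n + 1) ⌈(a n - δ / 2) / Δ n⌉₊) with hm1def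
    set m2 : ℕ := ⌊(a n + δ / 2) / Δ n⌋₊ + 1 with hm2def
    have hsub : (Finset.Ico 1 (n + 1)).filter P ⊆
        Finset.Ico 1 m1 ∪ Finset.Ico m2 (n + 1) := by
      intro i hi
      obtain ⟨hmem, hPi⟩ := Finset.mem_filter.mp hi
      obtain ⟨hi1, hi2⟩ := Finset.mem_Ico.mp hmem
      rw [Finset.mem_union, Finset.mem_Ico, Finset.mem_Ico]
      simp only [hPdef] at hPi
      rcases lt_abs.mp hPi with hcase | hcase
      · left
        refine ⟨hi1, ?_⟩
        have : (i : ℝ) < (a n - δ / 2) / Δ n := by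
          rw [lt_div_iff₀ hΔp]
          linarith
        have hceil : i < ⌈(a n - δ / 2) / Δ n⌉₊ := Nat.lt_ceil.mpr this
        have : i < min (n + 1) ⌈(a n - δ / 2) / Δ n⌉₊ := lt_min hi2 hceil
        omega
      · right
        refine ⟨?_, hi2⟩
        have hq0 : 0 ≤ (a n + δ / 2) / Δ n := by positivity
        have : (a n + δ / 2) / Δ n < (i : ℝ) := by
          rw [div_lt_iff₀ hΔp]
          linarith
        have := (Nat.floor_lt hq0).mpr this
        omega
    have hfar1 : ∑ i ∈ (Finset.Ico 1 (n + 1)).filter P, g i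
        ≤ (∑ i ∈ Finset.Ico 1 m1, g i) + ∑ i ∈ Finset.Ico m2 (n + 1), g i := by
      have h1 : ∑ i ∈ (Finset.Ico 1 (n + 1)).filter P, g i
          ≤ ∑ i ∈ Finset.Ico 1 m1 ∪ Finset.Ico m2 (n + 1), g i :=
        Finset.sum_le_sum_of_subset_of_nonneg hsub fun i _ _ => hg0 i
      have h2 := Finset.sum_union_inter (s₁ := Finset.Ico 1 m1)
        (s₂ := Finset.Ico m2 (n + 1)) (f := g)
      have h3 : 0 ≤ ∑ i ∈ Finset.Ico 1 m1 ∩ Finset.Ico m2 (n + 1), g i :=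
        Finset.sum_nonneg fun i _ => hg0 i
      linarith
    -- block bounds
    have hba : ∀ i : ℕ, g i = h n * |K (c n - i * h n)| := hggrid
    have hblock1 : ∑ i ∈ Finset.Ico 1 m1, g i ≤ (∫ t in Set.Ioi R, |K t|) + h n * V := by
      rcases le_or_gt m1 1 with hm1 | hm1
      · have : Finset.Ico 1 m1 = ∅ := Finset.Ico_eq_empty (by omega)
        rw [this, Finset.sum_empty]
        have : 0 ≤ ∫ t in Set.Ioi R, |K t| :=
          setIntegral_nonneg measurableSet_Ioi fun t _ => abs_nonneg _
        nlinarith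
      · have hb := block_abs K hKint hKBV hhp (c n) 1 m1 (by omega)
        have hm1eq : m1 = min (n + 1) ⌈(a n - δ / 2) / Δ n⌉₊ := by
          simp only [hm1def]
          omega
        have hm1lt : ((m1 : ℝ) - 1) < (a n - δ / 2) / Δ n := by
          have : m1 - 1 < ⌈(a n - δ / 2) / Δ n⌉₊ := by omega
          have h4 : ((m1 - 1 : ℕ) : ℝ) < (a n - δ / 2) / Δ n := Nat.lt_ceil.mp this
          have h5 : ((m1 - 1 : ℕ) : ℝ) = (m1 : ℝ) - 1 := by
            have := Nat.cast_sub (by omega : 1 ≤ m1) (R := ℝ)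
            simpa using this
          linarith [h5 ▸ h4]
        have hRlow : R ≤ c n - (m1 : ℝ) * h n := by
          have h6 : ((m1 : ℝ) - 1) * Δ n < a n - δ / 2 := by
            rw [← lt_div_iff₀ hΔp] at *
            linarith [hm1lt]
          have h7 : δ / 2 * (b n)⁻¹ < (a n - ((m1 : ℝ) - 1) * Δ n) / b n := by
            rw [div_eq_mul_inv]
            have : δ / 2 < a n - ((m1 : ℝ) - 1) * Δ n := by linarith
            exact mul_lt_mul_of_pos_right this (inv_pos.mpr hbp)
          have h8 : (a n - ((m1 : ℝ) - 1) * Δ n) / b n = c n - ((m1 : ℝ) - 1) * h n := by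
            simp only [hcdef, hhdef]
            ring
          have h9 : R + h n ≤ δ / 2 * (b n)⁻¹ := hn5.1
          rw [h8] at h7
          have : c n - ((m1 : ℝ) - 1) * h n = c n - (m1 : ℝ) * h n + h n := by ring
          linarith [this ▸ h7]
        have hle2 : (∫ t in Set.Ioc (c n - (m1:ℝ) * h n) (c n - ((1:ℕ):ℝ) * h n), |K t|)
            ≤ ∫ t in Set.Ioi R, |K t| := by
          apply setIntegral_mono_set hKint.abs.integrableOn
            (Eventually.of_forall fun t => abs_nonneg _)
          apply HasSubset.Subset.eventuallyLE
          exact Set.Ioc_subset_Ioi_self.trans (Set.Ioi_subset_Ioi hRlow)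
        calc ∑ i ∈ Finset.Ico 1 m1, g i
            = ∑ i ∈ Finset.Ico 1 m1, h n * |K (c n - i * h n)| :=
              Finset.sum_congr rfl fun i _ => hba i
          _ ≤ (∫ t in Set.Ioc (c n - (m1:ℝ) * h n) (c n - ((1:ℕ):ℝ) * h n), |K t|)
                + h n * V := hb
          _ ≤ (∫ t in Set.Ioi R, |K t|) + h n * V := add_le_add hle2 le_rfl
    have hblock2 : ∑ i ∈ Finset.Ico m2 (n + 1), g i
        ≤ (∫ t in Set.Iic (-R), |K t|) + h n * V := by
      rcases le_or_gt (n + 1) m2 with hm2 | hm2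
      · have : Finset.Ico m2 (n + 1) = ∅ := Finset.Ico_eq_empty (by omega)
        rw [this, Finset.sum_empty]
        have : 0 ≤ ∫ t in Set.Iic (-R), |K t| :=
          setIntegral_nonneg measurableSet_Iic fun t _ => abs_nonneg _
        nlinarith
      · have hb := block_abs K hKint hKBV hhp (c n) m2 (n + 1) (by omega)
        have hm2gt : (a n + δ / 2) / Δ n < (m2 : ℝ) := by
          have h1 := Nat.lt_floor_add_one ((a n + δ / 2) / Δ n)
          simp only [hm2def]
          push_cast
          linarith
        have hRhigh : c n - (m2 : ℝ) * h n ≤ -R := by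
          have h6 : a n + δ / 2 < (m2 : ℝ) * Δ n := by
            rw [div_lt_iff₀ hΔp] at hm2gt
            linarith
          have h7 : (a n - (m2 : ℝ) * Δ n) / b n < -(δ / 2) * (b n)⁻¹ := by
            rw [div_eq_mul_inv]
            have : a n - (m2 : ℝ) * Δ n < -(δ / 2) := by linarith
            exact mul_lt_mul_of_pos_right this (inv_pos.mpr hbp)
          have h8 : (a n - (m2 : ℝ) * Δ n) / b n = c n - (m2 : ℝ) * h n := by
            simp only [hcdef, hhdef]
            ring
          have h9 : R ≤ δ / 2 * (b n)⁻¹ := hn5.2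
          rw [h8] at h7
          nlinarith
        have hle2 : (∫ t in Set.Ioc (c n - ((n+1:ℕ):ℝ) * h n) (c n - (m2:ℝ) * h n), |K t|)
            ≤ ∫ t in Set.Iic (-R), |K t| := by
          apply setIntegral_mono_set hKint.abs.integrableOn
            (Eventually.of_forall fun t => abs_nonneg _)
          apply HasSubset.Subset.eventuallyLE
          exact Set.Ioc_subset_Iic_self.trans (Set.Iic_subset_Iic.mpr hRhigh)
        calc ∑ i ∈ Finset.Ico m2 (n + 1), g i
            = ∑ i ∈ Finset.Ico m2 (n + 1), h n * |K (c n - i * h n)| :=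
              Finset.sum_congr rfl fun i _ => hba i
          _ ≤ (∫ t in Set.Ioc (c n - ((n+1:ℕ):ℝ) * h n) (c n - (m2:ℝ) * h n), |K t|)
                + h n * V := hb
          _ ≤ (∫ t in Set.Iic (-R), |K t|) + h n * V := add_le_add hle2 le_rfl
    -- combine
    have hSfar : ∑ i ∈ (Finset.Ico 1 (n + 1)).filter P, g i < 4 * (ε / (8 * B)) := by
      have := hfar1
      linarith [hblock1, hblock2, hRp, hRm, hn3]
    have hSfar0 : 0 ≤ ∑ i ∈ (Finset.Ico 1 (n + 1)).filter P, g i :=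
      Finset.sum_nonneg fun i _ => hg0 i
    have hε'S : ε' * (∑ i ∈ Finset.Ico 1 (n + 1), g i) ≤ ε / 2 := by
      have h1 : ε' * (∑ i ∈ Finset.Ico 1 (n + 1), g i) ≤ ε' * CK :=
        mul_le_mul_of_nonneg_left hS hε'0.le
      have h2 : ε' * CK = ε / 2 := by
        simp only [hε'def]
        field_simp
      exact h1.trans (le_of_eq h2)
    have hBSfar : B * (∑ i ∈ (Finset.Ico 1 (n + 1)).filter P, g i) < ε / 2 := by
      have h1 : B * (∑ i ∈ (Finset.Ico 1 (n + 1)).filter P, g i)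
          < B * (4 * (ε / (8 * B))) := mul_lt_mul_of_pos_left hSfar hB0
      have h2 : B * (4 * (ε / (8 * B))) = ε / 2 := by
        field_simp
        ring
      linarith
    rw [Real.norm_eq_abs]
    calc |D n| ≤ ∑ i ∈ Finset.Ico 1 (n + 1), g i * |ψ n i - φ s| := hDabs
      _ ≤ ε' * (∑ i ∈ Finset.Ico 1 (n + 1), g i)
            + B * ∑ i ∈ (Finset.Ico 1 (n + 1)).filter P, g i := hsum2
      _ < ε / 2 + ε / 2 := add_lt_add_of_le_of_lt hε'S hBSfar
      _ = ε := by ring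
  have hlim : Tendsto (fun n => D n + φ s * A n) atTop (𝓝 (φ s)) := by
    have := hD0.add ((hA1.const_mul (φ s)))
    simpa using this
  exact hlim.congr' (by filter_upwards [hstep0] with n hn using hn.symm)
end

section
/- Let f : [0, ∞) → ℝ be Lebesgue integrable with finite total variation on [0, ∞), and let (h_n) be a sequence of positive reals with h_n → 0. Then for every n the series Σ_{r=0}^∞ f(r·h_n) converges absolutely, and h_n · Σ_{r=0}^∞ f(r·h_n) → ∫_0^∞ f(x) dx as n → ∞. -/
open MeasureTheory Filter Topology

section Aux
open Set ENNReal


lemma aux16 (f : ℝ → ℝ)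
    (hfint : IntegrableOn f (Set.Ici (0:ℝ)))
    (hfBV : BoundedVariationOn f (Set.Ici (0:ℝ)))
    {t : ℝ} (ht : 0 < t) :
    Summable (fun r : ℕ => |f ((r : ℝ) * t)|) ∧
      |t * ∑' r : ℕ, f ((r : ℝ) * t) - ∫ x in Set.Ioi (0:ℝ), f x|
        ≤ t * (eVariationOn f (Set.Ici 0)).toReal := by
  set V : ℝ := (eVariationOn f (Set.Ici 0)).toReal with hV
  set e : ℕ → ℝ≥0∞ := fun r => eVariationOn f (Set.Ici 0 ∩ Set.Icc ((r:ℝ)*t) ((r+1:ℝ)*t)) with he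
  have hmono : ∀ r : ℕ, (r:ℝ)*t ≤ ((r:ℝ)+1)*t := fun r => by nlinarith
  have hnn : ∀ r : ℕ, (0:ℝ) ≤ (r:ℝ)*t := fun r => by positivity
  -- partial sums of e
  have hsumE : ∀ N : ℕ, ∑ r ∈ Finset.range N, e r
      = eVariationOn f (Set.Ici 0 ∩ Set.Icc 0 ((N:ℝ)*t)) := by
    intro N
    induction N with
    | zero =>
      simp only [Finset.range_zero, Finset.sum_empty, Nat.cast_zero, zero_mul]
      rw [eq_comm, eVariationOn.eq_zero_iff]
      intro x hx y hy
      have hx0 : x = 0 := le_antisymm hx.2.2 hx.2.1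
      have hy0 : y = 0 := le_antisymm hy.2.2 hy.2.1
      rw [hx0, hy0, edist_self]
    | succ N ih =>
      rw [Finset.sum_range_succ, ih, he]
      have := eVariationOn.Icc_add_Icc f (s := Set.Ici (0:ℝ))
        (a := 0) (b := (N:ℝ)*t) (c := ((N:ℝ)+1)*t) (hnn N) (hmono N) (hnn N)
      push_cast
      convert this using 3 <;> push_cast <;> ring
  have hfin : eVariationOn f (Set.Ici (0:ℝ)) ≠ ⊤ := hfBV
  have heletop : ∀ r, e r ≠ ⊤ := fun r =>
    ne_top_of_le_ne_top hfin (eVariationOn.mono f Set.inter_subset_left)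
  have htsumE : ∑' r, e r ≤ eVariationOn f (Set.Ici 0) := by
    rw [ENNReal.tsum_eq_iSup_nat]
    refine iSup_le fun N => ?_
    rw [hsumE]
    exact eVariationOn.mono f Set.inter_subset_left
  have hEtop : ∑' r, e r ≠ ⊤ := ne_top_of_le_ne_top hfin htsumE
  set v : ℕ → ℝ := fun r => (e r).toReal with hv
  have hvsum : Summable v := ENNReal.summable_toReal hEtop
  have hvnn : ∀ r, 0 ≤ v r := fun r => ENNReal.toReal_nonneg
  have hvle : ∑' r, v r ≤ V := by
    rw [hv, ← ENNReal.tsum_toReal_eq heletop]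
    exact ENNReal.toReal_mono hfin htsumE
  have hint : ∀ r : ℕ, IntervalIntegrable f volume ((r:ℝ)*t) (((r:ℝ)+1)*t) := by
    intro r
    apply (hfint.mono_set ?_).intervalIntegrable
    rw [Set.uIcc_of_le (hmono r)]
    exact fun x hx => le_trans (hnn r) hx.1
  -- key estimate
  have key : ∀ r : ℕ, |t * f ((r:ℝ)*t) - ∫ x in ((r:ℝ)*t)..(((r:ℝ)+1)*t), f x| ≤ t * v r := by
    intro r
    have hsub : (∫ x in ((r:ℝ)*t)..(((r:ℝ)+1)*t), (f ((r:ℝ)*t) - f x))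
        = t * f ((r:ℝ)*t) - ∫ x in ((r:ℝ)*t)..(((r:ℝ)+1)*t), f x := by
      rw [intervalIntegral.integral_sub intervalIntegrable_const (hint r),
        intervalIntegral.integral_const]
      have h1 : ((r:ℝ)+1)*t - (r:ℝ)*t = t := by ring
      rw [h1, smul_eq_mul]
    rw [← hsub, ← Real.norm_eq_abs]
    have hb := intervalIntegral.norm_integral_le_of_norm_le_const
      (a := (r:ℝ)*t) (b := ((r:ℝ)+1)*t) (C := v r)
      (f := fun x => f ((r:ℝ)*t) - f x) ?_
    · refine hb.trans_eq ?_
      have h1 : ((r:ℝ)+1)*t - (r:ℝ)*t = t := by ring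
      rw [h1, abs_of_pos ht]; ring
    · intro x hx
      rw [Set.uIoc_of_le (hmono r)] at hx
      have hBV' : BoundedVariationOn f (Set.Ici 0 ∩ Set.Icc ((r:ℝ)*t) (((r:ℝ)+1)*t)) :=
        hfBV.mono Set.inter_subset_left
      have hxm : x ∈ Set.Ici (0:ℝ) ∩ Set.Icc ((r:ℝ)*t) (((r:ℝ)+1)*t) :=
        ⟨le_trans (hnn r) hx.1.le, hx.1.le, hx.2⟩
      have ham : (r:ℝ)*t ∈ Set.Ici (0:ℝ) ∩ Set.Icc ((r:ℝ)*t) (((r:ℝ)+1)*t) :=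
        ⟨hnn r, le_refl _, hmono r⟩
      have hd := hBV'.dist_le ham hxm
      rw [Real.dist_eq] at hd
      exact hd
  -- sum of |f| integrals over [0, Nt]
  have hsum_int : ∀ (g : ℝ → ℝ), (∀ r : ℕ, IntervalIntegrable g volume ((r:ℝ)*t) (((r:ℝ)+1)*t)) →
      ∀ N : ℕ, ∑ r ∈ Finset.range N, (∫ x in ((r:ℝ)*t)..(((r:ℝ)+1)*t), g x)
        = ∫ x in (0:ℝ)..((N:ℝ)*t), g x := by
    intro g hg N
    have := intervalIntegral.sum_integral_adjacent_intervals
      (a := fun k : ℕ => (k:ℝ)*t) (n := N) (μ := volume) (f := g)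
      (fun k _ => by push_cast; exact hg k)
    simpa using this
  -- summability of |f (r t)|
  have hsum1 : Summable (fun r : ℕ => |f ((r:ℝ)*t)|) := by
    set A : ℝ := ∫ x in Set.Ici (0:ℝ), |f x|
    refine summable_of_sum_range_le (c := (A + t * ∑' r, v r)/t)
      (fun r => abs_nonneg _) (fun N => ?_)
    rw [le_div_iff₀ ht]
    have step : ∀ r : ℕ, t * |f ((r:ℝ)*t)|
        ≤ (∫ x in ((r:ℝ)*t)..(((r:ℝ)+1)*t), |f x|) + t * v r := by
      intro r
      have h1 : |∫ x in ((r:ℝ)*t)..(((r:ℝ)+1)*t), f x|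
          ≤ ∫ x in ((r:ℝ)*t)..(((r:ℝ)+1)*t), |f x| :=
        intervalIntegral.abs_integral_le_integral_abs (hmono r)
      have h2 : t * |f ((r:ℝ)*t)| = |t * f ((r:ℝ)*t)| := by
        rw [abs_mul, abs_of_pos ht]
      have h3 := key r
      have h4 := abs_sub_abs_le_abs_sub (t * f ((r:ℝ)*t))
        (∫ x in ((r:ℝ)*t)..(((r:ℝ)+1)*t), f x)
      linarith
    calc (∑ r ∈ Finset.range N, |f ((r:ℝ)*t)|) * t
        = ∑ r ∈ Finset.range N, t * |f ((r:ℝ)*t)| := by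
          rw [Finset.sum_mul]; exact Finset.sum_congr rfl fun r _ => mul_comm _ _
      _ ≤ ∑ r ∈ Finset.range N, ((∫ x in ((r:ℝ)*t)..(((r:ℝ)+1)*t), |f x|) + t * v r) :=
          Finset.sum_le_sum fun r _ => step r
      _ = (∫ x in (0:ℝ)..((N:ℝ)*t), |f x|) + t * ∑ r ∈ Finset.range N, v r := by
          rw [Finset.sum_add_distrib, hsum_int _ (fun r => (hint r).abs), Finset.mul_sum]
      _ ≤ A + t * ∑' r, v r := by
          gcongr
          · rw [intervalIntegral.integral_of_le (by positivity)]
            refine setIntegral_mono_set hfint.abs ?_ ?_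
            · exact Eventually.of_forall fun x => abs_nonneg _
            · exact HasSubset.Subset.eventuallyLE (fun x hx => hx.1.le)
          · exact Summable.sum_le_tsum _ (fun r _ => hvnn r) hvsum
  refine ⟨hsum1, ?_⟩
  set I : ℕ → ℝ := fun r => ∫ x in ((r:ℝ)*t)..(((r:ℝ)+1)*t), f x with hI
  set g : ℕ → ℝ := fun r => t * f ((r:ℝ)*t) - I r with hg
  have hgabs : Summable (fun r => |g r|) :=
    Summable.of_nonneg_of_le (fun r => abs_nonneg _) key (hvsum.mul_left t)
  have hgsum : Summable g := hgabs.of_abs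
  have hfsum : Summable (fun r : ℕ => f ((r:ℝ)*t)) := hsum1.of_abs
  have hIsum : Summable I := by
    have hIeq : I = fun r : ℕ => t * f ((r:ℝ)*t) - g r := by funext r; simp [hg]
    rw [hIeq]; exact (hfsum.mul_left t).sub hgsum
  have hIto : ∑' r, I r = ∫ x in Set.Ioi (0:ℝ), f x := by
    refine tendsto_nhds_unique hIsum.hasSum.tendsto_sum_nat ?_
    have heq : ∀ N : ℕ, ∑ r ∈ Finset.range N, I r = ∫ x in (0:ℝ)..((N:ℝ)*t), f x :=
      fun N => hsum_int f hint N
    simp_rw [heq]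
    have hNt : Tendsto (fun N : ℕ => (N:ℝ)*t) atTop atTop :=
      tendsto_natCast_atTop_atTop.atTop_mul_const ht
    exact intervalIntegral_tendsto_integral_Ioi 0
      (hfint.mono_set Set.Ioi_subset_Ici_self) hNt
  have hdiff : t * ∑' r : ℕ, f ((r:ℝ)*t) - ∫ x in Set.Ioi (0:ℝ), f x = ∑' r, g r := by
    rw [← hIto, hg, Summable.tsum_sub (hfsum.mul_left t) hIsum, tsum_mul_left]
  rw [hdiff]
  calc |∑' r, g r| ≤ ∑' r, |g r| := by
        rw [← Real.norm_eq_abs]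
        exact (norm_tsum_le_tsum_norm (by simpa using hgabs)).trans_eq (by simp)
    _ ≤ ∑' r, t * v r := Summable.tsum_le_tsum key hgabs (hvsum.mul_left t)
    _ = t * ∑' r, v r := tsum_mul_left
    _ ≤ t * V := mul_le_mul_of_nonneg_left hvle ht.le

end Aux

theorem stmt_16
    (f : ℝ → ℝ)
    (hfint : IntegrableOn f (Set.Ici (0:ℝ)))
    (hfBV : BoundedVariationOn f (Set.Ici (0:ℝ)))
    (h : ℕ → ℝ) (hpos : ∀ n, 0 < h n) (h0 : Tendsto h atTop (𝓝 0)) :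
    (∀ n : ℕ, Summable (fun r : ℕ => |f ((r : ℝ) * h n)|)) ∧
      Tendsto (fun n : ℕ => h n * ∑' r : ℕ, f ((r : ℝ) * h n)) atTop
        (𝓝 (∫ x in Set.Ioi (0:ℝ), f x)) := by
  refine ⟨fun n => (aux16 f hfint hfBV (hpos n)).1, ?_⟩
  rw [← tendsto_sub_nhds_zero_iff]
  refine squeeze_zero_norm (fun n => ?_)
    (by simpa using h0.mul_const (eVariationOn f (Set.Ici 0)).toReal)
  rw [Real.norm_eq_abs]
  exact (aux16 f hfint hfBV (hpos n)).2
end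

section
/- Let φ : [0,T] → ℝ be continuous, and suppose K : ℝ → ℝ is measurable with ∫_ℝ |K(x)| dx < ∞ and ∫_ℝ |u·K(u)| du < ∞. Then √Δ_n · Σ_{i=1}^n φ(t_i) · ∫_{−∞}^{−t_i/b_n} K(u) du converges, as n → ∞, to −θ·φ(0)·∫_{−∞}^0 L(u) du (equivalently, to θ·φ(0)·∫_{−∞}^0 (−u)·K(u) du). -/
open MeasureTheory Filter Topology Set
open scoped ENNReal NNReal

lemma cont_Iic_integral {K : ℝ → ℝ} (hK : Integrable K) :
    Continuous fun t => ∫ u in Set.Iic t, K u := by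
  have h : (fun t => ∫ u in Set.Iic t, K u)
      = fun b => (∫ u in Set.Iic 0, K u) + ∫ u in (0:ℝ)..b, K u := by
    funext b
    rw [← intervalIntegral.integral_Iic_sub_Iic hK.integrableOn hK.integrableOn]
    ring
  rw [h]
  exact continuous_const.add (hK.continuous_primitive 0)

lemma bound_integrable {K : ℝ → ℝ} (hK : Measurable K) (hKint : Integrable K)
    (hKu : Integrable (fun u : ℝ => u * K u)) (M : ℝ) (hM : 0 ≤ M) :
    Integrable (Set.indicator (Set.Ioi (0:ℝ))
      (fun x => M * ∫ u in Set.Iic (-x), |K u|)) := by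
  set G : ℝ → ℝ := fun t => ∫ u in Set.Iic t, |K u| with hG
  have hGcont : Continuous G := cont_Iic_integral hKint.abs
  have hGnn : ∀ t, 0 ≤ G t := fun t =>
    setIntegral_nonneg measurableSet_Iic (fun u _ => abs_nonneg _)
  constructor
  · exact ((continuous_const.mul (hGcont.comp continuous_neg)).aestronglyMeasurable).indicator
      measurableSet_Ioi
  · set q : ℝ → ℝ≥0∞ := fun v => ENNReal.ofReal |K v| with hqdef
    have hq : Measurable q := hK.abs.ennreal_ofReal
    have hset : MeasurableSet {p : ℝ × ℝ | p.2 ≤ -p.1} :=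
      (isClosed_le continuous_snd continuous_fst.neg).measurableSet
    have hQ : Measurable (fun p : ℝ × ℝ => Set.indicator {p : ℝ × ℝ | p.2 ≤ -p.1}
        (fun p => q p.2) p) := (hq.comp measurable_snd).indicator hset
    have step1 : ∀ x : ℝ, (‖Set.indicator (Set.Ioi (0:ℝ))
        (fun x => M * G (-x)) x‖₊ : ℝ≥0∞)
        = Set.indicator (Set.Ioi (0:ℝ)) (fun x => ENNReal.ofReal M * ∫⁻ v, Set.indicator {p : ℝ × ℝ | p.2 ≤ -p.1} (fun p => q p.2) (x, v)) x := by
      intro x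
      by_cases hx : x ∈ Set.Ioi (0:ℝ)
      · rw [Set.indicator_of_mem hx, Set.indicator_of_mem hx,
          ← enorm_eq_nnnorm, Real.enorm_eq_ofReal (mul_nonneg hM (hGnn _)), ENNReal.ofReal_mul hM]
        congr 1
        have : ∀ v : ℝ, Set.indicator {p : ℝ × ℝ | p.2 ≤ -p.1} (fun p => q p.2) (x, v)
            = Set.indicator (Set.Iic (-x)) q v := by
          intro v
          by_cases h : v ≤ -x <;> simp [Set.indicator, h]
        simp_rw [this]
        rw [lintegral_indicator measurableSet_Iic _,
          ← ofReal_integral_eq_lintegral_ofReal hKint.abs.integrableOn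
            (Filter.Eventually.of_forall fun v => abs_nonneg _)]
      · rw [Set.indicator_of_notMem hx, Set.indicator_of_notMem hx]
        simp
    rw [HasFiniteIntegral]
    calc ∫⁻ x, ‖Set.indicator (Set.Ioi (0:ℝ)) (fun x => M * G (-x)) x‖₊
        = ∫⁻ x, Set.indicator (Set.Ioi (0:ℝ)) (fun x => ENNReal.ofReal M *
            ∫⁻ v, Set.indicator {p : ℝ × ℝ | p.2 ≤ -p.1} (fun p => q p.2) (x, v)) x := by
          simp_rw [step1]
      _ = ∫⁻ x in Set.Ioi (0:ℝ), ENNReal.ofReal M *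
            ∫⁻ v, Set.indicator {p : ℝ × ℝ | p.2 ≤ -p.1} (fun p => q p.2) (x, v) := by
          rw [lintegral_indicator measurableSet_Ioi _]
      _ = ENNReal.ofReal M * ∫⁻ x in Set.Ioi (0:ℝ),
            ∫⁻ v, Set.indicator {p : ℝ × ℝ | p.2 ≤ -p.1} (fun p => q p.2) (x, v) := by
          rw [lintegral_const_mul' _ _ ENNReal.ofReal_ne_top]
      _ = ENNReal.ofReal M * ∫⁻ v, ∫⁻ x in Set.Ioi (0:ℝ),
            Set.indicator {p : ℝ × ℝ | p.2 ≤ -p.1} (fun p => q p.2) (x, v) := by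
          rw [lintegral_lintegral_swap hQ.aemeasurable]
      _ = ENNReal.ofReal M * ∫⁻ v, q v * ENNReal.ofReal (-v) := by
          congr 1
          refine lintegral_congr fun v => ?_
          have : ∀ x : ℝ, Set.indicator {p : ℝ × ℝ | p.2 ≤ -p.1} (fun p => q p.2) (x, v)
              = Set.indicator (Set.Iic (-v)) (fun _ => q v) x := by
            intro x
            by_cases h : v ≤ -x
            · have h' : x ≤ -v := by linarith
              simp [Set.indicator_apply, Set.mem_setOf_eq, Set.mem_Iic, h, h']
            · have h' : ¬ x ≤ -v := fun hh => h (by linarith)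
              simp [Set.indicator_apply, Set.mem_setOf_eq, Set.mem_Iic, h, h']
          simp_rw [this]
          rw [lintegral_indicator measurableSet_Iic _, setLIntegral_const,
            Measure.restrict_apply measurableSet_Iic]
          congr 1
          rw [Set.inter_comm, Set.Ioi_inter_Iic, Real.volume_Ioc, sub_zero]
      _ ≤ ENNReal.ofReal M * ∫⁻ v, (‖v * K v‖₊ : ℝ≥0∞) := by
          refine mul_le_mul_right (lintegral_mono fun v => ?_) _
          calc q v * ENNReal.ofReal (-v) ≤ ENNReal.ofReal |K v| * ENNReal.ofReal |v| :=
                mul_le_mul_right (ENNReal.ofReal_le_ofReal (neg_le_abs v)) _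
            _ = ENNReal.ofReal (|K v| * |v|) := (ENNReal.ofReal_mul (abs_nonneg _)).symm
            _ = ENNReal.ofReal (|v * K v|) := by rw [← abs_mul, mul_comm]
            _ = (‖v * K v‖₊ : ℝ≥0∞) := (Real.enorm_eq_ofReal_abs _).symm
      _ < ⊤ := ENNReal.mul_lt_top ENNReal.ofReal_lt_top hKu.hasFiniteIntegral

theorem stmt_17
    (T : ℝ) (hT : 0 < T)
    (K : ℝ → ℝ) (hK : Measurable K) (hKint : Integrable K)
    (hKu : Integrable (fun u : ℝ => u * K u))
    (k : ℕ → ℕ) (hk : ∀ n, 0 < k n)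
    (θ : ℝ) (hθpos : 0 < θ)
    (hθ : Tendsto (fun n : ℕ => (k n : ℝ) * Real.sqrt (T / n)) atTop (𝓝 θ))
    (φ : ℝ → ℝ) (hφ : ContinuousOn φ (Set.Icc 0 T)) :
    Tendsto (fun n : ℕ =>
        Real.sqrt (T / n) *
          ∑ i ∈ Finset.Icc 1 n,
            φ ((i : ℝ) * (T / n)) *
              ∫ u in Set.Iic (-((i : ℝ) * (T / n)) / ((k n : ℝ) * (T / n))), K u)
      atTop (𝓝 (-(θ * φ 0 * ∫ u in Set.Iic (0:ℝ), Lfun K u))) := by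
  have hk0 : ∀ n, (0:ℝ) < (k n : ℝ) := fun n => by exact_mod_cast hk n
  set s : ℕ → ℝ := fun n => Real.sqrt (T / n) with hsdef
  set F : ℝ → ℝ := fun t => ∫ u in Set.Iic t, K u with hFdef
  have hFcont : Continuous F := cont_Iic_integral hKint
  set G : ℝ → ℝ := fun t => ∫ u in Set.Iic t, |K u| with hGdef
  have hGnn : ∀ t, 0 ≤ G t := fun t =>
    setIntegral_nonneg measurableSet_Iic fun u _ => abs_nonneg _
  have hGmono : Monotone G := fun a b hab =>
    setIntegral_mono_set hKint.abs.integrableOn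
      (Eventually.of_forall fun u => abs_nonneg _)
      (HasSubset.Subset.eventuallyLE (Set.Iic_subset_Iic.mpr hab))
  have hFG : ∀ t, ‖F t‖ ≤ G t := by
    intro t
    calc ‖F t‖ ≤ ∫ u in Set.Iic t, ‖K u‖ := norm_integral_le_integral_norm _
      _ = G t := by simp [hGdef, Real.norm_eq_abs]
  obtain ⟨M, hM⟩ := isCompact_Icc.exists_bound_of_continuousOn hφ
  have hM0 : 0 ≤ M := le_trans (norm_nonneg _) (hM 0 ⟨le_refl 0, hT.le⟩)
  set c : ℕ → ℕ → ℝ := fun n i => φ ((i:ℝ) * (T/n)) * F (-((i:ℝ)/(k n))) with hcdef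
  set g : ℕ → ℝ → ℝ := fun n x => ∑ i ∈ Finset.Icc 1 n,
    Set.indicator (Set.Ioc (((i:ℝ)-1)/(k n)) ((i:ℝ)/(k n))) (fun _ => c n i) x with hgdef
  -- membership characterization
  have hmem : ∀ (n i : ℕ) (x : ℝ),
      x ∈ Set.Ioc (((i:ℝ)-1)/(k n)) ((i:ℝ)/(k n)) ↔ ⌈(k n : ℝ) * x⌉ = (i:ℤ) := by
    intro n i x
    have hx1 : ((((i:ℝ)-1)/(k n) < x)) ↔ ((i:ℝ)-1 < (k n:ℝ) * x) := by
      rw [div_lt_iff₀ (hk0 n), mul_comm]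
    have hx2 : (x ≤ (i:ℝ)/(k n)) ↔ ((k n:ℝ) * x ≤ (i:ℝ)) := by
      rw [le_div_iff₀ (hk0 n), mul_comm]
    rw [Set.mem_Ioc, hx1, hx2, Int.ceil_eq_iff]
    push_cast
    tauto
  -- zero outside
  have hgzero : ∀ (n : ℕ) (x : ℝ), x ∉ Set.Ioc (0:ℝ) ((n:ℝ)/(k n)) → g n x = 0 := by
    intro n x hx
    refine Finset.sum_eq_zero fun i hi => ?_
    rw [Finset.mem_Icc] at hi
    refine Set.indicator_of_notMem (fun hxi => hx ?_) _
    rcases hxi with ⟨h1, h2⟩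
    constructor
    · have h0 : (0:ℝ) ≤ ((i:ℝ)-1)/(k n) := by
        apply div_nonneg _ (hk0 n).le
        have : (1:ℝ) ≤ (i:ℝ) := by exact_mod_cast hi.1
        linarith
      linarith
    · calc x ≤ (i:ℝ)/(k n) := h2
        _ ≤ (n:ℝ)/(k n) := by
          gcongr
          exact_mod_cast hi.2
  -- value inside
  have hgval : ∀ (n : ℕ) (x : ℝ), x ∈ Set.Ioc (0:ℝ) ((n:ℝ)/(k n)) →
      ∃ i : ℕ, i ∈ Finset.Icc 1 n ∧ g n x = c n i ∧ x ≤ (i:ℝ)/(k n) ∧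
        ((i:ℤ) = ⌈(k n:ℝ) * x⌉) := by
    intro n x hx
    have hkx : 0 < (k n:ℝ) * x := mul_pos (hk0 n) hx.1
    have hpos : 0 < ⌈(k n:ℝ)*x⌉ := Int.ceil_pos.mpr hkx
    set i₀ : ℕ := (⌈(k n:ℝ)*x⌉).toNat with hi₀
    have hcast : ((i₀:ℕ):ℤ) = ⌈(k n:ℝ)*x⌉ := Int.toNat_of_nonneg hpos.le
    have hceil_le : ⌈(k n:ℝ)*x⌉ ≤ (n:ℤ) := by
      rw [Int.ceil_le]
      push_cast
      have h2 := (le_div_iff₀ (hk0 n)).mp hx.2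
      linarith
    have hIcc : i₀ ∈ Finset.Icc 1 n := by
      rw [Finset.mem_Icc]
      omega
    have hxmem : x ∈ Set.Ioc (((i₀:ℝ)-1)/(k n)) ((i₀:ℝ)/(k n)) :=
      (hmem n i₀ x).mpr hcast.symm
    have h0 : ∀ j ∈ Finset.Icc 1 n, j ≠ i₀ →
        (Set.Ioc (((j:ℝ)-1)/(k n)) ((j:ℝ)/(k n))).indicator (fun _ => c n j) x = 0 := by
      intro j hj hne
      refine Set.indicator_of_notMem (fun hxj => hne ?_) _
      have h1 := (hmem n j x).mp hxj
      have h2 : (j:ℤ) = (i₀:ℤ) := by rw [← h1, hcast]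
      exact_mod_cast h2
    have hgx : g n x = c n i₀ := by
      simp only [hgdef]
      rw [Finset.sum_eq_single_of_mem i₀ hIcc h0, Set.indicator_of_mem hxmem]
    exact ⟨i₀, hIcc, hgx, hxmem.2, hcast⟩
  -- integral of the step function
  have hA : ∀ n : ℕ, ∫ x, g n x = (k n:ℝ)⁻¹ * ∑ i ∈ Finset.Icc 1 n, c n i := by
    intro n
    have hInt : ∀ i ∈ Finset.Icc 1 n, Integrable
        ((Set.Ioc (((i:ℝ)-1)/(k n)) ((i:ℝ)/(k n))).indicator (fun _ => c n i)) := by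
      intro i _
      rw [integrable_indicator_iff measurableSet_Ioc]
      exact integrableOn_const measure_Ioc_lt_top.ne
    have hsum : ∫ x, g n x = ∑ i ∈ Finset.Icc 1 n,
        ∫ x, (Set.Ioc (((i:ℝ)-1)/(k n)) ((i:ℝ)/(k n))).indicator (fun _ => c n i) x := by
      simp only [hgdef]
      exact integral_finset_sum _ hInt
    rw [hsum, Finset.mul_sum]
    refine Finset.sum_congr rfl fun i hi => ?_
    rw [integral_indicator measurableSet_Ioc, setIntegral_const, Real.volume_real_Ioc, smul_eq_mul]
    congr 1
    have hlen : (i:ℝ)/(k n) - ((i:ℝ)-1)/(k n) = (k n:ℝ)⁻¹ := by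
      rw [div_sub_div_same, inv_eq_one_div]
      norm_num
    rw [hlen, max_eq_left (inv_nonneg.mpr (hk0 n).le)]
  -- identities for bandwidth
  have hks : ∀ n : ℕ, (k n:ℝ) * (T/n) = ((k n:ℝ) * s n) * s n := by
    intro n
    have h1 : s n * s n = T/n := Real.mul_self_sqrt (div_nonneg hT.le (Nat.cast_nonneg n))
    rw [← h1]; ring
  -- eventual equality of the statement LHS with the product form
  have heq : ∀ᶠ n in atTop, (s n * ∑ i ∈ Finset.Icc 1 n,
      φ ((i:ℝ) * (T/n)) * ∫ u in Set.Iic (-((i:ℝ)*(T/n))/((k n:ℝ)*(T/n))), K u)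
      = ((k n:ℝ) * s n) * ∫ x, g n x := by
    filter_upwards [eventually_ge_atTop 1] with n hn
    have hΔ : (0:ℝ) < T/n := div_pos hT (by exact_mod_cast hn)
    have hterm : ∀ i ∈ Finset.Icc 1 n, φ ((i:ℝ)*(T/n)) *
        ∫ u in Set.Iic (-((i:ℝ)*(T/n))/((k n:ℝ)*(T/n))), K u = c n i := by
      intro i _
      have harg : -((i:ℝ)*(T/n))/((k n:ℝ)*(T/n)) = -((i:ℝ)/(k n)) := by
        rw [neg_div]
        congr 1
        exact mul_div_mul_right _ _ hΔ.ne'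
      rw [harg]
    rw [Finset.sum_congr rfl hterm, hA n]
    have hkne := (hk0 n).ne'
    field_simp
  -- limit facts
  have hs0 : Tendsto s atTop (𝓝 0) := by
    have h2 := (Real.continuous_sqrt.tendsto 0).comp (tendsto_const_div_atTop_nhds_zero_nat T)
    rw [Real.sqrt_zero] at h2
    exact h2
  have hspos : ∀ᶠ n in atTop, 0 < s n := by
    filter_upwards [eventually_ge_atTop 1] with n hn
    exact Real.sqrt_pos.mpr (div_pos hT (by exact_mod_cast hn))
  have hkinf : Tendsto (fun n => (k n:ℝ)) atTop atTop := by
    have h1 : Tendsto (fun n => (s n)⁻¹) atTop atTop :=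
      Tendsto.inv_tendsto_nhdsGT_zero (tendsto_nhdsWithin_iff.mpr ⟨hs0, hspos⟩)
    have h2 : Tendsto (fun n => ((k n:ℝ) * s n) * (s n)⁻¹) atTop atTop :=
      Tendsto.pos_mul_atTop hθpos hθ h1
    refine h2.congr' ?_
    filter_upwards [hspos] with n hn
    field_simp
  have hnkinf : Tendsto (fun n : ℕ => (n:ℝ)/(k n)) atTop atTop := by
    have h0 : Tendsto (fun n => s n * ((k n:ℝ) * s n)) atTop (𝓝 0) := by
      have h := hs0.mul hθ
      rw [zero_mul] at h
      exact h
    have hpos' : ∀ᶠ n in atTop, 0 < s n * ((k n:ℝ) * s n) := by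
      filter_upwards [hspos] with n hn
      exact mul_pos hn (mul_pos (hk0 n) hn)
    have h1 : Tendsto (fun n => (s n * ((k n:ℝ)*s n))⁻¹) atTop atTop :=
      Tendsto.inv_tendsto_nhdsGT_zero (tendsto_nhdsWithin_iff.mpr ⟨h0, hpos'⟩)
    have h2 : Tendsto (fun n => T * (s n * ((k n:ℝ)*s n))⁻¹) atTop atTop :=
      Tendsto.const_mul_atTop hT h1
    refine h2.congr' ?_
    filter_upwards [eventually_ge_atTop 1] with n hn
    have hn0 : (n:ℝ) ≠ 0 := Nat.cast_ne_zero.mpr (by omega)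
    have h1' : s n * s n = T/n := Real.mul_self_sqrt (div_nonneg hT.le (Nat.cast_nonneg n))
    have h3 : s n * ((k n:ℝ) * s n) = (k n:ℝ) * (T / n) := by rw [← h1']; ring
    rw [h3]
    have hkne := (hk0 n).ne'
    field_simp
  -- dominated convergence setup
  set B : ℝ → ℝ := Set.indicator (Set.Ioi (0:ℝ)) (fun x => M * G (-x)) with hBdef
  have hBint : Integrable B := bound_integrable hK hKint hKu M hM0
  have hBnn : ∀ x, 0 ≤ B x := fun x =>
    Set.indicator_nonneg (fun y _ => mul_nonneg hM0 (hGnn _)) x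
  have hmeasg : ∀ n : ℕ, AEStronglyMeasurable (g n) volume := by
    intro n
    exact (Finset.measurable_sum _ fun i _ =>
      measurable_const.indicator measurableSet_Ioc).aestronglyMeasurable
  have hboundg : ∀ n : ℕ, ∀ᵐ x : ℝ, ‖g n x‖ ≤ B x := by
    intro n
    refine Eventually.of_forall fun x => ?_
    by_cases hx : x ∈ Set.Ioc (0:ℝ) ((n:ℝ)/(k n))
    · obtain ⟨i, hiIcc, hgx, hxle, -⟩ := hgval n x hx
      have hBx : B x = M * G (-x) := Set.indicator_of_mem hx.1 _
      rw [hgx, hBx]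
      rw [Finset.mem_Icc] at hiIcc
      have hn0 : (n:ℝ) ≠ 0 := Nat.cast_ne_zero.mpr (by omega)
      have hiT : (i:ℝ) * (T/n) ∈ Set.Icc (0:ℝ) T := by
        constructor
        · positivity
        · have h1 : (i:ℝ) ≤ (n:ℝ) := by exact_mod_cast hiIcc.2
          calc (i:ℝ) * (T/n) ≤ (n:ℝ) * (T/n) := by
                apply mul_le_mul_of_nonneg_right h1
                positivity
            _ = T := by field_simp
      calc ‖c n i‖ = ‖φ ((i:ℝ)*(T/n))‖ * ‖F (-((i:ℝ)/(k n)))‖ := norm_mul _ _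
        _ ≤ M * G (-x) := by
            refine mul_le_mul (hM _ hiT) ?_ (norm_nonneg _) hM0
            exact le_trans (hFG _) (hGmono (neg_le_neg hxle))
    · rw [hgzero n x hx]
      simpa using hBnn x
  have hlimg : ∀ᵐ x : ℝ, Tendsto (fun n => g n x) atTop
      (𝓝 (Set.indicator (Set.Ioi (0:ℝ)) (fun x => φ 0 * F (-x)) x)) := by
    have hzero : ∀ᵐ x : ℝ, x ≠ (0:ℝ) := by
      rw [ae_iff]
      simp only [ne_eq, not_not, Set.setOf_eq_eq_singleton]
      exact Real.volume_singleton
    filter_upwards [hzero] with x hx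
    rcases hx.lt_or_gt with hneg | hpos
    · have h1 : ∀ n : ℕ, g n x = 0 := fun n =>
        hgzero n x (fun hc => absurd hc.1 (not_lt.mpr hneg.le))
      have h2 : x ∉ Set.Ioi (0:ℝ) := by simpa using hneg.le
      rw [Set.indicator_of_notMem h2]
      simpa [h1] using (tendsto_const_nhds : Tendsto (fun _ : ℕ => (0:ℝ)) atTop (𝓝 0))
    · rw [Set.indicator_of_mem (Set.mem_Ioi.mpr hpos)]
      have hcast : ∀ n : ℕ, (((⌈(k n:ℝ)*x⌉).toNat : ℕ):ℝ) = ((⌈(k n:ℝ)*x⌉ : ℤ):ℝ) := by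
        intro n
        exact_mod_cast congrArg (fun z : ℤ => (z:ℝ))
          (Int.toNat_of_nonneg (Int.ceil_pos.mpr (mul_pos (hk0 n) hpos)).le)
      set r : ℕ → ℝ := fun n => (((⌈(k n:ℝ)*x⌉).toNat : ℕ):ℝ)/(k n) with hrdef
      have hrlow : ∀ n, x ≤ r n := by
        intro n
        rw [hrdef]
        rw [le_div_iff₀ (hk0 n), hcast n, mul_comm]
        exact_mod_cast Int.le_ceil ((k n:ℝ)*x)
      have hrhigh : ∀ n, r n ≤ x + (k n:ℝ)⁻¹ := by
        intro n
        rw [hrdef, div_le_iff₀ (hk0 n), hcast n]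
        have hc1 := Int.ceil_lt_add_one ((k n:ℝ)*x)
        have hkne := (hk0 n).ne'
        have hc2 : (x + (k n:ℝ)⁻¹)*(k n:ℝ) = (k n:ℝ)*x + 1 := by
          field_simp
        linarith
      have hrinv : Tendsto (fun n => x + (k n:ℝ)⁻¹) atTop (𝓝 x) := by
        simpa using tendsto_const_nhds.add hkinf.inv_tendsto_atTop
      have hr : Tendsto r atTop (𝓝 x) :=
        tendsto_of_tendsto_of_tendsto_of_le_of_le tendsto_const_nhds hrinv hrlow hrhigh
      have hFr : Tendsto (fun n => F (-(r n))) atTop (𝓝 (F (-x))) :=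
        (hFcont.tendsto _).comp hr.neg
      have huval : ∀ n : ℕ, (((⌈(k n:ℝ)*x⌉).toNat : ℕ):ℝ) * (T/n)
          = r n * (((k n:ℝ) * s n) * s n) := by
        intro n
        have hkne := (hk0 n).ne'
        rw [← hks n]
        calc (((⌈(k n:ℝ)*x⌉).toNat : ℕ):ℝ) * (T/(n:ℝ))
            = (r n * (k n:ℝ)) * (T/(n:ℝ)) := by rw [hrdef, div_mul_cancel₀ _ hkne]
          _ = r n * ((k n:ℝ) * (T/(n:ℝ))) := by ring
      have hu0 : Tendsto (fun n => (((⌈(k n:ℝ)*x⌉).toNat : ℕ):ℝ) * (T/n)) atTop (𝓝 0) := by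
        simp_rw [huval]
        have h := hr.mul (hθ.mul hs0)
        rw [mul_zero, mul_zero] at h
        exact h
      have huIcc : ∀ᶠ n in atTop, (((⌈(k n:ℝ)*x⌉).toNat : ℕ):ℝ) * (T/n) ∈ Set.Icc (0:ℝ) T := by
        filter_upwards [eventually_ge_atTop 1, hnkinf.eventually_ge_atTop x] with n hn1 hnx
        have hn0 : (n:ℝ) ≠ 0 := Nat.cast_ne_zero.mpr (by omega)
        constructor
        · positivity
        · have hceil : (((⌈(k n:ℝ)*x⌉).toNat : ℕ):ℝ) ≤ (n:ℝ) := by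
            rw [hcast n]
            have : ⌈(k n:ℝ)*x⌉ ≤ (n:ℤ) := by
              rw [Int.ceil_le]
              push_cast
              have h2 := (le_div_iff₀ (hk0 n)).mp hnx
              linarith
            exact_mod_cast this
          calc (((⌈(k n:ℝ)*x⌉).toNat : ℕ):ℝ) * (T/n) ≤ (n:ℝ) * (T/n) := by
                apply mul_le_mul_of_nonneg_right hceil
                positivity
            _ = T := by field_simp
      have hφu : Tendsto (fun n => φ ((((⌈(k n:ℝ)*x⌉).toNat : ℕ):ℝ) * (T/n))) atTop (𝓝 (φ 0)) :=
        ((hφ 0 ⟨le_refl 0, hT.le⟩).tendsto).comp (tendsto_nhdsWithin_iff.mpr ⟨hu0, huIcc⟩)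
      have hc : Tendsto (fun n => c n ((⌈(k n:ℝ)*x⌉).toNat)) atTop (𝓝 (φ 0 * F (-x))) := by
        have : (fun n => c n ((⌈(k n:ℝ)*x⌉).toNat))
            = fun n => φ ((((⌈(k n:ℝ)*x⌉).toNat : ℕ):ℝ) * (T/n)) * F (-(r n)) := by
          funext n
          rfl
        rw [this]
        exact hφu.mul hFr
      refine hc.congr' ?_
      filter_upwards [hnkinf.eventually_ge_atTop x] with n hnx
      obtain ⟨i, hiIcc, hgx, hxle, hceq⟩ := hgval n x ⟨hpos, hnx⟩
      rw [hgx]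
      have : (⌈(k n:ℝ)*x⌉).toNat = i := by omega
      rw [this]
  -- dominated convergence
  have hDCT : Tendsto (fun n => ∫ x, g n x) atTop
      (𝓝 (∫ x, Set.indicator (Set.Ioi (0:ℝ)) (fun x => φ 0 * F (-x)) x)) :=
    tendsto_integral_of_dominated_convergence B hmeasg hBint hboundg hlimg
  -- identify the limit value
  have hval : θ * ∫ x, Set.indicator (Set.Ioi (0:ℝ)) (fun x => φ 0 * F (-x)) x
      = -(θ * φ 0 * ∫ u in Set.Iic (0:ℝ), Lfun K u) := by
    have h1 : ∫ x, Set.indicator (Set.Ioi (0:ℝ)) (fun x => φ 0 * F (-x)) x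
        = φ 0 * ∫ x in Set.Ioi (0:ℝ), F (-x) := by
      rw [integral_indicator measurableSet_Ioi, integral_const_mul]
    have h2 : ∫ x in Set.Ioi (0:ℝ), F (-x) = ∫ x in Set.Iic (0:ℝ), F x := by
      simpa using integral_comp_neg_Ioi (0:ℝ) F
    have h3 : ∫ u in Set.Iic (0:ℝ), Lfun K u = -∫ u in Set.Iic (0:ℝ), F u := by
      rw [← integral_neg]
      refine setIntegral_congr_fun measurableSet_Iic fun u hu => ?_
      simp only [Lfun, hFdef]
      rw [if_neg (not_lt.mpr hu)]
    rw [h1, h2, h3]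
    ring
  rw [← hval]
  exact (hθ.mul hDCT).congr' (heq.mono fun n h => h.symm)
end

section
/- Suppose K : ℝ → ℝ is measurable with ∫_ℝ |K(x)| dx < ∞ and |x|^{2+ε} K(x) → 0 as |x| → ∞ for some ε > 1/2. Then √Δ_n · Σ_{i=1}^n L((T − t_i)/b_n)² · (T − t_i) converges to 0 as n → ∞. -/
open MeasureTheory Filter Topology

lemma Lfun_abs_le (K : ℝ → ℝ) (hKint : Integrable K) (t : ℝ) :
    |Lfun K t| ≤ ∫ u, |K u| := by
  have h0 : ∀ s : Set ℝ, |∫ u in s, K u| ≤ ∫ u, |K u| := by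
    intro s
    calc |∫ u in s, K u| ≤ ∫ u in s, |K u| := by
          simpa using norm_integral_le_integral_norm (μ := (volume : Measure ℝ).restrict s) K
      _ ≤ ∫ u, |K u| :=
        setIntegral_le_integral hKint.abs (Eventually.of_forall fun x => abs_nonneg _)
  unfold Lfun
  split
  · exact h0 _
  · rw [abs_neg]; exact h0 _

lemma Lfun_decay (K : ℝ → ℝ) (hKint : Integrable K)
    (ε : ℝ) (hε : 1 / 2 < ε)
    (hdecay : Tendsto (fun x : ℝ => |x| ^ (2 + ε) * K x) (Filter.cocompact ℝ) (𝓝 0)) :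
    ∃ A : ℝ, ∀ t : ℝ, 1 ≤ t → (Lfun K t) ^ 2 ≤ A ^ 2 * (t⁻¹) ^ 3 := by
  set C := ∫ u, |K u| with hCdef
  have hC0 : 0 ≤ C := integral_nonneg fun _ => abs_nonneg _
  have hat : Tendsto (fun x : ℝ => |x| ^ (2 + ε) * K x) atTop (𝓝 0) :=
    hdecay.mono_left (by rw [cocompact_eq_atBot_atTop]; exact le_sup_right)
  have hev : ∀ᶠ x : ℝ in atTop, |(|x| ^ (2 + ε) * K x)| < 1 := by
    have := Metric.tendsto_nhds.mp hat 1 one_pos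
    simpa only [Real.dist_eq, sub_zero] using this
  obtain ⟨R0, hR0⟩ := eventually_atTop.1 hev
  set R := max R0 1 with hRdef
  have hR1 : (1 : ℝ) ≤ R := le_max_right _ _
  have hKb : ∀ x : ℝ, R ≤ x → |K x| ≤ x ^ (-(2 + ε)) := by
    intro x hx
    have hx1 : (1:ℝ) ≤ x := le_trans hR1 hx
    have hx0 : (0:ℝ) < x := lt_of_lt_of_le zero_lt_one hx1
    have h := (hR0 x (le_trans (le_max_left _ _) hx)).le
    rw [abs_mul, abs_of_nonneg (Real.rpow_nonneg (abs_nonneg x) _),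
      abs_of_pos hx0] at h
    have hp : (0:ℝ) < x ^ (2 + ε) := Real.rpow_pos_of_pos hx0 _
    rw [Real.rpow_neg hx0.le, ← mul_one ((x ^ (2 + ε))⁻¹), le_inv_mul_iff₀ hp]
    exact h
  have hLR : ∀ t : ℝ, R ≤ t → |Lfun K t| ≤ t ^ (-(3/2) : ℝ) := by
    intro t ht
    have ht1 : (1:ℝ) ≤ t := le_trans hR1 ht
    have ht0 : (0:ℝ) < t := lt_of_lt_of_le zero_lt_one ht1
    have h1 : Lfun K t = ∫ u in Set.Ioi t, K u := if_pos ht0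
    have hint1 : IntegrableOn (fun u => |K u|) (Set.Ioi t) := hKint.abs.integrableOn
    have hint2 : IntegrableOn (fun u : ℝ => u ^ (-(2 + ε))) (Set.Ioi t) :=
      integrableOn_Ioi_rpow_of_lt (by linarith) ht0
    rw [h1]
    calc |∫ u in Set.Ioi t, K u| ≤ ∫ u in Set.Ioi t, |K u| := by
          simpa using norm_integral_le_integral_norm
            (μ := (volume : Measure ℝ).restrict (Set.Ioi t)) K
      _ ≤ ∫ u in Set.Ioi t, u ^ (-(2 + ε)) :=
          setIntegral_mono_on hint1 hint2 measurableSet_Ioi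
            (fun x hx => hKb x (le_trans ht (le_of_lt hx)))
      _ = -t ^ (-(2 + ε) + 1) / (-(2 + ε) + 1) :=
          integral_Ioi_rpow_of_lt (by linarith) ht0
      _ = t ^ (-(1 + ε)) / (1 + ε) := by
          rw [show (-(2 + ε) + 1) = -(1 + ε) by ring]
          rw [div_eq_div_iff (by linarith) (by linarith)]
          ring
      _ ≤ t ^ (-(1 + ε)) := by
          apply div_le_self (Real.rpow_nonneg ht0.le _) (by linarith)
      _ ≤ t ^ (-(3/2) : ℝ) :=
          Real.rpow_le_rpow_of_exponent_le ht1 (by linarith)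
  refine ⟨max (C * R ^ ((3:ℝ)/2)) 1, ?_⟩
  set A := max (C * R ^ ((3:ℝ)/2)) 1 with hAdef
  have hA1 : (1:ℝ) ≤ A := le_max_right _ _
  have hA0 : (0:ℝ) ≤ A := le_trans zero_le_one hA1
  have habs : ∀ t : ℝ, 1 ≤ t → |Lfun K t| ≤ A * t ^ (-(3/2) : ℝ) := by
    intro t ht
    have ht0 : (0:ℝ) < t := lt_of_lt_of_le zero_lt_one ht
    have htp : (0:ℝ) ≤ t ^ (-(3/2) : ℝ) := Real.rpow_nonneg ht0.le _
    by_cases hc : R ≤ t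
    · calc |Lfun K t| ≤ t ^ (-(3/2) : ℝ) := hLR t hc
        _ ≤ A * t ^ (-(3/2) : ℝ) := le_mul_of_one_le_left htp hA1
    · push_neg at hc
      have htpos : (0:ℝ) < t ^ ((3:ℝ)/2) := Real.rpow_pos_of_pos ht0 _
      have htR : t ^ ((3:ℝ)/2) ≤ R ^ ((3:ℝ)/2) :=
        Real.rpow_le_rpow ht0.le hc.le (by norm_num)
      have h1 : (1:ℝ) ≤ R ^ ((3:ℝ)/2) * (t ^ ((3:ℝ)/2))⁻¹ := by
        rw [← div_eq_mul_inv, le_div_iff₀ htpos, one_mul]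
        exact htR
      calc |Lfun K t| ≤ C := Lfun_abs_le K hKint t
        _ ≤ C * (R ^ ((3:ℝ)/2) * (t ^ ((3:ℝ)/2))⁻¹) := le_mul_of_one_le_right hC0 h1
        _ = (C * R ^ ((3:ℝ)/2)) * t ^ (-(3/2) : ℝ) := by
            rw [Real.rpow_neg ht0.le]; ring_nf
        _ ≤ A * t ^ (-(3/2) : ℝ) :=
            mul_le_mul_of_nonneg_right (le_max_left _ _) htp
  intro t ht
  have ht0 : (0:ℝ) < t := lt_of_lt_of_le zero_lt_one ht
  have h := pow_le_pow_left₀ (abs_nonneg _) (habs t ht) 2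
  rw [sq_abs] at h
  refine le_trans h (le_of_eq ?_)
  rw [mul_pow]
  congr 1
  rw [← Real.rpow_natCast (t ^ (-(3/2) : ℝ)) 2, ← Real.rpow_mul ht0.le]
  norm_num
lemma sum_range_bound (Lf : ℝ → ℝ) (C A : ℝ)
    (hbdd : ∀ t, (Lf t) ^ 2 ≤ C ^ 2)
    (hdec : ∀ t : ℝ, 1 ≤ t → (Lf t) ^ 2 ≤ A ^ 2 * (t⁻¹) ^ 3)
    (n kk : ℕ) (hkk : 0 < kk) :
    ∑ j ∈ Finset.range n, (Lf ((j : ℝ) / kk)) ^ 2 * j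
      ≤ (2 * C ^ 2 + 2 * A ^ 2) * kk ^ 2 := by
  have hkR : (0 : ℝ) < kk := by exact_mod_cast hkk
  rw [← Finset.sum_filter_add_sum_filter_not (Finset.range n) (fun j => j ≤ kk)]
  have h1 : ∑ j ∈ (Finset.range n).filter (fun j => j ≤ kk),
      (Lf ((j : ℝ) / kk)) ^ 2 * j ≤ 2 * C ^ 2 * kk ^ 2 := by
    calc ∑ j ∈ (Finset.range n).filter (fun j => j ≤ kk), (Lf ((j : ℝ) / kk)) ^ 2 * j
        ≤ ∑ j ∈ (Finset.range n).filter (fun j => j ≤ kk), C ^ 2 * kk := by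
          apply Finset.sum_le_sum
          intro j hj
          rw [Finset.mem_filter] at hj
          have hj' : (j : ℝ) ≤ kk := by exact_mod_cast hj.2
          have := hbdd ((j : ℝ) / kk)
          have hLnn : (0:ℝ) ≤ (Lf ((j : ℝ) / kk)) ^ 2 := sq_nonneg _
          have hC2 : (0:ℝ) ≤ C ^ 2 := sq_nonneg _
          calc (Lf ((j : ℝ) / kk)) ^ 2 * j ≤ C ^ 2 * j := by
                exact mul_le_mul_of_nonneg_right this (Nat.cast_nonneg j)
            _ ≤ C ^ 2 * kk := mul_le_mul_of_nonneg_left hj' hC2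
      _ ≤ (kk + 1) * (C ^ 2 * kk) := by
          have hcard : ((Finset.range n).filter (fun j => j ≤ kk)).card ≤ kk + 1 := by
            have : (Finset.range n).filter (fun j => j ≤ kk) ⊆ Finset.range (kk + 1) := by
              intro j hj
              rw [Finset.mem_filter] at hj
              exact Finset.mem_range.2 (Nat.lt_succ_of_le hj.2)
            simpa using Finset.card_le_card this
          calc ∑ j ∈ (Finset.range n).filter (fun j => j ≤ kk), C ^ 2 * kk
              = ((Finset.range n).filter (fun j => j ≤ kk)).card * (C ^ 2 * kk) := by
                rw [Finset.sum_const, nsmul_eq_mul]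
            _ ≤ (kk + 1) * (C ^ 2 * kk) := by
                apply mul_le_mul_of_nonneg_right _ (by positivity)
                exact_mod_cast hcard
      _ ≤ 2 * C ^ 2 * kk ^ 2 := by
          have h2 : ((kk : ℝ) + 1) ≤ 2 * kk := by
            have : (1 : ℝ) ≤ kk := by exact_mod_cast hkk
            linarith
          calc ((kk : ℝ) + 1) * (C ^ 2 * kk) ≤ 2 * kk * (C ^ 2 * kk) :=
                mul_le_mul_of_nonneg_right h2 (by positivity)
            _ = 2 * C ^ 2 * kk ^ 2 := by ring
  have h2 : ∑ j ∈ (Finset.range n).filter (fun j => ¬ j ≤ kk),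
      (Lf ((j : ℝ) / kk)) ^ 2 * j ≤ 2 * A ^ 2 * kk ^ 2 := by
    calc ∑ j ∈ (Finset.range n).filter (fun j => ¬ j ≤ kk), (Lf ((j : ℝ) / kk)) ^ 2 * j
        ≤ ∑ j ∈ (Finset.range n).filter (fun j => ¬ j ≤ kk),
            A ^ 2 * kk ^ 3 * ((j : ℝ) ^ 2)⁻¹ := by
          apply Finset.sum_le_sum
          intro j hj
          rw [Finset.mem_filter] at hj
          have hjk : kk < j := Nat.lt_of_not_le hj.2
          have hjR : (kk : ℝ) < j := by exact_mod_cast hjk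
          have hj0 : (0:ℝ) < j := lt_trans hkR hjR
          have ht1 : (1:ℝ) ≤ (j : ℝ) / kk := (le_div_iff₀ hkR).2 (by linarith)
          have hb := hdec ((j : ℝ) / kk) ht1
          have hinv : ((j : ℝ) / kk)⁻¹ = kk / j := by
            rw [inv_div]
          rw [hinv] at hb
          calc (Lf ((j : ℝ) / kk)) ^ 2 * j ≤ A ^ 2 * ((kk : ℝ) / j) ^ 3 * j :=
                mul_le_mul_of_nonneg_right hb (Nat.cast_nonneg j)
            _ = A ^ 2 * kk ^ 3 * ((j : ℝ) ^ 2)⁻¹ := by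
                field_simp
      _ ≤ ∑ j ∈ Finset.Ioo kk n, A ^ 2 * kk ^ 3 * ((j : ℝ) ^ 2)⁻¹ := by
          apply Finset.sum_le_sum_of_subset_of_nonneg
          · intro j hj
            rw [Finset.mem_filter, Finset.mem_range] at hj
            exact Finset.mem_Ioo.2 ⟨Nat.lt_of_not_le hj.2, hj.1⟩
          · intro j _ _; positivity
      _ = A ^ 2 * kk ^ 3 * ∑ j ∈ Finset.Ioo kk n, (((j : ℝ)) ^ 2)⁻¹ := by
          rw [Finset.mul_sum]
      _ ≤ A ^ 2 * kk ^ 3 * (2 / (kk + 1)) := by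
          apply mul_le_mul_of_nonneg_left _ (by positivity)
          exact_mod_cast sum_Ioo_inv_sq_le (α := ℝ) kk n
      _ ≤ 2 * A ^ 2 * kk ^ 2 := by
          rw [div_eq_mul_inv, mul_comm (2:ℝ)]
          have h3 : (kk:ℝ) ^ 3 * (((kk:ℝ) + 1)⁻¹ * 2) ≤ kk ^ 2 * 2 := by
            rw [← mul_assoc]
            apply mul_le_mul_of_nonneg_right _ (by norm_num)
            rw [mul_inv_le_iff₀ (by positivity)]
            nlinarith [hkR]
          calc A ^ 2 * (kk:ℝ) ^ 3 * (((kk:ℝ) + 1)⁻¹ * 2)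
              = A ^ 2 * ((kk:ℝ) ^ 3 * (((kk:ℝ) + 1)⁻¹ * 2)) := by ring
            _ ≤ A ^ 2 * ((kk:ℝ) ^ 2 * 2) := mul_le_mul_of_nonneg_left h3 (sq_nonneg _)
            _ = 2 * A ^ 2 * kk ^ 2 := by ring
  linarith
theorem stmt_18
    (T : ℝ) (hT : 0 < T)
    (K : ℝ → ℝ) (hK : Measurable K) (hKint : Integrable K)
    (ε : ℝ) (hε : 1 / 2 < ε)
    (hdecay : Tendsto (fun x : ℝ => |x| ^ (2 + ε) * K x) (Filter.cocompact ℝ) (𝓝 0))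
    (k : ℕ → ℕ) (hk : ∀ n, 0 < k n)
    (θ : ℝ) (hθpos : 0 < θ)
    (hθ : Tendsto (fun n : ℕ => (k n : ℝ) * Real.sqrt (T / n)) atTop (𝓝 θ)) :
    Tendsto (fun n : ℕ =>
        Real.sqrt (T / n) *
          ∑ i ∈ Finset.Icc 1 n,
            (Lfun K ((T - (i : ℝ) * (T / n)) / ((k n : ℝ) * (T / n)))) ^ 2 *
              (T - (i : ℝ) * (T / n)))
      atTop (𝓝 0) := by
  obtain ⟨A, hA⟩ := Lfun_decay K hKint ε hε hdecay
  set C := ∫ u, |K u| with hCdef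
  have hbdd : ∀ t, (Lfun K t) ^ 2 ≤ C ^ 2 := by
    intro t
    have h := pow_le_pow_left₀ (abs_nonneg _) (Lfun_abs_le K hKint t) 2
    rwa [sq_abs] at h
  set B := 2 * C ^ 2 + 2 * A ^ 2 with hBdef
  have key : ∀ n : ℕ, 1 ≤ n →
      Real.sqrt (T / n) *
          ∑ i ∈ Finset.Icc 1 n,
            (Lfun K ((T - (i : ℝ) * (T / n)) / ((k n : ℝ) * (T / n)))) ^ 2 *
              (T - (i : ℝ) * (T / n))
        ≤ B * ((k n : ℝ) * Real.sqrt (T / n)) ^ 2 * Real.sqrt (T / n) := by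
    intro n hn
    have hn0 : (0:ℝ) < n := by exact_mod_cast hn
    have hΔ0 : (0:ℝ) < T / n := div_pos hT hn0
    have hΔne : (T / n : ℝ) ≠ 0 := ne_of_gt hΔ0
    have hTn : T = (n : ℝ) * (T / n) := by field_simp
    have hsum_eq : ∑ i ∈ Finset.Icc 1 n,
        (Lfun K ((T - (i : ℝ) * (T / n)) / ((k n : ℝ) * (T / n)))) ^ 2 *
          (T - (i : ℝ) * (T / n))
        = (T / n) * ∑ j ∈ Finset.range n, (Lfun K ((j : ℝ) / (k n))) ^ 2 * j := by
      rw [Finset.mul_sum]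
      apply Finset.sum_nbij' (fun i => n - i) (fun j => n - j)
      · intro a ha; rw [Finset.mem_Icc] at ha; rw [Finset.mem_range]; omega
      · intro a ha; rw [Finset.mem_range] at ha; rw [Finset.mem_Icc]; omega
      · intro a ha; rw [Finset.mem_Icc] at ha; omega
      · intro a ha; rw [Finset.mem_range] at ha; omega
      · intro i hi
        rw [Finset.mem_Icc] at hi
        have hcast : ((n - i : ℕ) : ℝ) = (n : ℝ) - i := by
          rw [Nat.cast_sub hi.2]
        have h1 : T - (i : ℝ) * (T / n) = ((n - i : ℕ) : ℝ) * (T / n) := by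
          rw [hcast]; nth_rewrite 1 [hTn]; ring
        have h2 : (T - (i : ℝ) * (T / n)) / ((k n : ℝ) * (T / n))
            = ((n - i : ℕ) : ℝ) / (k n) := by
          rw [h1, mul_comm ((k n : ℝ)) (T / n), mul_comm (((n - i : ℕ) : ℝ)) (T / n),
            mul_div_mul_left _ _ hΔne]
        rw [h2, h1]; ring
    rw [hsum_eq]
    have hsum_le := sum_range_bound (Lfun K) C A hbdd hA n (k n) (hk n)
    calc Real.sqrt (T / n) * ((T / n) * ∑ j ∈ Finset.range n, (Lfun K ((j : ℝ) / (k n))) ^ 2 * j)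
        ≤ Real.sqrt (T / n) * ((T / n) * (B * (k n : ℝ) ^ 2)) := by
          apply mul_le_mul_of_nonneg_left _ (Real.sqrt_nonneg _)
          exact mul_le_mul_of_nonneg_left hsum_le hΔ0.le
      _ = B * ((k n : ℝ) * Real.sqrt (T / n)) ^ 2 * Real.sqrt (T / n) := by
          rw [mul_pow, Real.sq_sqrt hΔ0.le]; ring
  have hnn : ∀ n : ℕ, 1 ≤ n →
      0 ≤ Real.sqrt (T / n) *
          ∑ i ∈ Finset.Icc 1 n,
            (Lfun K ((T - (i : ℝ) * (T / n)) / ((k n : ℝ) * (T / n)))) ^ 2 *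
              (T - (i : ℝ) * (T / n)) := by
    intro n hn
    have hn0 : (0:ℝ) < n := by exact_mod_cast hn
    apply mul_nonneg (Real.sqrt_nonneg _)
    apply Finset.sum_nonneg
    intro i hi
    rw [Finset.mem_Icc] at hi
    apply mul_nonneg (sq_nonneg _)
    have h1 : (i : ℝ) * (T / n) ≤ (n : ℝ) * (T / n) :=
      mul_le_mul_of_nonneg_right (by exact_mod_cast hi.2) (by positivity)
    have h2 : (n : ℝ) * (T / n) = T := by field_simp
    linarith
  have hg : Tendsto (fun n : ℕ => B * ((k n : ℝ) * Real.sqrt (T / n)) ^ 2 * Real.sqrt (T / n))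
      atTop (𝓝 0) := by
    have h1 : Tendsto (fun n : ℕ => Real.sqrt (T / n)) atTop (𝓝 0) := by
      have h2 := (Real.continuous_sqrt.tendsto 0).comp (tendsto_const_div_atTop_nhds_zero_nat T)
      simpa only [Function.comp_def, Real.sqrt_zero] using h2
    have h2 : Tendsto (fun n : ℕ => B * ((k n : ℝ) * Real.sqrt (T / n)) ^ 2) atTop
        (𝓝 (B * θ ^ 2)) := tendsto_const_nhds.mul (hθ.pow 2)
    simpa using h2.mul h1
  exact squeeze_zero' (eventually_atTop.2 ⟨1, hnn⟩) (eventually_atTop.2 ⟨1, key⟩) hg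
end
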